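/- arXiv:1608.04177 — 10 statements merged into one kernel-verified Lean document; each statement's English description precedes it below -/
import Mathlib

section
/- Let V and W be finite-dimensional real vector spaces, let X ⊆ V and Y ⊆ W be nonempty convex compact sets, and let f : X → Y be an affine map. Then the fiber body Σf is a nonempty convex compact subset of V. -/
/-!
Fix a Euclidean structure on `V`. A Borel section of `f` is obtained by choosing in each fiber
its point of minimal norm, unique by strict convexity: it lies in a closed set `C` exactly when
the minimal norm over the part of the fiber in `C` is at most the minimal norm over the whole
fiber, and these fiberwise minima are lower semicontinuous in `y`, being minima over compact sets.

For convexity and compactness, `Σf` is the image, under the rescaled integral (a continuous linear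
map on `L²`), of the set of `L²` classes with almost all values in the fibers: correcting such a
class on a null set by the minimal-norm section gives a Borel section representing it. This set of
classes is convex, bounded, and closed, since `L²`-convergent sequences have almost everywhere
convergent subsequences. A continuous linear image `T '' A` of a closed bounded convex subset of a
Hilbert space is closed: for `x` in its closure, the minimal-norm points of the nested sets
`A ∩ T⁻¹' (closedBall x (1 / (n + 1)))` form a Cauchy sequence by the parallelogram law, and their
limit is mapped to `x`.
-/

open Set MeasureTheory Pointwise

/-- The fiber body `Σf` of a map `f` on a set `X`, with respect to a measure `μ`
on the target: the set of averages (w.r.t. `μ`) over `f(X)` of Borel measurable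
sections of `f : X → f(X)`. -/
noncomputable def fiberBody {V W : Type*} [NormedAddCommGroup V] [NormedSpace ℝ V]
    [MeasurableSpace V] [MeasurableSpace W]
    (μ : Measure W) (f : V → W) (X : Set V) : Set V :=
  {x | ∃ γ : W → V, Measurable γ ∧ (∀ y ∈ f '' X, γ y ∈ X ∧ f (γ y) = y) ∧
        x = (μ (f '' X)).toReal⁻¹ • ∫ y in f '' X, γ y ∂μ}

open Filter Topology Bornology
open scoped ENNReal InnerProduct

section MinimalNorm

theorem Convex.eq_of_forall_norm_le {E : Type*} [NormedAddCommGroup E] [NormedSpace ℝ E]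
    [StrictConvexSpace ℝ E] {S : Set E} (hS : Convex ℝ S) {x x' : E} (hx : x ∈ S)
    (hx' : x' ∈ S) (hmin : ∀ z ∈ S, ‖x‖ ≤ ‖z‖) (hmin' : ∀ z ∈ S, ‖x'‖ ≤ ‖z‖) : x = x' := by
  by_contra hne
  have hmid := hmin ((1 / 2 : ℝ) • x + (1 / 2 : ℝ) • x')
    (hS hx hx' (by norm_num) (by norm_num) (by norm_num))
  exact hmid.not_gt (norm_combo_lt_of_ne le_rfl (hmin' x hx) hne (by norm_num) (by norm_num)
    (by norm_num))

variable {H : Type*} [NormedAddCommGroup H] [InnerProductSpace ℝ H]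

theorem Convex.norm_sub_sq_le_of_forall_norm_le {K : Set H} (hK : Convex ℝ K) {p q : H}
    (hp : p ∈ K) (hmin : ∀ z ∈ K, ‖p‖ ≤ ‖z‖) (hq : q ∈ K) :
    ‖p - q‖ ^ 2 ≤ 2 * (‖q‖ ^ 2 - ‖p‖ ^ 2) := by
  have hmid : ‖p‖ ≤ ‖(1 / 2 : ℝ) • p + (1 / 2 : ℝ) • q‖ :=
    hmin _ (hK hp hq (by norm_num) (by norm_num) (by norm_num))
  rw [← smul_add, norm_smul, Real.norm_of_nonneg (by norm_num)] at hmid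
  nlinarith [parallelogram_law_with_norm ℝ p q, norm_nonneg p]

variable [CompleteSpace H]

theorem Convex.exists_forall_norm_le {K : Set H} (hK : Convex ℝ K) (hclosed : IsClosed K)
    (hne : K.Nonempty) : ∃ p ∈ K, ∀ z ∈ K, ‖p‖ ≤ ‖z‖ := by
  obtain ⟨p, hp, hpinf⟩ := exists_norm_eq_iInf_of_complete_convex hne hclosed.isComplete hK 0
  refine ⟨p, hp, fun z hz => ?_⟩
  have := ciInf_le (f := fun w : K => ‖0 - (w : H)‖) ⟨0, by rintro _ ⟨w, rfl⟩; positivity⟩ ⟨z, hz⟩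
  rwa [← hpinf, zero_sub, zero_sub, norm_neg, norm_neg] at this

theorem Antitone.nonempty_iInter_of_convex_isClosed_isBounded {C : ℕ → Set H}
    (hanti : Antitone C) (hne : ∀ n, (C n).Nonempty) (hconv : ∀ n, Convex ℝ (C n))
    (hclosed : ∀ n, IsClosed (C n)) (hbdd : IsBounded (C 0)) : (⋂ n, C n).Nonempty := by
  choose p hpC hpmin using fun n => (hconv n).exists_forall_norm_le (hclosed n) (hne n)
  have hmono : Monotone fun n => ‖p n‖ ^ 2 := fun n m hnm =>
    pow_le_pow_left₀ (norm_nonneg _) (hpmin n _ (hanti hnm (hpC m))) 2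
  obtain ⟨R, hR⟩ := isBounded_iff_forall_norm_le.mp hbdd
  have hbddAbove : BddAbove (range fun n => ‖p n‖ ^ 2) := ⟨R ^ 2, by
    rintro _ ⟨n, rfl⟩
    exact pow_le_pow_left₀ (norm_nonneg _) (hR _ (hanti (Nat.zero_le n) (hpC n))) 2⟩
  set L := ⨆ n, ‖p n‖ ^ 2
  have hdist : ∀ N n m, N ≤ n → n ≤ m → ‖p n - p m‖ ≤ √(2 * (L - ‖p N‖ ^ 2)) :=
    fun N n m hn hnm => Real.le_sqrt_of_sq_le <| by
      nlinarith [(hconv n).norm_sub_sq_le_of_forall_norm_le (hpC n) (hpmin n) (hanti hnm (hpC m)),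
        le_ciSup hbddAbove m, hmono hn]
  have hcauchy : CauchySeq p := by
    refine cauchySeq_of_le_tendsto_0 (fun N => √(2 * (L - ‖p N‖ ^ 2))) (fun n m N hn hm => ?_) ?_
    · rw [dist_eq_norm]
      rcases le_total n m with hnm | hmn
      · exact hdist N n m hn hnm
      · exact norm_sub_rev (p n) (p m) ▸ hdist N m n hm hmn
    · have hL : Tendsto (fun n => ‖p n‖ ^ 2) atTop (𝓝 L) := tendsto_atTop_ciSup hmono hbddAbove
      simpa using ((hL.const_sub L).const_mul 2).sqrt
  obtain ⟨q, hq⟩ := cauchySeq_tendsto_of_complete hcauchy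
  exact ⟨q, mem_iInter.mpr fun n => (hclosed n).mem_of_tendsto hq
    (eventually_atTop.mpr ⟨n, fun m hm => hanti hm (hpC m)⟩)⟩

theorem ContinuousLinearMap.isClosed_image_of_convex_of_isBounded {F : Type*}
    [NormedAddCommGroup F] [NormedSpace ℝ F] (T : H →L[ℝ] F) {A : Set H} (hconv : Convex ℝ A)
    (hclosed : IsClosed A) (hbdd : IsBounded A) : IsClosed (T '' A) := by
  refine closure_subset_iff_isClosed.mp fun x hx => ?_
  set C : ℕ → Set H := fun n => A ∩ T ⁻¹' Metric.closedBall x (1 / (n + 1))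
  have hne : ∀ n, (C n).Nonempty := fun n => by
    obtain ⟨_, ⟨q, hq, rfl⟩, hqx⟩ := Metric.mem_closure_iff.mp hx (1 / (n + 1)) (by positivity)
    exact ⟨q, hq, Metric.mem_closedBall.mpr (dist_comm x _ ▸ hqx.le)⟩
  have hanti : Antitone C := fun n m hnm =>
    inter_subset_inter_right _ (preimage_mono (Metric.closedBall_subset_closedBall
      (one_div_le_one_div_of_le (by positivity) (by exact_mod_cast Nat.add_le_add_right hnm 1))))
  obtain ⟨q, hq⟩ := hanti.nonempty_iInter_of_convex_isClosed_isBounded hne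
    (fun n => hconv.inter ((convex_closedBall x _).linear_preimage T.toLinearMap))
    (fun n => hclosed.inter (Metric.isClosed_closedBall.preimage T.continuous))
    (hbdd.subset inter_subset_left)
  rw [mem_iInter] at hq
  refine ⟨q, (hq 0).1, eq_of_forall_dist_le fun ε hε => ?_⟩
  obtain ⟨n, hn⟩ := exists_nat_one_div_lt hε
  exact (Metric.mem_closedBall.mp (hq n).2).trans hn.le

end MinimalNorm

namespace MeasureTheory.Lp

variable {α E : Type*} [MeasurableSpace α] {ν : Measure α}

section NormedAddCommGroup

variable [NormedAddCommGroup E] {p : ℝ≥0∞}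

theorem isClosed_setOf_ae_mem [Fact (1 ≤ p)] {F : α → Set E} (hF : ∀ a, IsClosed (F a)) :
    IsClosed {g : Lp E p ν | ∀ᵐ a ∂ν, g a ∈ F a} := by
  refine isSeqClosed_iff_isClosed.mp fun g g₀ hg hlim => ?_
  obtain ⟨ns, -, hae⟩ := (tendstoInMeasure_of_tendsto_Lp hlim).exists_seq_tendsto_ae
  filter_upwards [hae, ae_all_iff.mpr hg] with a hga hgF
  exact (hF a).mem_of_tendsto hga (Eventually.of_forall fun i => hgF (ns i))

theorem convex_setOf_ae_mem [NormedSpace ℝ E] {F : α → Set E} (hF : ∀ a, Convex ℝ (F a)) :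
    Convex ℝ {g : Lp E p ν | ∀ᵐ a ∂ν, g a ∈ F a} := by
  intro g hg h hh s t hs ht hst
  filter_upwards [hg, hh, Lp.coeFn_add (s • g) (t • h), Lp.coeFn_smul s g, Lp.coeFn_smul t h]
    with a hga hha hadd hsg hth
  rw [hadd, Pi.add_apply, hsg, hth]
  exact hF a hga hha hs ht hst

theorem isBounded_setOf_ae_mem [Fact (1 ≤ p)] [IsFiniteMeasure ν] {B : Set E}
    (hB : IsBounded B) : IsBounded {g : Lp E p ν | ∀ᵐ a ∂ν, g a ∈ B} := by
  obtain ⟨R, hR⟩ := isBounded_iff_forall_norm_le.mp hB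
  refine isBounded_iff_forall_norm_le.mpr ⟨_, fun g (hg : ∀ᵐ a ∂ν, g a ∈ B) =>
    Lp.norm_le_of_ae_bound (le_max_right R 0) (hg.mono fun a ha => (hR _ ha).trans ?_)⟩
  exact le_max_left R 0

end NormedAddCommGroup

variable [IsFiniteMeasure ν] [NormedAddCommGroup E] [InnerProductSpace ℝ E] [CompleteSpace E]

theorem adjoint_constL_apply (g : Lp E 2 ν) :
    ContinuousLinearMap.adjoint (Lp.constL 2 ν ℝ) g = ∫ a, g a ∂ν := by
  refine ext_inner_left ℝ fun u => ?_
  rw [ContinuousLinearMap.adjoint_inner_right, Lp.constL_apply, ← indicatorConstLp_univ,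
    L2.inner_indicatorConstLp_eq_setIntegral_inner, setIntegral_univ,
    integral_inner ((Lp.memLp g).integrable one_le_two)]

end MeasureTheory.Lp

section MinNormSection

variable {E W : Type*} [NormedAddCommGroup E] {f : E → W} {K X : Set E} {y : W}

noncomputable def fiberMinNorm (f : E → W) (K : Set E) (y : W) : ℝ≥0∞ :=
  ⨅ x ∈ K ∩ f ⁻¹' {y}, ‖x‖ₑ

theorem fiberMinNorm_le {x : E} (hx : x ∈ K ∩ f ⁻¹' {y}) : fiberMinNorm f K y ≤ ‖x‖ₑ :=
  iInf₂_le x hx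

open Classical in
noncomputable def minNormSection (f : E → W) (X : Set E) (y : W) : E :=
  if h : ∃ x ∈ X ∩ f ⁻¹' {y}, ‖x‖ₑ = fiberMinNorm f X y then h.choose else 0

theorem minNormSection_of_notMem (hy : y ∉ f '' X) : minNormSection f X y = 0 :=
  dif_neg fun ⟨x, ⟨hxX, hxy⟩, _⟩ => hy ⟨x, hxX, hxy⟩

variable [TopologicalSpace W]

theorem exists_enorm_eq_fiberMinNorm [T1Space W] (hK : IsCompact K) (hf : Continuous f)
    (hy : fiberMinNorm f K y ≠ ⊤) : ∃ x ∈ K ∩ f ⁻¹' {y}, ‖x‖ₑ = fiberMinNorm f K y := by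
  have hfiber : IsCompact (K ∩ f ⁻¹' {y}) := hK.inter_right (isClosed_singleton.preimage hf)
  have hne : (K ∩ f ⁻¹' {y}).Nonempty := by
    contrapose! hy
    simp [fiberMinNorm, hy]
  obtain ⟨x, hx, hxmin⟩ := (hfiber.image continuous_enorm).sInf_mem (hne.image _)
  exact ⟨x, hx, hxmin.trans sInf_image⟩

theorem minNormSection_spec [T1Space W] (hX : IsCompact X) (hf : Continuous f) (hy : y ∈ f '' X) :
    minNormSection f X y ∈ X ∩ f ⁻¹' {y} ∧ ‖minNormSection f X y‖ₑ = fiberMinNorm f X y := by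
  obtain ⟨x, hx, rfl⟩ := hy
  have h := exists_enorm_eq_fiberMinNorm hX hf
    ((fiberMinNorm_le ⟨hx, rfl⟩).trans_lt enorm_lt_top).ne
  rw [minNormSection, dif_pos h]
  exact h.choose_spec

theorem measurable_fiberMinNorm [T2Space W] [MeasurableSpace W] [OpensMeasurableSpace W]
    (hK : IsCompact K) (hf : Continuous f) : Measurable (fiberMinNorm f K) := by
  refine measurable_of_Iic fun t => ?_
  rcases eq_or_ne t ⊤ with rfl | ht
  · simp
  have hpre : fiberMinNorm f K ⁻¹' Iic t = f '' (K ∩ {x | ‖x‖ₑ ≤ t}) := by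
    ext y
    constructor
    · intro hy
      obtain ⟨x, hx, hxy⟩ := exists_enorm_eq_fiberMinNorm hK hf (ne_top_of_le_ne_top ht hy)
      exact ⟨x, ⟨hx.1, hxy.trans_le hy⟩, hx.2⟩
    · rintro ⟨x, ⟨hxK, hxt⟩, rfl⟩
      exact (fiberMinNorm_le ⟨hxK, rfl⟩).trans hxt
  rw [hpre]
  exact ((hK.inter_right (isClosed_le continuous_enorm continuous_const)).image hf).isClosed
    |>.measurableSet

variable [NormedSpace ℝ E] [StrictConvexSpace ℝ E]

theorem minNormSection_mem_iff [T1Space W] (hX : IsCompact X) (hf : Continuous f)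
    (hfib : ∀ y, Convex ℝ (X ∩ f ⁻¹' {y})) {C : Set E} (hC : IsClosed C) (hy : y ∈ f '' X) :
    minNormSection f X y ∈ C ↔ fiberMinNorm f (X ∩ C) y ≤ fiberMinNorm f X y := by
  obtain ⟨hsel, hselmin⟩ := minNormSection_spec hX hf hy
  constructor
  · intro hselC
    exact hselmin ▸ fiberMinNorm_le ⟨⟨hsel.1, hselC⟩, hsel.2⟩
  · intro hle
    obtain ⟨x, ⟨⟨hxX, hxC⟩, hxy⟩, hxmin⟩ := exists_enorm_eq_fiberMinNorm (hX.inter_right hC) hf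
      (ne_top_of_le_ne_top (hselmin ▸ enorm_ne_top) hle)
    have hxglobal : ∀ z ∈ X ∩ f ⁻¹' {y}, ‖x‖ ≤ ‖z‖ := fun z hz => by
      rw [← enorm_le_iff_norm_le, hxmin]
      exact hle.trans (fiberMinNorm_le hz)
    have hselglobal : ∀ z ∈ X ∩ f ⁻¹' {y}, ‖minNormSection f X y‖ ≤ ‖z‖ := fun z hz => by
      rw [← enorm_le_iff_norm_le, hselmin]
      exact fiberMinNorm_le hz
    rwa [← (hfib y).eq_of_forall_norm_le ⟨hxX, hxy⟩ hsel hxglobal hselglobal]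

variable [T2Space W] [MeasurableSpace E] [BorelSpace E] [MeasurableSpace W]
  [OpensMeasurableSpace W]

theorem measurable_minNormSection (hX : IsCompact X) (hf : Continuous f)
    (hfib : ∀ y, Convex ℝ (X ∩ f ⁻¹' {y})) : Measurable (minNormSection f X) := by
  refine measurable_of_isClosed fun C hC => ?_
  have himage : MeasurableSet (f '' X) := (hX.image hf).isClosed.measurableSet
  have hpre : minNormSection f X ⁻¹' C =
      (f '' X ∩ {y | fiberMinNorm f (X ∩ C) y ≤ fiberMinNorm f X y}) ∪
        ((f '' X)ᶜ ∩ {_y | (0 : E) ∈ C}) := by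
    ext y
    by_cases hy : y ∈ f '' X
    · simp [hy, minNormSection_mem_iff hX hf hfib hC hy]
    · simp [hy, minNormSection_of_notMem hy]
  rw [hpre]
  exact (himage.inter (measurableSet_le (measurable_fiberMinNorm (hX.inter_right hC) hf)
    (measurable_fiberMinNorm hX hf))).union (himage.compl.inter (MeasurableSet.const _))

theorem fiberBody_nonempty (μ : Measure W) (hX : IsCompact X) (hf : Continuous f)
    (hfib : ∀ y, Convex ℝ (X ∩ f ⁻¹' {y})) : (fiberBody μ f X).Nonempty :=
  ⟨_, minNormSection f X, measurable_minNormSection hX hf hfib,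
    fun _ hy => (minNormSection_spec hX hf hy).1, rfl⟩

end MinNormSection

section FiberBody

variable {E W : Type*} [NormedAddCommGroup E] [InnerProductSpace ℝ E] [FiniteDimensional ℝ E]
  [MeasurableSpace E] [BorelSpace E] [TopologicalSpace W] [T2Space W] [MeasurableSpace W]
  [OpensMeasurableSpace W] {f : E → W} {X : Set E}

theorem exists_measurable_section_ae_eq (hX : IsCompact X) (hf : Continuous f)
    (hfib : ∀ y, Convex ℝ (X ∩ f ⁻¹' {y})) {ν : Measure W} {g : W → E}
    (hg : AEStronglyMeasurable g ν) (hgX : ∀ᵐ y ∂ν, g y ∈ X ∩ f ⁻¹' {y}) :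
    ∃ γ : W → E, Measurable γ ∧ (∀ y ∈ f '' X, γ y ∈ X ∧ f (γ y) = y) ∧ γ =ᵐ[ν] g := by
  classical
  obtain ⟨g', hg's, hgg'⟩ := hg
  have hg' : Measurable g' := hg's.measurable
  set G := {y | g' y ∈ X ∩ f ⁻¹' {y}}
  have hG : MeasurableSet G := by
    have hgraph : IsClosed {p : W × E | p.2 ∈ X ∧ f p.2 = p.1} :=
      (hX.isClosed.preimage continuous_snd).inter (isClosed_eq (hf.comp continuous_snd)
        continuous_fst)
    exact (measurable_id.prodMk hg') hgraph.measurableSet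
  refine ⟨G.piecewise g' (minNormSection f X),
    hg'.piecewise hG (measurable_minNormSection hX hf hfib), fun y hy => ?_, ?_⟩
  · by_cases hyG : y ∈ G
    · rw [piecewise_eq_of_mem _ _ _ hyG]; exact hyG
    · rw [piecewise_eq_of_notMem _ _ _ hyG]; exact (minNormSection_spec hX hf hy).1
  · filter_upwards [hgX, hgg'] with y hy hyg
    have hyG : y ∈ G := show g' y ∈ _ from hyg ▸ hy
    rw [piecewise_eq_of_mem _ _ _ hyG, hyg]

noncomputable def l2Sections (μ : Measure W) (f : E → W) (X : Set E) :
    Set (Lp E 2 (μ.restrict (f '' X))) :=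
  {g | ∀ᵐ y ∂μ.restrict (f '' X), g y ∈ X ∩ f ⁻¹' {y}}

variable (μ : Measure W) [IsFiniteMeasure (μ.restrict (f '' X))]

theorem fiberBody_eq_image_l2Sections (hX : IsCompact X) (hf : Continuous f)
    (hfib : ∀ y, Convex ℝ (X ∩ f ⁻¹' {y})) :
    fiberBody μ f X = ((μ (f '' X)).toReal⁻¹ • (Lp.constL (E := E) 2 (μ.restrict (f '' X)) ℝ)†) ''
      l2Sections μ f X := by
  have himage : MeasurableSet (f '' X) := (hX.image hf).isClosed.measurableSet
  obtain ⟨R, hR⟩ := isBounded_iff_forall_norm_le.mp hX.isBounded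
  ext x
  constructor
  · rintro ⟨γ, hγm, hγ, rfl⟩
    have hγX : ∀ᵐ y ∂μ.restrict (f '' X), γ y ∈ X ∩ f ⁻¹' {y} :=
      (ae_restrict_mem himage).mono hγ
    have hγL2 : MemLp γ 2 (μ.restrict (f '' X)) :=
      MemLp.of_bound hγm.aestronglyMeasurable R (hγX.mono fun y hy => hR _ hy.1)
    refine ⟨hγL2.toLp γ, ?_, ?_⟩
    · filter_upwards [hγL2.coeFn_toLp, hγX] with y hy hyX
      rwa [hy]
    · rw [smul_apply, Lp.adjoint_constL_apply, integral_congr_ae hγL2.coeFn_toLp]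
  · rintro ⟨g, hg, rfl⟩
    obtain ⟨γ, hγm, hγ, hγg⟩ :=
      exists_measurable_section_ae_eq hX hf hfib (Lp.aestronglyMeasurable g) hg
    refine ⟨γ, hγm, hγ, ?_⟩
    rw [smul_apply, Lp.adjoint_constL_apply, integral_congr_ae hγg]

theorem convex_fiberBody (hX : IsCompact X) (hf : Continuous f)
    (hfib : ∀ y, Convex ℝ (X ∩ f ⁻¹' {y})) : Convex ℝ (fiberBody μ f X) := by
  rw [fiberBody_eq_image_l2Sections μ hX hf hfib]
  exact (Lp.convex_setOf_ae_mem hfib).linear_image _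

theorem isCompact_fiberBody (hX : IsCompact X) (hf : Continuous f)
    (hfib : ∀ y, Convex ℝ (X ∩ f ⁻¹' {y})) : IsCompact (fiberBody μ f X) := by
  rw [fiberBody_eq_image_l2Sections μ hX hf hfib]
  have hbdd : IsBounded (l2Sections μ f X) :=
    (Lp.isBounded_setOf_ae_mem hX.isBounded).subset
      fun g (hg : ∀ᵐ y ∂μ.restrict (f '' X), g y ∈ X ∩ f ⁻¹' {y}) => hg.mono fun _ hy => hy.1
  exact Metric.isCompact_of_isClosed_isBounded
    (ContinuousLinearMap.isClosed_image_of_convex_of_isBounded _ (Lp.convex_setOf_ae_mem hfib)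
      (Lp.isClosed_setOf_ae_mem fun y => hX.isClosed.inter (isClosed_singleton.preimage hf)) hbdd)
    ((ContinuousLinearMap.lipschitz _).isBounded_image hbdd)

end FiberBody

theorem ContinuousLinearEquiv.image_fiberBody {V V' W : Type*} [NormedAddCommGroup V]
    [NormedSpace ℝ V] [MeasurableSpace V] [BorelSpace V] [NormedAddCommGroup V']
    [NormedSpace ℝ V'] [MeasurableSpace V'] [BorelSpace V'] [MeasurableSpace W]
    (μ : Measure W) (e : V ≃L[ℝ] V') (g : V' → W) (X : Set V) :
    e '' fiberBody μ (g ∘ e) X = fiberBody μ g (e '' X) := by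
  have himage : (g ∘ e) '' X = g '' (e '' X) := image_comp g e X
  ext x
  constructor
  · rintro ⟨_, ⟨γ, hγm, hγ, rfl⟩, rfl⟩
    refine ⟨e ∘ γ, e.continuous.measurable.comp hγm, fun y hy => ?_, ?_⟩
    · rw [← himage] at hy
      exact ⟨mem_image_of_mem e (hγ y hy).1, (hγ y hy).2⟩
    · rw [← himage, map_smul, ← e.integral_comp_comm]
      rfl
  · rintro ⟨γ, hγm, hγ, rfl⟩
    refine ⟨_, ⟨e.symm ∘ γ, e.symm.continuous.measurable.comp hγm, fun y hy => ?_, rfl⟩, ?_⟩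
    · rw [himage] at hy
      obtain ⟨⟨x, hx, hxγ⟩, hγy⟩ := hγ y hy
      simpa [← hxγ] using ⟨hx, hxγ ▸ hγy⟩
    · rw [himage, map_smul, ← e.integral_comp_comm]
      simp only [Function.comp_apply, e.apply_symm_apply]

theorem fiberBody_nonempty_convex_isCompact_general {V W : Type*}
    [NormedAddCommGroup V] [NormedSpace ℝ V] [FiniteDimensional ℝ V]
    [MeasurableSpace V] [BorelSpace V]
    [NormedAddCommGroup W] [NormedSpace ℝ W]
    [MeasurableSpace W] [BorelSpace W]
    (X : Set V)
    (hXconv : Convex ℝ X) (hXcomp : IsCompact X)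
    (f : V →ᵃ[ℝ] W)
    (μ : Measure W)
    (hfin : μ (⇑f '' X) < ⊤) :
    (fiberBody μ (⇑f) X).Nonempty ∧ Convex ℝ (fiberBody μ (⇑f) X) ∧
      IsCompact (fiberBody μ (⇑f) X) := by
  let e : V ≃L[ℝ] EuclideanSpace ℝ (Fin (Module.finrank ℝ V)) := toEuclidean
  let f' := f.comp e.symm.toLinearEquiv.toLinearMap.toAffineMap
  have hff' : ⇑f = ⇑f' ∘ e := funext fun x => by simp [f']
  have hf' : Continuous f' := f'.continuous_of_finiteDimensional
  have hfib : ∀ y, Convex ℝ (e '' X ∩ f' ⁻¹' {y}) := fun y =>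
    (hXconv.linear_image e.toLinearMap).inter ((convex_singleton y).affine_preimage f')
  have hX' : IsCompact (e '' X) := hXcomp.image e.continuous
  have : IsFiniteMeasure (μ.restrict (f' '' (e '' X))) := by
    rw [isFiniteMeasure_restrict, ← image_comp, ← hff']
    exact hfin.ne
  rw [hff', ← e.symm_image_image (fiberBody μ _ X), e.image_fiberBody]
  refine ⟨(fiberBody_nonempty μ hX' hf' hfib).image _, ?_,
    (isCompact_fiberBody μ hX' hf' hfib).image e.symm.continuous⟩
  simpa using (convex_fiberBody μ hX' hf' hfib).linear_image e.symm.toLinearMap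

/-- For an affine map `f : X → Y` between nonempty convex compact
sets in finite-dimensional real vector spaces, and a (σ-finite) nonzero
translation-invariant Borel measure `μ` on the affine hull of `f(X)`
(so `0 < μ(f(X)) < ∞`), the fiber body `Σf` is a nonempty convex compact subset of `V`. -/
theorem fiberBody_nonempty_convex_isCompact {V W : Type*}
    [NormedAddCommGroup V] [NormedSpace ℝ V] [FiniteDimensional ℝ V]
    [MeasurableSpace V] [BorelSpace V]
    [NormedAddCommGroup W] [NormedSpace ℝ W] [FiniteDimensional ℝ W]
    [MeasurableSpace W] [BorelSpace W]
    (X : Set V) (Y : Set W)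
    (hXne : X.Nonempty) (hXconv : Convex ℝ X) (hXcomp : IsCompact X)
    (hYne : Y.Nonempty) (hYconv : Convex ℝ Y) (hYcomp : IsCompact Y)
    (f : V →ᵃ[ℝ] W) (hf : ⇑f '' X ⊆ Y)
    (μ : Measure W) [SigmaFinite μ]
    (hsupp : μ (((affineSpan ℝ (⇑f '' X) : AffineSubspace ℝ W) : Set W)ᶜ) = 0)
    (hinv : ∀ v ∈ (affineSpan ℝ (⇑f '' X)).direction, ∀ s : Set W,
      μ ((fun y => y + v) ⁻¹' s) = μ s)
    (hpos : 0 < μ (⇑f '' X)) (hfin : μ (⇑f '' X) < ⊤) :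
    (fiberBody μ (⇑f) X).Nonempty ∧ Convex ℝ (fiberBody μ (⇑f) X) ∧
      IsCompact (fiberBody μ (⇑f) X) :=
  fiberBody_nonempty_convex_isCompact_general X hXconv hXcomp f μ hfin
end

section
/- Let V and W be finite-dimensional real vector spaces, let X ⊆ V and Y ⊆ W be nonempty convex compact sets, and let f : X → Y be an affine map. Then dim(Σf) = dim X − dim f(X), i.e., the dimension of the fiber body of f equals the codimension of f. -/
open Set MeasureTheory Pointwise

/-- The dimension of a convex set: the dimension of the direction of its affine span. -/
noncomputable def convDim {V : Type*} [AddCommGroup V] [Module ℝ V] (s : Set V) : ℕ :=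
  Module.finrank ℝ (affineSpan ℝ s).direction

/-!
Write `D` for the direction of `affineSpan ℝ X` and `L` for the linear part of `f`. Any two
sections differ pointwise by vectors of `D ⊓ ker L`, hence so do their averages, and rank-nullity
gives `dim (D ⊓ ker L) = dim X - dim f(X)`. Conversely, near the image of a relative interior
point of `X` there is an affine local section `σ` over a relatively open piece `S` of the affine
hull of `f(X)` such that `σ + k` is still a section for every small `k ∈ D ⊓ ker L`. By translation
invariance, finitely many translates of `S` cover `f(X)`, so `μ S > 0`; modifying a measurable
(fibrewise minimal-norm) section by `k` on `S` moves its average by `μ S / μ f(X) • k`.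
-/

lemma Submodule.finrank_inf_ker_add_finrank_map {K V W : Type*} [DivisionRing K] [AddCommGroup V]
    [Module K V] [FiniteDimensional K V] [AddCommGroup W] [Module K W]
    (D : Submodule K V) (L : V →ₗ[K] W) :
    Module.finrank K ↥(D ⊓ LinearMap.ker L) + Module.finrank K ↥(D.map L) =
      Module.finrank K D := by
  have hker : LinearMap.ker (L.domRestrict D) = (D ⊓ LinearMap.ker L).comap D.subtype := by
    rw [LinearMap.ker_domRestrict, Submodule.comap_inf, Submodule.comap_subtype_self, top_inf_eq]
  rw [← (L.domRestrict D).finrank_range_add_finrank_ker, LinearMap.range_domRestrict, hker,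
    (Submodule.comapSubtypeEquivOfLe inf_le_left).finrank_eq, add_comm]

lemma LinearMap.exists_rightInverseOn_map {K V W : Type*} [DivisionRing K] [AddCommGroup V]
    [Module K V] [AddCommGroup W] [Module K W] (L : V →ₗ[K] W) (D : Submodule K V) :
    ∃ ℓ : W →ₗ[K] V, ∀ w ∈ D.map L, ℓ w ∈ D ∧ L (ℓ w) = w := by
  obtain ⟨r, hr⟩ := (L.domRestrict D).rangeRestrict.exists_rightInverse_of_surjective
    (L.domRestrict D).range_rangeRestrict
  obtain ⟨ℓ, hℓ⟩ := LinearMap.exists_extend (D.subtype ∘ₗ r)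
  refine ⟨ℓ, fun w hw => ?_⟩
  rw [← LinearMap.range_domRestrict] at hw
  have hℓw : ℓ w = r ⟨w, hw⟩ := LinearMap.congr_fun hℓ ⟨w, hw⟩
  refine ⟨hℓw ▸ (r ⟨w, hw⟩).2, ?_⟩
  rw [hℓw]
  exact congr_arg Subtype.val (LinearMap.congr_fun hr ⟨w, hw⟩)

section Geometry

variable {V W : Type*} [NormedAddCommGroup V] [NormedSpace ℝ V]
  [NormedAddCommGroup W] [NormedSpace ℝ W]

lemma exists_add_mem_of_mem_intrinsicInterior {X : Set V} {x₀ : V}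
    (hx₀ : x₀ ∈ intrinsicInterior ℝ X) :
    ∃ δ > 0, ∀ v ∈ (affineSpan ℝ X).direction, ‖v‖ < δ → x₀ + v ∈ X := by
  obtain ⟨p, hp, rfl⟩ := mem_intrinsicInterior.1 hx₀
  obtain ⟨δ, hδ, hball⟩ := Metric.isOpen_iff.1 isOpen_interior p hp
  refine ⟨δ, hδ, fun v hv hvδ => ?_⟩
  have hq : (⟨v +ᵥ (p : V), AffineSubspace.vadd_mem_of_mem_direction hv p.2⟩ : affineSpan ℝ X) ∈
      Metric.ball p δ := by
    simpa [Subtype.dist_eq, dist_eq_norm] using hvδ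
  simpa [add_comm] using interior_subset (hball hq)

lemma exists_continuous_local_section_add_mem [FiniteDimensional ℝ W] {X : Set V} {x₀ : V}
    (hx₀ : x₀ ∈ intrinsicInterior ℝ X) (f : V →ᵃ[ℝ] W) :
    ∃ σ : W → V, Continuous σ ∧ ∃ r > 0, ∃ ε > 0,
      ∀ y ∈ Metric.ball (f x₀) r ∩ affineSpan ℝ (f '' X),
      ∀ k ∈ (affineSpan ℝ X).direction ⊓ LinearMap.ker f.linear, ‖k‖ < ε →
        σ y + k ∈ X ∧ f (σ y + k) = y := by
  obtain ⟨δ, hδ, hx₀δ⟩ := exists_add_mem_of_mem_intrinsicInterior hx₀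
  obtain ⟨ℓ, hℓ⟩ := f.linear.exists_rightInverseOn_map (affineSpan ℝ X).direction
  have hℓc : Continuous ℓ := ℓ.continuous_of_finiteDimensional
  obtain ⟨r, hr, hℓr⟩ := Metric.continuous_iff.1 hℓc 0 (δ / 2) (half_pos hδ)
  refine ⟨fun y => x₀ + ℓ (y - f x₀), by fun_prop, r, hr, δ / 2, half_pos hδ,
    fun y ⟨hyr, hyA⟩ k ⟨hkD, hkL⟩ hkε => ?_⟩
  have hdir : y - f x₀ ∈ (affineSpan ℝ X).direction.map f.linear := by
    rw [← AffineSubspace.map_direction, AffineSubspace.map_span]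
    exact AffineSubspace.vsub_mem_direction hyA
      (subset_affineSpan ℝ _ (mem_image_of_mem f (intrinsicInterior_subset hx₀)))
  obtain ⟨hℓD, hℓL⟩ := hℓ _ hdir
  have hℓy : ‖ℓ (y - f x₀)‖ < δ / 2 := by
    simpa [dist_eq_norm] using hℓr (y - f x₀) (by simpa [dist_eq_norm] using hyr)
  rw [add_assoc]
  refine ⟨hx₀δ _ (add_mem hℓD hkD) ((norm_add_le _ _).trans_lt (by linarith)), ?_⟩
  rw [add_comm x₀, ← vadd_eq_add, f.map_vadd, map_add, hℓL, LinearMap.mem_ker.1 hkL, add_zero,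
    vadd_eq_add, sub_add_cancel]

end Geometry

lemma measure_ball_inter_affineSubspace_ne_zero {W : Type*} [NormedAddCommGroup W]
    [NormedSpace ℝ W] [MeasurableSpace W] {μ : Measure W} {A : AffineSubspace ℝ W}
    (hinv : ∀ v ∈ A.direction, ∀ s : Set W, μ ((fun y => y + v) ⁻¹' s) = μ s)
    {F : Set W} (hFA : F ⊆ A) (hF : IsCompact F) (hμF : μ F ≠ 0) {a : W} (ha : a ∈ A)
    {r : ℝ} (hr : 0 < r) : μ (Metric.ball a r ∩ A) ≠ 0 := by
  intro h0
  have htrans : ∀ y ∈ F, μ (Metric.ball y r ∩ A) = 0 := fun y hy => by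
    have hv : y - a ∈ A.direction := AffineSubspace.vsub_mem_direction (hFA hy) ha
    rw [← hinv _ hv, ← h0]
    congr 1
    ext z
    simp only [mem_preimage, mem_inter_iff, Metric.mem_ball, dist_eq_norm, SetLike.mem_coe]
    rw [show z + (y - a) - y = z - a by abel, add_comm, ← vadd_eq_add,
      AffineSubspace.vadd_mem_iff_mem_of_mem_direction hv]
  obtain ⟨T, hTF, hcover⟩ := hF.elim_nhds_subcover (fun y => Metric.ball y r)
    fun y _ => Metric.ball_mem_nhds y hr
  refine hμF (measure_mono_null (fun z hz => ?_) ((measure_biUnion_null_iff T.countable_toSet).2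
    fun y hy => htrans y (hTF y hy)))
  obtain ⟨y, hyT, hzy⟩ := mem_iUnion₂.1 (hcover hz)
  exact mem_iUnion₂.2 ⟨y, hyT, hzy, hFA hz⟩

lemma Measurable.integrableOn_of_mapsTo_isCompact {α E : Type*} [MeasurableSpace α]
    [NormedAddCommGroup E] [MeasurableSpace E] [OpensMeasurableSpace E]
    [SecondCountableTopology E] {μ : Measure α} {s : Set α} {K : Set E}
    {γ : α → E} (hγ : Measurable γ) (hs : MeasurableSet s) (hμs : μ s ≠ ⊤) (hK : IsCompact K)
    (hγK : MapsTo γ s K) : IntegrableOn γ s μ := by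
  obtain ⟨C, hC⟩ := hK.isBounded.exists_norm_le
  exact .of_bound hμs.lt_top hγ.aestronglyMeasurable C
    (ae_restrict_of_forall_mem hs fun y hy => hC _ (hγK hy))

lemma StrictConvexOn.mem_iff_of_isMinOn {V : Type*} [NormedAddCommGroup V] [NormedSpace ℝ V]
    {s C : Set V} {φ : V → ℝ} {x : V}
    (hφ : StrictConvexOn ℝ s φ) (hφc : Continuous φ) (hs : IsCompact s) (hC : IsClosed C)
    (hx : x ∈ s) (hmin : IsMinOn φ s x) :
    x ∈ C ↔ (∃ z ∈ s, z ∈ C) ∧ ∀ q : ℚ, (∃ z ∈ s, φ z ≤ q) → ∃ z ∈ s, z ∈ C ∧ φ z ≤ q := by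
  refine ⟨fun hxC => ⟨⟨x, hx, hxC⟩, fun q ⟨z, hz, hzq⟩ => ⟨x, hx, hxC, (hmin hz).trans hzq⟩⟩, ?_⟩
  rintro ⟨⟨z₀, hz₀, hz₀C⟩, hq⟩
  obtain ⟨z, hz, hzmin⟩ := (hs.inter_right hC).exists_isMinOn ⟨z₀, hz₀, hz₀C⟩ hφc.continuousOn
  have hzx : φ z ≤ φ x := by
    by_contra! hlt
    obtain ⟨q, hxq, hqz⟩ := exists_rat_btwn hlt
    obtain ⟨w, hw, hwC, hwq⟩ := hq q ⟨x, hx, hxq.le⟩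
    exact (hzmin ⟨hw, hwC⟩).not_gt (hwq.trans_lt hqz)
  obtain rfl : z = x := hφ.eq_of_isMinOn (fun w hw => hzx.trans (hmin hw)) hmin hz.1 hx
  exact hz.2

section Selection

variable {V W : Type*} [NormedAddCommGroup V] [NormedSpace ℝ V] [FiniteDimensional ℝ V]

lemma strictConvexOn_sq_norm_toEuclidean :
    StrictConvexOn ℝ univ fun x : V => ‖toEuclidean x‖ ^ 2 := by
  have hsq : StrictConvexOn ℝ univ
      fun u : EuclideanSpace ℝ (Fin (Module.finrank ℝ V)) => ‖u‖ ^ 2 :=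
    (strongConvexOn_iff_convex.2 (by simpa using convexOn_const (0 : ℝ) convex_univ)).strictConvexOn
      two_pos
  refine ⟨convex_univ, fun x _ y _ hxy a b ha hb hab => ?_⟩
  simpa using hsq.2 (mem_univ _) (mem_univ _) (toEuclidean.injective.ne hxy) ha hb hab

variable [MeasurableSpace V] [BorelSpace V]
  [NormedAddCommGroup W] [NormedSpace ℝ W] [MeasurableSpace W] [BorelSpace W]

theorem exists_measurable_section {X : Set V} (hXne : X.Nonempty) (hXconv : Convex ℝ X)
    (hXcomp : IsCompact X) (f : V →ᵃ[ℝ] W) :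
    ∃ γ : W → V, Measurable γ ∧ ∀ y ∈ f '' X, γ y ∈ X ∧ f (γ y) = y := by
  classical
  obtain ⟨x₀, -⟩ := hXne
  set φ : V → ℝ := fun x => ‖toEuclidean x‖ ^ 2
  have hφc : Continuous φ := by fun_prop
  have hf : Continuous f := f.continuous_of_finiteDimensional
  have hfib : ∀ y, IsCompact (X ∩ f ⁻¹' {y}) := fun y =>
    hXcomp.inter_right (isClosed_singleton.preimage hf)
  choose! g hg hgmin using fun y (hy : y ∈ f '' X) =>
    (hfib y).exists_isMinOn (by obtain ⟨x, hx, rfl⟩ := hy; exact ⟨x, hx, rfl⟩) hφc.continuousOn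
  refine ⟨(f '' X).piecewise g fun _ => x₀, measurable_of_isClosed fun C hC => ?_,
    fun y hy => by simpa [piecewise_eq_of_mem _ _ _ hy] using hg y hy⟩
  have hpre : g ⁻¹' C ∩ f '' X = f '' X ∩ (f '' (X ∩ C) ∩ ⋂ q : ℚ,
      (f '' (X ∩ {x | φ x ≤ q}))ᶜ ∪ f '' (X ∩ (C ∩ {x | φ x ≤ q}))) := by
    ext y
    rw [inter_comm, mem_inter_iff, mem_inter_iff, mem_preimage]
    refine and_congr_right fun hy => ?_
    have hmem : ∀ T : Set V, y ∈ f '' (X ∩ T) ↔ ∃ z ∈ X ∩ f ⁻¹' {y}, z ∈ T := fun T => by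
      simp only [mem_image, mem_inter_iff, mem_preimage, mem_singleton_iff, and_right_comm]
    rw [(strictConvexOn_sq_norm_toEuclidean.subset (subset_univ _) (hXconv.inter
      ((convex_singleton y).affine_preimage f))).mem_iff_of_isMinOn hφc (hfib y) hC (hg y hy)
      (hgmin y hy)]
    simp only [mem_iInter, mem_union, mem_compl_iff, ← imp_iff_not_or, hmem, mem_inter_iff]
    rfl
  have himage : ∀ T : Set V, IsClosed T → MeasurableSet (f '' (X ∩ T)) := fun T hT =>
    ((hXcomp.inter_right hT).image hf).measurableSet
  have hF : MeasurableSet (f '' X) := (hXcomp.image hf).measurableSet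
  rw [piecewise_preimage, Set.ite, hpre]
  refine (hF.inter ((himage C hC).inter (.iInter fun q => .union (himage _ ?_).compl
    (himage _ ?_)))).union ((MeasurableSet.const _).diff hF)
  · exact isClosed_le hφc continuous_const
  · exact hC.inter (isClosed_le hφc continuous_const)

end Selection

section FiberBody

variable {V W : Type*} [NormedAddCommGroup V] [NormedSpace ℝ V] [FiniteDimensional ℝ V]
  [MeasurableSpace V] [BorelSpace V]
  [NormedAddCommGroup W] [NormedSpace ℝ W] [MeasurableSpace W] [BorelSpace W]
  {X : Set V} {μ : Measure W}

lemma vectorSpan_fiberBody_le (hXcomp : IsCompact X) (f : V →ᵃ[ℝ] W)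
    (hpos : μ (f '' X) ≠ 0) (hfin : μ (f '' X) ≠ ⊤) :
    vectorSpan ℝ (fiberBody μ f X) ≤ (affineSpan ℝ X).direction ⊓ LinearMap.ker f.linear := by
  have hF : MeasurableSet (f '' X) :=
    (hXcomp.image f.continuous_of_finiteDimensional).measurableSet
  rw [vectorSpan_def, Submodule.span_le]
  rintro _ ⟨_, ⟨γ, hγ, hγsec, rfl⟩, _, ⟨γ', hγ', hγ'sec, rfl⟩, rfl⟩
  have hint := hγ.integrableOn_of_mapsTo_isCompact hF hfin hXcomp fun y hy => (hγsec y hy).1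
  have hint' := hγ'.integrableOn_of_mapsTo_isCompact hF hfin hXcomp fun y hy => (hγ'sec y hy).1
  dsimp only
  rw [vsub_eq_sub, ← smul_sub, ← integral_sub hint hint', ← measureReal_def, ← setAverage_eq]
  refine (Submodule.convex _).set_average_mem (Submodule.closed_of_finiteDimensional _) hpos hfin
    (ae_restrict_of_forall_mem hF fun y hy => ⟨?_, ?_⟩) (hint.sub hint')
  · exact AffineSubspace.vsub_mem_direction (subset_affineSpan ℝ X (hγsec y hy).1)
      (subset_affineSpan ℝ X (hγ'sec y hy).1)
  · rw [SetLike.mem_coe, LinearMap.mem_ker, ← vsub_eq_sub, f.linearMap_vsub, (hγsec y hy).2,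
      (hγ'sec y hy).2, vsub_self]

lemma inf_ker_le_vectorSpan_fiberBody [FiniteDimensional ℝ W] (hXne : X.Nonempty)
    (hXconv : Convex ℝ X) (hXcomp : IsCompact X) (f : V →ᵃ[ℝ] W)
    (hinv : ∀ v ∈ (affineSpan ℝ (f '' X)).direction, ∀ s : Set W,
      μ ((fun y => y + v) ⁻¹' s) = μ s)
    (hpos : μ (f '' X) ≠ 0) (hfin : μ (f '' X) ≠ ⊤) :
    (affineSpan ℝ X).direction ⊓ LinearMap.ker f.linear ≤ vectorSpan ℝ (fiberBody μ f X) := by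
  classical
  have hF : MeasurableSet (f '' X) :=
    (hXcomp.image f.continuous_of_finiteDimensional).measurableSet
  obtain ⟨x₀, hx₀⟩ := hXne.intrinsicInterior hXconv
  obtain ⟨σ, hσc, r, hr, ε, hε, hσ⟩ := exists_continuous_local_section_add_mem hx₀ f
  set S := Metric.ball (f x₀) r ∩ affineSpan ℝ (f '' X)
  have hS : MeasurableSet S :=
    measurableSet_ball.inter (AffineSubspace.closed_of_finiteDimensional _).measurableSet
  have hSF : S ⊆ f '' X := fun y hy =>
    ⟨σ y + 0, hσ y hy 0 (zero_mem _) (by simpa using hε)⟩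
  have hμS : μ S ≠ 0 := measure_ball_inter_affineSubspace_ne_zero hinv (subset_affineSpan ℝ _)
    (hXcomp.image f.continuous_of_finiteDimensional) hpos
    (subset_affineSpan ℝ _ (mem_image_of_mem f (intrinsicInterior_subset hx₀))) hr
  obtain ⟨γ₀, hγ₀, hγ₀sec⟩ :=
    exists_measurable_section ⟨x₀, intrinsicInterior_subset hx₀⟩ hXconv hXcomp f
  set γ : V → W → V := fun k => S.piecewise (fun y => σ y + k) γ₀
  have hγ : ∀ k, Measurable (γ k) := fun k => (hσc.measurable.add_const k).piecewise hS hγ₀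
  have hγsec : ∀ k ∈ (affineSpan ℝ X).direction ⊓ LinearMap.ker f.linear, ‖k‖ < ε →
      ∀ y ∈ f '' X, γ k y ∈ X ∧ f (γ k y) = y := fun k hk hkε y hy => by
    by_cases hyS : y ∈ S
    · simpa [γ, hyS] using hσ y hyS k hk hkε
    · simpa [γ, hyS] using hγ₀sec y hy
  have hint : ∀ k ∈ (affineSpan ℝ X).direction ⊓ LinearMap.ker f.linear, ‖k‖ < ε →
      IntegrableOn (γ k) (f '' X) μ := fun k hk hkε =>
    (hγ k).integrableOn_of_mapsTo_isCompact hF hfin hXcomp fun y hy => (hγsec k hk hkε y hy).1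
  have hmem : ∀ k ∈ (affineSpan ℝ X).direction ⊓ LinearMap.ker f.linear, ‖k‖ < ε →
      (μ (f '' X)).toReal⁻¹ • ∫ y in f '' X, γ k y ∂μ ∈ fiberBody μ f X := fun k hk hkε =>
    ⟨γ k, hγ k, hγsec k hk hkε, rfl⟩
  intro k hk
  obtain ⟨t, ht, htk⟩ := exists_pos_mul_lt hε ‖k‖
  have htk' : ‖t • k‖ < ε := by rwa [norm_smul, Real.norm_of_nonneg ht.le, mul_comm]
  have h0 : ‖(0 : V)‖ < ε := by simpa using hε
  have hdiff := vsub_mem_vectorSpan ℝ (hmem _ (Submodule.smul_mem _ t hk) htk')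
    (hmem 0 (zero_mem _) h0)
  have hγsub : ∀ y, γ (t • k) y - γ 0 y = S.indicator (fun _ => t • k) y := fun y => by
    by_cases hyS : y ∈ S <;> simp [γ, hyS]
  rw [vsub_eq_sub, ← smul_sub, ← integral_sub (hint _ (Submodule.smul_mem _ t hk) htk')
    (hint 0 (zero_mem _) h0)] at hdiff
  simp_rw [hγsub, integral_indicator_const _ hS, measureReal_restrict_apply hS,
    inter_eq_left.2 hSF, smul_smul] at hdiff
  have hμF : (μ (f '' X)).toReal ≠ 0 := ENNReal.toReal_ne_zero.2 ⟨hpos, hfin⟩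
  have hμS' : μ.real S ≠ 0 :=
    ENNReal.toReal_ne_zero.2 ⟨hμS, ((measure_mono hSF).trans_lt hfin.lt_top).ne⟩
  rwa [Submodule.smul_mem_iff _ (mul_ne_zero (inv_ne_zero hμF) (mul_ne_zero hμS' ht.ne'))]
    at hdiff

theorem direction_affineSpan_fiberBody [FiniteDimensional ℝ W] (hXne : X.Nonempty)
    (hXconv : Convex ℝ X) (hXcomp : IsCompact X) (f : V →ᵃ[ℝ] W)
    (hinv : ∀ v ∈ (affineSpan ℝ (f '' X)).direction, ∀ s : Set W,
      μ ((fun y => y + v) ⁻¹' s) = μ s)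
    (hpos : μ (f '' X) ≠ 0) (hfin : μ (f '' X) ≠ ⊤) :
    (affineSpan ℝ (fiberBody μ f X)).direction =
      (affineSpan ℝ X).direction ⊓ LinearMap.ker f.linear := by
  rw [direction_affineSpan]
  exact le_antisymm (vectorSpan_fiberBody_le hXcomp f hpos hfin)
    (inf_ker_le_vectorSpan_fiberBody hXne hXconv hXcomp f hinv hpos hfin)

end FiberBody

theorem convDim_fiberBody_general {V W : Type*}
    [NormedAddCommGroup V] [NormedSpace ℝ V] [FiniteDimensional ℝ V]
    [MeasurableSpace V] [BorelSpace V]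
    [NormedAddCommGroup W] [NormedSpace ℝ W] [FiniteDimensional ℝ W]
    [MeasurableSpace W] [BorelSpace W]
    (X : Set V)
    (hXne : X.Nonempty) (hXconv : Convex ℝ X) (hXcomp : IsCompact X)
    (f : V →ᵃ[ℝ] W)
    (μ : Measure W)
    (hinv : ∀ v ∈ (affineSpan ℝ (⇑f '' X)).direction, ∀ s : Set W,
      μ ((fun y => y + v) ⁻¹' s) = μ s)
    (hpos : 0 < μ (⇑f '' X)) (hfin : μ (⇑f '' X) < ⊤) :
    convDim (fiberBody μ (⇑f) X) = convDim X - convDim (⇑f '' X) := by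
  have hrank := (affineSpan ℝ X).direction.finrank_inf_ker_add_finrank_map f.linear
  rw [convDim, convDim, convDim, direction_affineSpan_fiberBody hXne hXconv hXcomp f hinv
    hpos.ne' hfin.ne, ← AffineSubspace.map_span, AffineSubspace.map_direction]
  omega

/-- For an affine map `f : X → Y` between nonempty convex compact
sets in finite-dimensional real vector spaces, and a (σ-finite) nonzero
translation-invariant Borel measure `μ` on the affine hull of `f(X)`,
the dimension of the fiber body `Σf` equals the codimension of `f`:
`dim Σf = dim X − dim f(X)`. -/
theorem convDim_fiberBody {V W : Type*}
    [NormedAddCommGroup V] [NormedSpace ℝ V] [FiniteDimensional ℝ V]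
    [MeasurableSpace V] [BorelSpace V]
    [NormedAddCommGroup W] [NormedSpace ℝ W] [FiniteDimensional ℝ W]
    [MeasurableSpace W] [BorelSpace W]
    (X : Set V) (Y : Set W)
    (hXne : X.Nonempty) (hXconv : Convex ℝ X) (hXcomp : IsCompact X)
    (hYne : Y.Nonempty) (hYconv : Convex ℝ Y) (hYcomp : IsCompact Y)
    (f : V →ᵃ[ℝ] W) (hf : ⇑f '' X ⊆ Y)
    (μ : Measure W) [SigmaFinite μ]
    (hsupp : μ (((affineSpan ℝ (⇑f '' X) : AffineSubspace ℝ W) : Set W)ᶜ) = 0)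
    (hinv : ∀ v ∈ (affineSpan ℝ (⇑f '' X)).direction, ∀ s : Set W,
      μ ((fun y => y + v) ⁻¹' s) = μ s)
    (hpos : 0 < μ (⇑f '' X)) (hfin : μ (⇑f '' X) < ⊤) :
    convDim (fiberBody μ (⇑f) X) = convDim X - convDim (⇑f '' X) :=
  convDim_fiberBody_general X hXne hXconv hXcomp f μ hinv hpos hfin
end

section
/- Let P = conv{(2,1),(2,−1),(−2,1),(−2,−1)} ⊂ ℝ², Q = conv{(1,2),(1,−2),(−1,2),(−1,−2)} ⊂ ℝ², and R = [0,1] ⊂ ℝ. Then there is no bijective affine map from Hom(P,R) + Hom(Q,R) onto Hom(P+Q, R), where the Hom-sets are subsets of the 3-dimensional vector space of affine maps ℝ² → ℝ and + is the Minkowski sum there. -/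
/-!
An affine bijection between convex sets maps extreme points injectively to extreme points, so it
suffices to count them. Writing `g (x, y) = a x + b y + c`, the set of affine maps
`[-p, p] × [-q, q] → [0, 1]` is the octahedron `2p|a| + 2q|b| + |2c - 1| ≤ 1`, which has six
vertices; since `P + Q = [-3, 3]²`, the target has at most six extreme points. In the source, if
`g₁` and `g₂` are the unique maximisers of the same linear functional on `Hom(P, R)` and
`Hom(Q, R)`, then `g₁ + g₂` is the unique maximiser on the sum, hence extreme; the functionals
`g ↦ ±g z` for seven suitable points `z` of the plane produce seven distinct extreme points.
-/

open Set Pointwise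

section Octahedron

variable {𝕜 E : Type*} [Field 𝕜] [LinearOrder 𝕜] [AddCommGroup E] [Module 𝕜 E] {o u v w : E}

variable (𝕜) in
def octahedron (o u v w : E) : Set E :=
  {x | ∃ s t r : 𝕜, |s| + |t| + |r| ≤ 1 ∧ x = o + s • u + t • v + r • w}

lemma octahedron_neg : octahedron 𝕜 o (-u) v w = octahedron 𝕜 o u v w := by
  ext x
  constructor
  · rintro ⟨s, t, r, h, rfl⟩
    exact ⟨-s, t, r, by rwa [abs_neg], by rw [neg_smul, smul_neg]⟩
  · rintro ⟨s, t, r, h, rfl⟩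
    exact ⟨-s, t, r, by rwa [abs_neg], by rw [neg_smul, smul_neg, neg_neg]⟩

variable [IsStrictOrderedRing 𝕜]

lemma octahedron_rotate : octahedron 𝕜 o u v w = octahedron 𝕜 o v w u := by
  ext x
  constructor
  · rintro ⟨s, t, r, h, rfl⟩
    exact ⟨t, r, s, by linarith, by abel⟩
  · rintro ⟨t, r, s, h, rfl⟩
    exact ⟨s, t, r, by linarith, by abel⟩

lemma convex_octahedron : Convex 𝕜 (octahedron 𝕜 o u v w) := by
  rintro _ ⟨s, t, r, h, rfl⟩ _ ⟨s', t', r', h', rfl⟩ a b ha hb hab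
  refine ⟨a * s + b * s', a * t + b * t', a * r + b * r', ?_, ?_⟩
  · have key : ∀ c c' : 𝕜, |a * c + b * c'| ≤ a * |c| + b * |c'| := fun c c' =>
      (abs_add_le _ _).trans_eq (by rw [abs_mul, abs_mul, abs_of_nonneg ha, abs_of_nonneg hb])
    nlinarith [key s s', key t t', key r r']
  · linear_combination (norm := module) hab • o

lemma exists_smul_eq_abs_smul (s : 𝕜) (u : E) :
    ∃ u' ∈ ({u, -u} : Set E), s • u = |s| • u' := by
  rcases le_total 0 s with hs | hs
  · exact ⟨u, by simp, by rw [abs_of_nonneg hs]⟩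
  · exact ⟨-u, by simp, by rw [abs_of_nonpos hs, neg_smul, smul_neg, neg_neg]⟩

lemma octahedron_subset_convexHull :
    octahedron 𝕜 o u v w ⊆ convexHull 𝕜 {o + u, o + -u, o + v, o + -v, o + w, o + -w} := by
  set V : Set E := {o + u, o + -u, o + v, o + -v, o + w, o + -w}
  rintro _ ⟨s, t, r, h, rfl⟩
  obtain ⟨u', hu', hsu⟩ := exists_smul_eq_abs_smul s u
  obtain ⟨v', hv', htv⟩ := exists_smul_eq_abs_smul t v
  obtain ⟨w', hw', hrw⟩ := exists_smul_eq_abs_smul r w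
  have hV : ∀ y ∈ ({u, -u} : Set E) ∪ {v, -v} ∪ {w, -w}, o + y ∈ convexHull 𝕜 V := by
    intro y hy
    apply subset_convexHull
    simp only [V, mem_union, mem_insert_iff, mem_singleton_iff] at hy ⊢
    tauto
  have ho : o ∈ convexHull 𝕜 V := by
    convert (convex_convexHull 𝕜 V) (hV u (by simp)) (hV (-u) (by simp))
      (inv_nonneg.2 zero_le_two) (inv_nonneg.2 zero_le_two) (by norm_num) using 1
    module
  -- `o + s • u + t • v + r • w = (1 - (|s| + |t| + |r|)) • o + |s| • (o + u') + ...`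
  have hx := (convex_convexHull 𝕜 V).sum_mem (t := Finset.univ)
    (w := ![1 - (|s| + |t| + |r|), |s|, |t|, |r|]) (z := ![o, o + u', o + v', o + w'])
    (by intro i _; fin_cases i <;> simp [h])
    (by simp only [Fin.sum_univ_four, Matrix.cons_val]; ring)
    (by intro i _; fin_cases i
        exacts [ho, hV u' (.inl (.inl hu')), hV v' (.inl (.inr hv')), hV w' (.inr hw')])
  convert hx using 1
  simp only [Fin.sum_univ_four, Matrix.cons_val]
  rw [hsu, htv, hrw]
  module

lemma octahedron_eq_convexHull :
    octahedron 𝕜 o u v w = convexHull 𝕜 {o + u, o + -u, o + v, o + -v, o + w, o + -w} := by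
  refine octahedron_subset_convexHull.antisymm (convexHull_min ?_ convex_octahedron)
  rintro _ (rfl | rfl | rfl | rfl | rfl | rfl)
  · exact ⟨1, 0, 0, by simp, by simp⟩
  · exact ⟨-1, 0, 0, by simp, by simp⟩
  · exact ⟨0, 1, 0, by simp, by simp⟩
  · exact ⟨0, -1, 0, by simp, by simp⟩
  · exact ⟨0, 0, 1, by simp, by simp⟩
  · exact ⟨0, 0, -1, by simp, by simp⟩

lemma encard_extremePoints_octahedron_le :
    (extremePoints 𝕜 (octahedron 𝕜 o u v w)).encard ≤ 6 := by
  classical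
  calc (extremePoints 𝕜 (octahedron 𝕜 o u v w)).encard
      ≤ (({o + u, o + -u, o + v, o + -v, o + w, o + -w} : Finset E) : Set E).encard := by
        apply encard_le_encard
        rw [octahedron_eq_convexHull]
        push_cast
        exact extremePoints_convexHull_subset
    _ ≤ 6 := by
        rw [encard_coe_eq_coe_finsetCard]
        exact_mod_cast Finset.card_le_six

end Octahedron

def IsUniqueMaxOn {α β : Type*} [LT β] (f : α → β) (s : Set α) (a : α) : Prop :=
  a ∈ s ∧ ∀ x ∈ s, x ≠ a → f x < f a

lemma IsUniqueMaxOn.le {α β : Type*} [Preorder β] {f : α → β} {s : Set α} {a x : α}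
    (h : IsUniqueMaxOn f s a) (hx : x ∈ s) : f x ≤ f a := by
  rcases eq_or_ne x a with rfl | hne
  exacts [le_rfl, (h.2 x hx hne).le]

section UniqueMax

variable {𝕜 E : Type*} [Field 𝕜] [LinearOrder 𝕜] [IsStrictOrderedRing 𝕜]
  [AddCommGroup E] [Module 𝕜 E] {ℓ : E →ₗ[𝕜] 𝕜}

lemma IsUniqueMaxOn.add {A B : Set E} {a b : E} (hA : IsUniqueMaxOn ℓ A a)
    (hB : IsUniqueMaxOn ℓ B b) : IsUniqueMaxOn ℓ (A + B) (a + b) := by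
  refine ⟨add_mem_add hA.1 hB.1, ?_⟩
  rintro _ ⟨x, hx, y, hy, rfl⟩ hne
  rw [map_add, map_add]
  rcases eq_or_ne x a with rfl | hxa
  · exact add_lt_add_of_le_of_lt le_rfl (hB.2 y hy fun h => hne (by rw [h]))
  · exact add_lt_add_of_lt_of_le (hA.2 x hx hxa) (hB.le hy)

lemma IsUniqueMaxOn.mem_extremePoints {A : Set E} {a : E} (h : IsUniqueMaxOn ℓ A a) :
    a ∈ extremePoints 𝕜 A := by
  refine ⟨h.1, fun y hy z hz ⟨θ, η, hθ, hη, hθη, hyz⟩ => ?_⟩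
  have hℓ : θ * ℓ y + η * ℓ z = θ * ℓ a + η * ℓ a := by
    rw [← add_mul, hθη, one_mul, ← hyz]; simp
  by_contra hya
  linarith [mul_lt_mul_of_pos_left (h.2 y hy hya) hθ, mul_le_mul_of_nonneg_left (h.le hz) hη.le]

lemma isUniqueMaxOn_octahedron {o u v w : E} (hv : |ℓ v| < ℓ u) (hw : |ℓ w| < ℓ u) :
    IsUniqueMaxOn ℓ (octahedron 𝕜 o u v w) (o + u) := by
  refine ⟨⟨1, 0, 0, by simp, by simp⟩, ?_⟩
  rintro _ ⟨s, t, r, h, rfl⟩ hne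
  have hu : 0 < ℓ u := (abs_nonneg _).trans_lt hv
  have hs : s * ℓ u ≤ |s| * ℓ u := mul_le_mul_of_nonneg_right (le_abs_self s) hu.le
  have ht : t * ℓ v ≤ |t| * |ℓ v| := (le_abs_self _).trans (abs_mul _ _).le
  have hr : r * ℓ w ≤ |r| * |ℓ w| := (le_abs_self _).trans (abs_mul _ _).le
  have hsum : (|s| + |t| + |r|) * ℓ u ≤ ℓ u := mul_le_of_le_one_left hu.le h
  simp only [map_add, map_smul, smul_eq_mul, add_assoc, add_lt_add_iff_left]
  by_contra! hge
  have ht0 : t = 0 := by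
    by_contra ht0
    nlinarith [mul_pos (abs_pos.2 ht0) (sub_pos.2 hv),
      mul_nonneg (abs_nonneg r) (sub_pos.2 hw).le]
  have hr0 : r = 0 := by
    by_contra hr0
    nlinarith [mul_nonneg (abs_nonneg t) (sub_pos.2 hv).le,
      mul_pos (abs_pos.2 hr0) (sub_pos.2 hw)]
  subst ht0 hr0
  have hs1 : s = 1 := by
    simp only [abs_zero, add_zero, zero_mul] at h hge
    exact le_antisymm ((le_abs_self s).trans h) (le_of_mul_le_mul_right (by linarith) hu)
  exact hne (by simp [hs1])

lemma Set.BijOn.mapsTo_extremePoints {F : Type*} [AddCommGroup F] [Module 𝕜 F]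
    {f : E →ᵃ[𝕜] F} {S : Set E} {T : Set F} (hf : BijOn f S T) (hS : Convex 𝕜 S) :
    MapsTo f (extremePoints 𝕜 S) (extremePoints 𝕜 T) := by
  refine fun x hx => ⟨hf.mapsTo hx.1, fun y' hy' z' hz' hxyz => ?_⟩
  obtain ⟨y, hy, rfl⟩ := hf.surjOn hy'
  obtain ⟨z, hz, rfl⟩ := hf.surjOn hz'
  rw [← image_openSegment] at hxyz
  obtain ⟨m, hm, hfm⟩ := hxyz
  obtain rfl := hf.injOn (hS.openSegment_subset hy hz hm) hx.1 hfm
  rw [hx.2 hy hz hm]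

lemma Set.BijOn.encard_extremePoints_le {F : Type*} [AddCommGroup F] [Module 𝕜 F]
    {f : E →ᵃ[𝕜] F} {S : Set E} {T : Set F} (hf : BijOn f S T) (hS : Convex 𝕜 S) :
    (extremePoints 𝕜 S).encard ≤ (extremePoints 𝕜 T).encard :=
  encard_le_encard_of_injOn (hf.mapsTo_extremePoints hS) (hf.injOn.mono fun _ hx => hx.1)

end UniqueMax

@[simps]
def AffineMap.applyₗ {k V1 P1 V2 : Type*} [CommRing k] [AddCommGroup V1] [Module k V1]
    [AddTorsor V1 P1] [AddCommGroup V2] [Module k V2] (p : P1) : (P1 →ᵃ[k] V2) →ₗ[k] V2 where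
  toFun f := f p
  map_add' _ _ := rfl
  map_smul' _ _ := rfl

lemma AffineMap.apply_pair {k V : Type*} [Ring k] [AddCommGroup V] [Module k V]
    (g : k × k →ᵃ[k] V) (x y : k) :
    g (x, y) = x • g.linear (1, 0) + y • g.linear (0, 1) + g 0 := by
  have : ((x, y) : k × k) = x • (1, 0) + y • (0, 1) := by simp
  rw [congrFun g.decomp, Pi.add_apply, this, map_add, map_smul, map_smul]

lemma convexHull_rectangle {p q : ℝ} (hp : 0 ≤ p) (hq : 0 ≤ q) :
    convexHull ℝ {(p, q), (p, -q), (-p, q), (-p, -q)} = Icc (-p) p ×ˢ Icc (-q) q := by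
  have : ({(p, q), (p, -q), (-p, q), (-p, -q)} : Set (ℝ × ℝ)) = {p, -p} ×ˢ {q, -q} := by
    ext ⟨x, y⟩
    simp only [mem_insert_iff, mem_singleton_iff, Prod.mk.injEq, mem_prod]
    tauto
  rw [this, convexHull_prod, convexHull_pair, convexHull_pair, segment_eq_uIcc,
    segment_eq_uIcc, uIcc_of_ge (by linarith), uIcc_of_ge (by linarith)]

noncomputable def rectangleHom (p q : ℝ) : Set ((ℝ × ℝ) →ᵃ[ℝ] ℝ) :=
  octahedron ℝ (AffineMap.const ℝ (ℝ × ℝ) 2⁻¹) ((2 * p)⁻¹ • AffineMap.fst)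
    ((2 * q)⁻¹ • AffineMap.snd) (AffineMap.const ℝ (ℝ × ℝ) 2⁻¹)

lemma mem_rectangleHom {p q : ℝ} {g : (ℝ × ℝ) →ᵃ[ℝ] ℝ} :
    g ∈ rectangleHom p q ↔ ∃ s t r : ℝ, |s| + |t| + |r| ≤ 1 ∧
      ∀ x y, g (x, y) = (1 + s * (x / p) + t * (y / q) + r) / 2 := by
  constructor
  · rintro ⟨s, t, r, h, rfl⟩
    refine ⟨s, t, r, h, fun x y => ?_⟩
    simp only [AffineMap.coe_add, AffineMap.coe_smul, AffineMap.coe_const, AffineMap.coe_fst,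
      AffineMap.coe_snd, Pi.add_apply, Pi.smul_apply, Function.const_apply, smul_eq_mul]
    ring
  · rintro ⟨s, t, r, h, hg⟩
    refine ⟨s, t, r, h, AffineMap.ext fun ⟨x, y⟩ => ?_⟩
    simp only [hg, AffineMap.coe_add, AffineMap.coe_smul, AffineMap.coe_const, AffineMap.coe_fst,
      AffineMap.coe_snd, Pi.add_apply, Pi.smul_apply, Function.const_apply, smul_eq_mul]
    ring

lemma setOf_image_rectangle_subset_Icc_eq_rectangleHom {p q : ℝ} (hp : 0 < p) (hq : 0 < q) :
    {g : (ℝ × ℝ) →ᵃ[ℝ] ℝ | g '' (Icc (-p) p ×ˢ Icc (-q) q) ⊆ Icc 0 1} =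
      rectangleHom p q := by
  ext g
  rw [mem_rectangleHom]
  constructor
  · intro hg
    have corner : ∀ x y, |x| = p → |y| = q → g (x, y) ∈ Icc (0 : ℝ) 1 := fun x y hx hy =>
      hg ⟨(x, y), ⟨abs_le.1 hx.le, abs_le.1 hy.le⟩, rfl⟩
    have h1 := corner p q (abs_of_pos hp) (abs_of_pos hq)
    have h2 := corner p (-q) (abs_of_pos hp) (by rw [abs_neg, abs_of_pos hq])
    have h3 := corner (-p) q (by rw [abs_neg, abs_of_pos hp]) (abs_of_pos hq)
    have h4 := corner (-p) (-q) (by rw [abs_neg, abs_of_pos hp])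
      (by rw [abs_neg, abs_of_pos hq])
    simp only [AffineMap.apply_pair, smul_eq_mul, mem_Icc] at h1 h2 h3 h4
    refine ⟨2 * p * g.linear (1, 0), 2 * q * g.linear (0, 1), 2 * g 0 - 1, ?_,
      fun x y => ?_⟩
    · rcases abs_cases (2 * p * g.linear (1, 0)) with ⟨ha, -⟩ | ⟨ha, -⟩ <;>
      rcases abs_cases (2 * q * g.linear (0, 1)) with ⟨hb, -⟩ | ⟨hb, -⟩ <;>
      rcases abs_cases (2 * g 0 - 1) with ⟨hc, -⟩ | ⟨hc, -⟩ <;>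
      linarith
    · rw [AffineMap.apply_pair, smul_eq_mul, smul_eq_mul]
      field_simp
      ring
  · rintro ⟨s, t, r, h, hg⟩ _ ⟨⟨x, y⟩, ⟨hx, hy⟩, rfl⟩
    have bound : ∀ {z m : ℝ} (c : ℝ), 0 < m → z ∈ Icc (-m) m →
        |c * (z / m)| ≤ |c| := by
      intro z m c hm hz
      rw [abs_mul]
      exact mul_le_of_le_one_right (abs_nonneg c)
        (by rw [abs_div, abs_of_pos hm, div_le_one hm]; exact abs_le.2 hz)
    have hs := abs_le.1 (bound s hp hx)
    have ht := abs_le.1 (bound t hq hy)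
    rw [hg, mem_Icc]
    constructor <;> linarith [neg_abs_le r, le_abs_self r]

lemma seven_le_encard_extremePoints_rectangleHom_add :
    7 ≤ (extremePoints ℝ (rectangleHom 2 1 + rectangleHom 1 2)).encard := by
  set c := AffineMap.const ℝ (ℝ × ℝ) (2⁻¹ : ℝ)
  set xP : (ℝ × ℝ) →ᵃ[ℝ] ℝ := ((2 : ℝ) * 2)⁻¹ • AffineMap.fst
  set yP : (ℝ × ℝ) →ᵃ[ℝ] ℝ := ((2 : ℝ) * 1)⁻¹ • AffineMap.snd
  set xQ : (ℝ × ℝ) →ᵃ[ℝ] ℝ := ((2 : ℝ) * 1)⁻¹ • AffineMap.fst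
  set yQ : (ℝ × ℝ) →ᵃ[ℝ] ℝ := ((2 : ℝ) * 2)⁻¹ • AffineMap.snd
  set S : Set ((ℝ × ℝ) →ᵃ[ℝ] ℝ) := {c + xP + (c + xQ), c + -xP + (c + -xQ),
    c + yP + (c + yQ), c + -yP + (c + -yQ), c + c + (c + c), c + -c + (c + -c), c + yP + (c + xQ)}
  have key : ∀ (ℓ : ((ℝ × ℝ) →ᵃ[ℝ] ℝ) →ₗ[ℝ] ℝ) {a b},
      IsUniqueMaxOn ℓ (rectangleHom 2 1) a → IsUniqueMaxOn ℓ (rectangleHom 1 2) b →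
      a + b ∈ extremePoints ℝ (rectangleHom 2 1 + rectangleHom 1 2) :=
    fun _ _ _ ha hb => (ha.add hb).mem_extremePoints
  have hS : S ⊆ extremePoints ℝ (rectangleHom 2 1 + rectangleHom 1 2) := by
    simp only [S, insert_subset_iff, singleton_subset_iff]
    refine ⟨key (AffineMap.applyₗ (3, 0)) ?_ ?_, key (AffineMap.applyₗ (-3, 0)) ?_ ?_,
      key (AffineMap.applyₗ (0, 3)) ?_ ?_, key (AffineMap.applyₗ (0, -3)) ?_ ?_,
      key (AffineMap.applyₗ (0, 0)) ?_ ?_, key (-AffineMap.applyₗ (0, 0)) ?_ ?_,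
      key (AffineMap.applyₗ (3, 3)) ?_ ?_⟩
    -- Each vertex is `o + u` in one of the six presentations of the octahedron.
    all_goals
      unfold rectangleHom
      first
      | with_reducible apply isUniqueMaxOn_octahedron
      | rw [← octahedron_neg]; with_reducible apply isUniqueMaxOn_octahedron
      | rw [octahedron_rotate]; with_reducible apply isUniqueMaxOn_octahedron
      | rw [octahedron_rotate, ← octahedron_neg]
        with_reducible apply isUniqueMaxOn_octahedron
      | rw [octahedron_rotate, octahedron_rotate]
        with_reducible apply isUniqueMaxOn_octahedron
      | rw [octahedron_rotate, octahedron_rotate, ← octahedron_neg]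
        with_reducible apply isUniqueMaxOn_octahedron
    all_goals norm_num [c, xP, yP, xQ, yQ]
  have h7 : (AffineMap.applyₗ ((1 : ℝ), (3 : ℝ)) '' S).encard = 7 := by
    norm_num [S, image_insert_eq, c, xP, yP, xQ, yQ, encard_insert_of_notMem]
  exact h7.symm.le.trans ((encard_image_le _ _).trans (encard_le_encard hS))

/-- For the rectangles
`P = conv{(2,1),(2,−1),(−2,1),(−2,−1)}`, `Q = conv{(1,2),(1,−2),(−1,2),(−1,−2)}` in `ℝ²`
and `R = [0,1] ⊆ ℝ`, there is no bijective affine map from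
`Hom(P,R) + Hom(Q,R)` onto `Hom(P+Q, R)`, the hom-sets being subsets of the
3-dimensional vector space of affine maps `ℝ² → ℝ` and `+` the Minkowski sum there. -/
theorem no_affine_bijection_homSum_homMinkowskiSum :
    ¬ ∃ φ : ((ℝ × ℝ) →ᵃ[ℝ] ℝ) →ᵃ[ℝ] ((ℝ × ℝ) →ᵃ[ℝ] ℝ),
      Set.BijOn ⇑φ
        ({g : (ℝ × ℝ) →ᵃ[ℝ] ℝ |
            ⇑g '' convexHull ℝ ({(2, 1), (2, -1), (-2, 1), (-2, -1)} : Set (ℝ × ℝ)) ⊆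
              Set.Icc (0 : ℝ) 1} +
          {g : (ℝ × ℝ) →ᵃ[ℝ] ℝ |
            ⇑g '' convexHull ℝ ({(1, 2), (1, -2), (-1, 2), (-1, -2)} : Set (ℝ × ℝ)) ⊆
              Set.Icc (0 : ℝ) 1})
        {h : (ℝ × ℝ) →ᵃ[ℝ] ℝ |
          ⇑h '' (convexHull ℝ ({(2, 1), (2, -1), (-2, 1), (-2, -1)} : Set (ℝ × ℝ)) +
              convexHull ℝ ({(1, 2), (1, -2), (-1, 2), (-1, -2)} : Set (ℝ × ℝ))) ⊆
            Set.Icc (0 : ℝ) 1} := by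
  rintro ⟨φ, hφ⟩
  have hPQ : Icc (-2 : ℝ) 2 ×ˢ Icc (-1 : ℝ) 1 + Icc (-1 : ℝ) 1 ×ˢ Icc (-2 : ℝ) 2 =
      Icc (-3 : ℝ) 3 ×ˢ Icc (-3 : ℝ) 3 := by
    rw [prod_add_prod_comm, Icc_add_Icc (by norm_num) (by norm_num),
      Icc_add_Icc (by norm_num) (by norm_num)]
    norm_num
  rw [convexHull_rectangle (p := 2) (q := 1) (by norm_num) (by norm_num),
    convexHull_rectangle (p := 1) (q := 2) (by norm_num) (by norm_num), hPQ,
    setOf_image_rectangle_subset_Icc_eq_rectangleHom (by norm_num) (by norm_num),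
    setOf_image_rectangle_subset_Icc_eq_rectangleHom (by norm_num) (by norm_num),
    setOf_image_rectangle_subset_Icc_eq_rectangleHom (by norm_num) (by norm_num)] at hφ
  have hle := hφ.encard_extremePoints_le (convex_octahedron.add convex_octahedron)
  have h6 : (extremePoints ℝ (rectangleHom 3 3)).encard ≤ 6 :=
    encard_extremePoints_octahedron_le
  exact absurd ((seven_le_encard_extremePoints_rectangleHom_add.trans hle).trans h6)
    (by norm_num)
end

section
/- Let U, V, W be finite-dimensional real vector spaces, let Z ⊆ U, X ⊆ V, Y ⊆ W be nonempty convex compact sets with Z affinely spanning U, and let f : X → Y be an affine map. Then the set K = {g : g an affine map U → V with g(Z) ⊆ X and f ∘ g constant on Z} is a convex compact subset of the vector space of affine maps U → V. Moreover, if Z, X, Y are polytopes and f is affine, then K is a polytope (the convex hull of a finite set) in that vector space. -/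
/-!
`K` is the intersection of `{g | g(Z) ⊆ X}` with the linear subspace of maps `g` for which `f ∘ g`
is constant (an affine map constant on a spanning set is constant). The first set is convex and
closed, and bounded because `g` is determined by its values on a finite affine basis inside `Z`.
For polytopes, `g(Z) ⊆ X` only has to be checked on the vertices of `Z`, so evaluation at the
vertices embeds `K` linearly into a power of the polytope `X`, cut by a linear subspace. Slicing a
polytope by a hyperplane `L = c` gives a polytope: the convex hull of the points where segments
between vertices on opposite sides cross the hyperplane (Fourier–Motzkin elimination).
-/

open Set

lemma Finset.sum_filter_le_add_sum_filter_lt {ι α M : Type*} [LinearOrder α] [AddCommMonoid M]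
    (s : Finset ι) (f : ι → α) (a : α) (g : ι → M) :
    ∑ x ∈ s with f x ≤ a, g x + ∑ x ∈ s with a < f x, g x = ∑ x ∈ s, g x := by
  simp only [← not_le, Finset.sum_filter_add_sum_filter_not]

section LevelCrossing

variable {𝕜 E : Type*} [Field 𝕜] [AddCommGroup E] [Module 𝕜 E] {L : E →ₗ[𝕜] 𝕜} {c : 𝕜}

variable (L c) in
/-- The point where the segment `[u, v]` meets the level set `L = c`; when `L u = L v` the
division by zero makes it `u`. -/
noncomputable def levelCrossing (u v : E) : E :=
  AffineMap.lineMap u v ((c - L u) / (L v - L u))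

lemma levelCrossing_self (u : E) : levelCrossing L c u u = u :=
  AffineMap.lineMap_same_apply u _

lemma sub_smul_levelCrossing {u v : E} (h : L u ≠ L v) :
    (L v - L u) • levelCrossing L c u v = (L v - c) • u + (c - L u) • v := by
  have h' : L v - L u ≠ 0 := sub_ne_zero.2 h.symm
  rw [levelCrossing, AffineMap.lineMap_apply_module, smul_add, smul_smul, smul_smul]
  congr 2
  · field_simp
    ring
  · field_simp

lemma Finset.sum_product_inv_smul_add_smul {ι F : Type*} [AddCommGroup F] [Module 𝕜 F]
    {N P : Finset ι} {α β : ι → 𝕜} {A : 𝕜} (hA : A ≠ 0) (hα : ∑ i ∈ N, α i = A)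
    (hβ : ∑ j ∈ P, β j = A) (p q : ι → F) :
    ∑ x ∈ N ×ˢ P, A⁻¹ • (β x.2 • p x.1 + α x.1 • q x.2) = ∑ i ∈ N, p i + ∑ j ∈ P, q j := by
  simp only [smul_add, Finset.sum_add_distrib, smul_smul]
  rw [Finset.sum_product, Finset.sum_product_right]
  simp only [← Finset.sum_smul, ← Finset.mul_sum, hα, hβ, inv_mul_cancel₀ hA, one_smul]

variable [LinearOrder 𝕜]

variable (L c) in
def levelCrossings (S : Set E) : Set E :=
  image2 (levelCrossing L c) (S ∩ {y | L y ≤ c}) (S ∩ {y | c ≤ L y})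

lemma mem_levelCrossings_of_apply_eq {S : Set E} {y : E} (hy : y ∈ S) (hyc : L y = c) :
    y ∈ levelCrossings L c S :=
  ⟨y, ⟨hy, hyc.le⟩, y, ⟨hy, hyc.ge⟩, levelCrossing_self y⟩

variable [IsStrictOrderedRing 𝕜]

lemma apply_levelCrossing {u v : E} (hu : L u ≤ c) (hv : c ≤ L v) :
    L (levelCrossing L c u v) = c := by
  rw [levelCrossing, AffineMap.lineMap_apply_module, map_add, map_smul, map_smul, smul_eq_mul,
    smul_eq_mul]
  rcases eq_or_ne (L v - L u) 0 with h | h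
  · rw [h, div_zero]; simp only [sub_zero, one_mul, zero_mul, add_zero]; linarith
  · field_simp; ring

lemma levelCrossing_mem_segment {u v : E} (hu : L u ≤ c) (hv : c ≤ L v) :
    levelCrossing L c u v ∈ segment 𝕜 u v := by
  rw [segment_eq_image_lineMap]
  exact ⟨_, ⟨div_nonneg (by linarith) (by linarith), div_le_one_of_le₀ (by linarith)
    (by linarith)⟩, rfl⟩

lemma levelCrossings_subset (S : Set E) :
    levelCrossings L c S ⊆ convexHull 𝕜 S ∩ {x | L x = c} := by
  rintro _ ⟨u, ⟨huS, hu⟩, v, ⟨hvS, hv⟩, rfl⟩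
  exact ⟨segment_subset_convexHull huS hvS (levelCrossing_mem_segment hu hv),
    apply_levelCrossing hu hv⟩

lemma sum_smul_mem_convexHull_levelCrossings_of_apply_eq {s : Finset E} {w : E → 𝕜}
    (hw₀ : ∀ y ∈ s, 0 ≤ w y) (hw₁ : ∑ y ∈ s, w y = 1) (hsupp : ∀ y ∈ s, w y ≠ 0 → L y = c) :
    ∑ y ∈ s, w y • y ∈ convexHull 𝕜 (levelCrossings L c s) := by
  classical
  rw [← Finset.sum_filter_of_ne (p := (L · = c)) fun y hy h =>
    hsupp y hy (left_ne_zero_of_smul h)]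
  refine (convex_convexHull 𝕜 _).sum_mem (fun y hy => hw₀ y (Finset.mem_filter.1 hy).1)
    ((Finset.sum_filter_of_ne hsupp).trans hw₁) fun y hy => ?_
  obtain ⟨hys, hyc⟩ := Finset.mem_filter.1 hy
  exact subset_convexHull 𝕜 _ (mem_levelCrossings_of_apply_eq hys hyc)

/-- Pairing every `u` below the level with every `v` above it, with weight
`w u * w v * (L v - L u) / A`, recovers the original combination from the crossing points. -/
lemma sum_smul_mem_convexHull_levelCrossings_of_pos {s : Finset E} {w : E → 𝕜}
    (hw₀ : ∀ y ∈ s, 0 ≤ w y) (hw₁ : ∑ y ∈ s, w y = 1)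
    (hA : 0 < ∑ v ∈ s with c < L v, w v * (L v - c))
    (hbalance : ∑ u ∈ s with L u ≤ c, w u * (c - L u) = ∑ v ∈ s with c < L v, w v * (L v - c)) :
    ∑ y ∈ s, w y • y ∈ convexHull 𝕜 (levelCrossings L c s) := by
  classical
  set N := s.filter (L · ≤ c)
  set P := s.filter (c < L ·)
  set A := ∑ v ∈ P, w v * (L v - c)
  have hNP : ∀ p ∈ N ×ˢ P, p.1 ∈ s ∧ p.2 ∈ s ∧ L p.1 ≤ c ∧ c < L p.2 := fun p hp => by
    simp only [N, P, Finset.mem_product, Finset.mem_filter] at hp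
    exact ⟨hp.1.1, hp.2.1, hp.1.2, hp.2.2⟩
  set μ : E × E → 𝕜 := fun p =>
    A⁻¹ • ((w p.2 * (L p.2 - c)) • w p.1 + (w p.1 * (c - L p.1)) • w p.2)
  have hμ : ∀ p, μ p = A⁻¹ * (w p.1 * w p.2) * (L p.2 - L p.1) := fun p => by
    simp only [μ, smul_eq_mul]; ring
  have hterm : ∀ p ∈ N ×ˢ P, μ p • levelCrossing L c p.1 p.2 =
      A⁻¹ • ((w p.2 * (L p.2 - c)) • (w p.1 • p.1) + (w p.1 * (c - L p.1)) • (w p.2 • p.2)) := by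
    intro p hp
    obtain ⟨-, -, hu, hv⟩ := hNP p hp
    rw [hμ, mul_smul, sub_smul_levelCrossing (hu.trans_lt hv).ne]
    module
  have hμ₁ : ∑ p ∈ N ×ˢ P, μ p = 1 := by
    rw [Finset.sum_product_inv_smul_add_smul hA.ne' hbalance rfl,
      Finset.sum_filter_le_add_sum_filter_lt, hw₁]
  have hμx : ∑ p ∈ N ×ˢ P, μ p • levelCrossing L c p.1 p.2 = ∑ y ∈ s, w y • y := by
    rw [Finset.sum_congr rfl hterm, Finset.sum_product_inv_smul_add_smul hA.ne' hbalance rfl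
      (fun y => w y • y) (fun y => w y • y), Finset.sum_filter_le_add_sum_filter_lt]
  rw [← hμx]
  refine (convex_convexHull 𝕜 _).sum_mem (fun p hp => ?_) hμ₁ fun p hp => ?_
  · obtain ⟨hus, hvs, hu, hv⟩ := hNP p hp
    rw [hμ]
    exact mul_nonneg (mul_nonneg (inv_nonneg.2 hA.le) (mul_nonneg (hw₀ _ hus) (hw₀ _ hvs)))
      (sub_nonneg.2 (hu.trans hv.le))
  · obtain ⟨hus, hvs, hu, hv⟩ := hNP p hp
    exact subset_convexHull 𝕜 _ ⟨p.1, ⟨hus, hu⟩, p.2, ⟨hvs, hv.le⟩, rfl⟩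

lemma sum_smul_mem_convexHull_levelCrossings {s : Finset E} {w : E → 𝕜}
    (hw₀ : ∀ y ∈ s, 0 ≤ w y) (hw₁ : ∑ y ∈ s, w y = 1) (hc : ∑ y ∈ s, w y * (L y - c) = 0) :
    ∑ y ∈ s, w y • y ∈ convexHull 𝕜 (levelCrossings L c s) := by
  classical
  have hsplit := Finset.sum_filter_le_add_sum_filter_lt s L c fun y => w y * (L y - c)
  have hbalance : ∑ u ∈ s with L u ≤ c, w u * (c - L u) =
      ∑ v ∈ s with c < L v, w v * (L v - c) := by
    have hneg : ∑ u ∈ s with L u ≤ c, w u * (c - L u) =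
        -∑ u ∈ s with L u ≤ c, w u * (L u - c) := by
      rw [← Finset.sum_neg_distrib]; congr! 1; ring
    linarith
  have hN : ∀ u ∈ {x ∈ s | L x ≤ c}, 0 ≤ w u * (c - L u) := fun u hu =>
    mul_nonneg (hw₀ u (Finset.mem_filter.1 hu).1) (sub_nonneg.2 (Finset.mem_filter.1 hu).2)
  have hP : ∀ v ∈ {x ∈ s | c < L x}, 0 ≤ w v * (L v - c) := fun v hv =>
    mul_nonneg (hw₀ v (Finset.mem_filter.1 hv).1) (sub_nonneg.2 (Finset.mem_filter.1 hv).2.le)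
  rcases (Finset.sum_nonneg hP).eq_or_lt with hA | hA
  · refine sum_smul_mem_convexHull_levelCrossings_of_apply_eq hw₀ hw₁ fun y hy hwy => ?_
    rcases lt_trichotomy (L y) c with hlt | heq | hgt
    · have := (Finset.sum_eq_zero_iff_of_nonneg hN).1 (hbalance.trans hA.symm) y
        (Finset.mem_filter.2 ⟨hy, hlt.le⟩)
      exact absurd this (mul_ne_zero hwy (sub_ne_zero.2 hlt.ne'))
    · exact heq
    · have := (Finset.sum_eq_zero_iff_of_nonneg hP).1 hA.symm y (Finset.mem_filter.2 ⟨hy, hgt⟩)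
      exact absurd this (mul_ne_zero hwy (sub_ne_zero.2 hgt.ne'))
  · exact sum_smul_mem_convexHull_levelCrossings_of_pos hw₀ hw₁ hA hbalance

lemma convexHull_inter_levelSet (s : Finset E) :
    convexHull 𝕜 (s : Set E) ∩ {x | L x = c} = convexHull 𝕜 (levelCrossings L c s) := by
  refine Subset.antisymm (fun x ⟨hx, hLx⟩ => ?_) (convexHull_min (levelCrossings_subset _)
    ((convex_convexHull 𝕜 _).inter (convex_hyperplane L.isLinear c)))
  obtain ⟨w, hw₀, hw₁, rfl⟩ := Finset.mem_convexHull'.1 hx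
  refine sum_smul_mem_convexHull_levelCrossings hw₀ hw₁ ?_
  simp only [mul_sub, Finset.sum_sub_distrib, ← Finset.sum_mul, hw₁, one_mul]
  simpa [map_sum, map_smul] using sub_eq_zero.2 hLx

end LevelCrossing

section Polytope

variable {𝕜 E F : Type*} [Field 𝕜] [LinearOrder 𝕜] [IsStrictOrderedRing 𝕜]
  [AddCommGroup E] [Module 𝕜 E] [AddCommGroup F] [Module 𝕜 F]

variable (𝕜) in
def IsPolytope (K : Set E) : Prop := ∃ S : Set E, S.Finite ∧ K = convexHull 𝕜 S

lemma IsPolytope.inter_levelSet {K : Set E} (hK : IsPolytope 𝕜 K) (L : E →ₗ[𝕜] 𝕜) (c : 𝕜) :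
    IsPolytope 𝕜 (K ∩ {x | L x = c}) := by
  obtain ⟨S, hS, rfl⟩ := hK
  lift S to Finset E using hS
  exact ⟨_, (S.finite_toSet.inter_of_left _).image2 _ (S.finite_toSet.inter_of_left _),
    convexHull_inter_levelSet S⟩

lemma IsPolytope.inter_biInter_ker {ι : Type*} {K : Set E} (hK : IsPolytope 𝕜 K)
    (L : ι → E →ₗ[𝕜] 𝕜) (I : Finset ι) : IsPolytope 𝕜 (K ∩ ⋂ i ∈ I, {x | L i x = 0}) := by
  classical
  induction I using Finset.induction_on with
  | empty => simpa using hK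
  | insert j I _ ih =>
    rw [Finset.set_biInter_insert, inter_left_comm, inter_comm]
    exact ih.inter_levelSet (L j) 0

lemma IsPolytope.inter_submodule {K : Set E} (hK : IsPolytope 𝕜 K) (p : Submodule 𝕜 E)
    [FiniteDimensional 𝕜 (E ⧸ p)] : IsPolytope 𝕜 (K ∩ p) := by
  set b := Module.finBasis 𝕜 (E ⧸ p)
  have hp : (p : Set E) = ⋂ i ∈ Finset.univ, {x | (b.coord i ∘ₗ p.mkQ) x = 0} := by
    ext x
    simp only [Finset.mem_univ, iInter_true, mem_iInter, mem_ofPred_eq, LinearMap.comp_apply,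
      Submodule.mkQ_apply, b.forall_coord_eq_zero_iff, Submodule.Quotient.mk_eq_zero,
      SetLike.mem_coe]
  rw [hp]
  exact hK.inter_biInter_ker _ _

lemma IsPolytope.preimage [FiniteDimensional 𝕜 F] {K : Set F} (hK : IsPolytope 𝕜 K)
    {e : E →ₗ[𝕜] F} (he : Function.Injective e) : IsPolytope 𝕜 (e ⁻¹' K) := by
  obtain ⟨T, hT, hKT⟩ := hK.inter_submodule (LinearMap.range e)
  have hTe : T ⊆ range e := by
    rw [← LinearMap.coe_range]
    exact (subset_convexHull 𝕜 T).trans (hKT.symm.subset.trans inter_subset_right)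
  refine ⟨e ⁻¹' T, hT.preimage he.injOn, he.image_injective ?_⟩
  rw [LinearMap.image_convexHull, image_preimage_eq_of_subset hTe, ← hKT,
    image_preimage_eq_inter_range, LinearMap.coe_range]

end Polytope

section AffineMaps

variable {U V W : Type*} [NormedAddCommGroup U] [NormedSpace ℝ U]
  [NormedAddCommGroup V] [NormedSpace ℝ V] [AddCommGroup W] [Module ℝ W]

variable (V) in
def ContinuousAffineMap.evalOn (s : Set U) : (U →ᴬ[ℝ] V) →ₗ[ℝ] (s → V) where
  toFun g z := g z
  map_add' _ _ := rfl
  map_smul' _ _ := rfl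

lemma ContinuousAffineMap.evalOn_injective {s : Set U} (hs : affineSpan ℝ s = ⊤) :
    Function.Injective (evalOn V s) := fun _ _ h =>
  toAffineMap_injective <| AffineMap.ext_on hs fun z hz => congrFun h ⟨z, hz⟩

lemma setOf_mapsTo_eq_preimage_evalOn (s : Set U) (X : Set V) :
    {g : U →ᴬ[ℝ] V | MapsTo g s X} = ContinuousAffineMap.evalOn V s ⁻¹' univ.pi fun _ => X := by
  ext g
  simp [MapsTo, ContinuousAffineMap.evalOn]

lemma convex_setOf_mapsTo (s : Set U) {X : Set V} (hX : Convex ℝ X) :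
    Convex ℝ {g : U →ᴬ[ℝ] V | MapsTo g s X} := by
  rw [setOf_mapsTo_eq_preimage_evalOn]
  exact (convex_pi fun _ _ => hX).linear_preimage _

lemma setOf_mapsTo_convexHull (s : Set U) {X : Set V} (hX : Convex ℝ X) :
    {g : U →ᴬ[ℝ] V | MapsTo g (convexHull ℝ s) X} = {g : U →ᴬ[ℝ] V | MapsTo g s X} := by
  ext g
  refine ⟨fun h => h.mono_left (subset_convexHull ℝ s), fun h => ?_⟩
  rw [mem_ofPred_eq, mapsTo_iff_image_subset, ← ContinuousAffineMap.coe_toAffineMap,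
    AffineMap.image_convexHull]
  exact convexHull_min (mapsTo_iff_image_subset.1 h) hX

variable (U) in
def mapsIntoFiber (f : V →ᵃ[ℝ] W) : Submodule ℝ (U →ᴬ[ℝ] V) where
  carrier := {g | ∃ w, ∀ u, f (g u) = w}
  zero_mem' := ⟨f 0, fun _ => rfl⟩
  add_mem' := by
    rintro g₁ g₂ ⟨w₁, h₁⟩ ⟨w₂, h₂⟩
    refine ⟨w₁ + w₂ - f 0, fun u => ?_⟩
    have := congrFun f.decomp
    simp only [Pi.add_apply] at this
    rw [ContinuousAffineMap.add_apply, this, map_add, ← h₁ u, ← h₂ u, this (g₁ u), this (g₂ u)]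
    abel
  smul_mem' := by
    rintro a g ⟨w, h⟩
    refine ⟨a • (w - f 0) + f 0, fun u => ?_⟩
    have := congrFun f.decomp
    simp only [Pi.add_apply] at this
    rw [ContinuousAffineMap.smul_apply, this, map_smul, ← h u, this (g u), add_sub_cancel_right]

lemma setOf_image_subset_and_exists_eq {Z : Set U} (hZ : affineSpan ℝ Z = ⊤) {X : Set V}
    {Y : Set W} {f : V →ᵃ[ℝ] W} (hf : f '' X ⊆ Y) :
    {g : U →ᴬ[ℝ] V | g '' Z ⊆ X ∧ ∃ y ∈ Y, ∀ z ∈ Z, f (g z) = y} =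
      {g : U →ᴬ[ℝ] V | MapsTo g Z X} ∩ mapsIntoFiber U f := by
  ext g
  simp only [mem_inter_iff, mem_ofPred_eq, ← mapsTo_iff_image_subset]
  refine and_congr_right fun hgX => ⟨fun ⟨y, _, hy⟩ => ⟨y, fun u => ?_⟩, fun ⟨w, hw⟩ => ?_⟩
  · exact congrArg (· u) (AffineMap.ext_on (f := f.comp (g : U →ᵃ[ℝ] V))
      (g := AffineMap.const ℝ U y) hZ hy)
  · obtain ⟨z, hz⟩ := AffineSubspace.nonempty_of_affineSpan_eq_top ℝ U U hZ
    exact ⟨w, hw z ▸ hf (mem_image_of_mem f (hgX hz)), fun z _ => hw z⟩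

variable [FiniteDimensional ℝ V]

lemma isPolytope_setOf_mapsTo {s : Set U} (hs : s.Finite) (hspan : affineSpan ℝ s = ⊤)
    {X : Set V} (hX : IsPolytope ℝ X) : IsPolytope ℝ {g : U →ᴬ[ℝ] V | MapsTo g s X} := by
  obtain ⟨t, ht, rfl⟩ := hX
  have := hs.to_subtype
  rw [setOf_mapsTo_eq_preimage_evalOn]
  exact IsPolytope.preimage ⟨univ.pi fun _ => t, Finite.pi fun _ => ht, (convexHull_pi _ _).symm⟩
    (ContinuousAffineMap.evalOn_injective hspan)

variable [FiniteDimensional ℝ U]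

instance : FiniteDimensional ℝ (U →ᴬ[ℝ] V) :=
  (ContinuousAffineMap.decompLinearIsometryEquiv ℝ ℝ U V).toLinearEquiv.symm.finiteDimensional

lemma isClosed_setOf_mapsTo (s : Set U) {X : Set V} (hX : IsClosed X) :
    IsClosed {g : U →ᴬ[ℝ] V | MapsTo g s X} := by
  rw [setOf_mapsTo_eq_preimage_evalOn]
  exact (isClosed_set_pi fun _ _ => hX).preimage (LinearMap.continuous_of_finiteDimensional _)

lemma isCompact_setOf_mapsTo {s : Set U} (hs : affineSpan ℝ s = ⊤) {X : Set V}
    (hX : IsCompact X) : IsCompact {g : U →ᴬ[ℝ] V | MapsTo g s X} := by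
  obtain ⟨b, hbs, hb, hbind⟩ := exists_affineIndependent ℝ U s
  rw [hs] at hb
  have := (finite_set_of_fin_dim_affineIndependent ℝ hbind).to_subtype
  have hemb := LinearMap.isClosedEmbedding_of_injective
    (LinearMap.ker_eq_bot.2 (ContinuousAffineMap.evalOn_injective (V := V) hb))
  refine (hemb.isCompact_preimage (isCompact_univ_pi fun _ => hX)).of_isClosed_subset
    (isClosed_setOf_mapsTo s hX.isClosed) fun g hg => ?_
  rw [← setOf_mapsTo_eq_preimage_evalOn]
  exact hg.mono_left hbs

end AffineMaps

theorem kernelFunctor_convex_compact_polytope_general {U V W : Type*}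
    [NormedAddCommGroup U] [NormedSpace ℝ U] [FiniteDimensional ℝ U]
    [NormedAddCommGroup V] [NormedSpace ℝ V] [FiniteDimensional ℝ V]
    [NormedAddCommGroup W] [NormedSpace ℝ W]
    (Z : Set U) (X : Set V) (Y : Set W)
    (hZspan : affineSpan ℝ Z = ⊤)
    (hXconv : Convex ℝ X) (hXcomp : IsCompact X)
    (f : V →ᵃ[ℝ] W) (hf : ⇑f '' X ⊆ Y) :
    Convex ℝ {g : U →ᴬ[ℝ] V | ⇑g '' Z ⊆ X ∧ ∃ y ∈ Y, ∀ z ∈ Z, f (g z) = y} ∧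
    IsCompact {g : U →ᴬ[ℝ] V | ⇑g '' Z ⊆ X ∧ ∃ y ∈ Y, ∀ z ∈ Z, f (g z) = y} ∧
    (((∃ s : Finset U, Z = convexHull ℝ (s : Set U)) ∧
      (∃ s : Finset V, X = convexHull ℝ (s : Set V)) ∧
      (∃ s : Finset W, Y = convexHull ℝ (s : Set W))) →
      ∃ S : Set (U →ᴬ[ℝ] V), S.Finite ∧
        {g : U →ᴬ[ℝ] V | ⇑g '' Z ⊆ X ∧ ∃ y ∈ Y, ∀ z ∈ Z, f (g z) = y} =
          convexHull ℝ S) := by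
  rw [setOf_image_subset_and_exists_eq hZspan hf]
  refine ⟨(convex_setOf_mapsTo Z hXconv).inter (mapsIntoFiber U f).convex,
    (isCompact_setOf_mapsTo hZspan hXcomp).inter_right
      (mapsIntoFiber U f).closed_of_finiteDimensional, ?_⟩
  rintro ⟨⟨s, rfl⟩, ⟨t, rfl⟩, -⟩
  rw [affineSpan_convexHull] at hZspan
  rw [setOf_mapsTo_convexHull _ hXconv]
  exact (isPolytope_setOf_mapsTo s.finite_toSet hZspan
    ⟨(t : Set V), t.finite_toSet, rfl⟩).inter_submodule _

/-- Let `Z ⊆ U`, `X ⊆ V`, `Y ⊆ W` be nonempty convex compact sets in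
finite-dimensional real vector spaces, with `Z` affinely spanning `U`, and let
`f : X → Y` be affine. Then
`K = {g : affine U → V | g(Z) ⊆ X and f ∘ g constant on Z}` is a convex compact
subset of the vector space of affine maps `U → V`; moreover if `Z, X, Y` are
polytopes then `K` is a polytope there. -/
theorem kernelFunctor_convex_compact_polytope {U V W : Type*}
    [NormedAddCommGroup U] [NormedSpace ℝ U] [FiniteDimensional ℝ U]
    [NormedAddCommGroup V] [NormedSpace ℝ V] [FiniteDimensional ℝ V]
    [NormedAddCommGroup W] [NormedSpace ℝ W] [FiniteDimensional ℝ W]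
    (Z : Set U) (X : Set V) (Y : Set W)
    (hZne : Z.Nonempty) (hZconv : Convex ℝ Z) (hZcomp : IsCompact Z)
    (hZspan : affineSpan ℝ Z = ⊤)
    (hXne : X.Nonempty) (hXconv : Convex ℝ X) (hXcomp : IsCompact X)
    (hYne : Y.Nonempty) (hYconv : Convex ℝ Y) (hYcomp : IsCompact Y)
    (f : V →ᵃ[ℝ] W) (hf : ⇑f '' X ⊆ Y) :
    Convex ℝ {g : U →ᴬ[ℝ] V | ⇑g '' Z ⊆ X ∧ ∃ y ∈ Y, ∀ z ∈ Z, f (g z) = y} ∧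
    IsCompact {g : U →ᴬ[ℝ] V | ⇑g '' Z ⊆ X ∧ ∃ y ∈ Y, ∀ z ∈ Z, f (g z) = y} ∧
    (((∃ s : Finset U, Z = convexHull ℝ (s : Set U)) ∧
      (∃ s : Finset V, X = convexHull ℝ (s : Set V)) ∧
      (∃ s : Finset W, Y = convexHull ℝ (s : Set W))) →
      ∃ S : Set (U →ᴬ[ℝ] V), S.Finite ∧
        {g : U →ᴬ[ℝ] V | ⇑g '' Z ⊆ X ∧ ∃ y ∈ Y, ∀ z ∈ Z, f (g z) = y} =
          convexHull ℝ S) :=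
  kernelFunctor_convex_compact_polytope_general Z X Y hZspan hXconv hXcomp f hf
end

section
/- Let U, V, W be finite-dimensional real vector spaces, let Z ⊆ U, X ⊆ V, Y ⊆ W be nonempty convex compact sets with Z affinely spanning U, and let f : X → Y be an affine map. Let K = {g : g an affine map U → V with g(Z) ⊆ X and f ∘ g constant on Z}. Then dim K = (dim Z + 1)·(dim X − dim f(X)) + dim f(X). -/
/-!
Fix `x₀` in the relative interior of `X` and let `D` be the direction of `Aff(X)`. Since `Z`
spans `U`, every `g ∈ K` maps all of `U` into `Aff(X)` and its linear part takes values in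
`D ∩ ker f⃗`; so `K` lies in the affine subspace through the constant map `x₀` with direction
`{h | h 0 ∈ D, h⃗(U) ⊆ D ∩ ker f⃗}`. Conversely `Z` is compact, so shrinking any element of that
subspace towards the constant map `x₀` lands in `K`; hence it is exactly `Aff(K)`. Its dimension
is `dim D + dim U · dim (D ∩ ker f⃗)`, and rank–nullity on `D` gives
`dim D = dim f(X) + dim (D ∩ ker f⃗)`.
-/

open Set Pointwise

open Module

section AffineSpan

variable {k V₁ P₁ V₂ P₂ : Type*} [Ring k] [AddCommGroup V₁] [Module k V₁] [AddTorsor V₁ P₁]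
  [AddCommGroup V₂] [Module k V₂] [AddTorsor V₂ P₂]

theorem AffineMap.apply_mem_affineSpan_of_image_subset {g : P₁ →ᵃ[k] P₂} {Z : Set P₁}
    {S : Set P₂} (hZ : affineSpan k Z = ⊤) (h : g '' Z ⊆ S) (p : P₁) :
    g p ∈ affineSpan k S := by
  have hp : g p ∈ (affineSpan k Z).map g := by
    rw [hZ]
    exact AffineSubspace.mem_map.2 ⟨p, trivial, rfl⟩
  rw [AffineSubspace.map_span] at hp
  exact affineSpan_mono k h hp

theorem AffineMap.linear_mem_direction_of_image_subset {g : P₁ →ᵃ[k] P₂} {Z : Set P₁}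
    {S : Set P₂} (hZ : affineSpan k Z = ⊤) (h : g '' Z ⊆ S) (v : V₁) :
    g.linear v ∈ (affineSpan k S).direction := by
  obtain ⟨p⟩ : Nonempty P₁ := inferInstance
  rw [← vadd_vsub v p, g.linearMap_vsub]
  exact AffineSubspace.vsub_mem_direction (g.apply_mem_affineSpan_of_image_subset hZ h _)
    (g.apply_mem_affineSpan_of_image_subset hZ h p)

end AffineSpan

theorem AffineSubspace.le_affineSpan_of_forall_lineMap_mem {k V P : Type*} [Field k]
    [AddCommGroup V] [Module k V] [AddTorsor V P] {S : Set P} {A : AffineSubspace k P}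
    {p : P} (hp : p ∈ S) (h : ∀ q ∈ A, ∃ t : k, t ≠ 0 ∧ AffineMap.lineMap p q t ∈ S) :
    A ≤ affineSpan k S := by
  intro q hq
  obtain ⟨t, ht, hqt⟩ := h q hq
  have := AffineMap.lineMap_mem t⁻¹ (subset_affineSpan k S hp) (subset_affineSpan k S hqt)
  rwa [AffineMap.lineMap_lineMap_right, inv_mul_cancel₀ ht, AffineMap.lineMap_apply_one] at this

theorem Submodule.finrank_map_add_finrank_inf_ker {K V W : Type*} [DivisionRing K]
    [AddCommGroup V] [Module K V] [AddCommGroup W] [Module K W] (f : V →ₗ[K] W)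
    (D : Submodule K V) [FiniteDimensional K D] :
    finrank K (D.map f) + finrank K ↥(D ⊓ LinearMap.ker f) = finrank K D := by
  have h := (f.domRestrict D).finrank_range_add_finrank_ker
  have hker : (D ⊓ LinearMap.ker f).comap D.subtype = (LinearMap.ker f).comap D.subtype := by
    rw [Submodule.comap_inf, Submodule.comap_subtype_self, top_inf_eq]
  rwa [LinearMap.range_domRestrict, LinearMap.ker_domRestrict, ← hker,
    (Submodule.comapSubtypeEquivOfLe inf_le_left).finrank_eq] at h

theorem convDim_of_affineSpan_eq_top {V : Type*} [AddCommGroup V] [Module ℝ V] {s : Set V}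
    (hs : affineSpan ℝ s = ⊤) : convDim s = finrank ℝ V := by
  rw [convDim, hs, AffineSubspace.direction_top, finrank_top]

theorem convDim_image {V W : Type*} [AddCommGroup V] [Module ℝ V] [AddCommGroup W]
    [Module ℝ W] (f : V →ᵃ[ℝ] W) (s : Set V) :
    convDim (f '' s) = finrank ℝ ((affineSpan ℝ s).direction.map f.linear) := by
  rw [convDim, ← AffineSubspace.map_span, AffineSubspace.map_direction]

section IntrinsicInterior

variable {V : Type*} [SeminormedAddCommGroup V] [NormedSpace ℝ V] {X : Set V} {x₀ : V}

theorem exists_pos_forall_add_mem_of_mem_intrinsicInterior (hx₀ : x₀ ∈ intrinsicInterior ℝ X) :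
    ∃ ε > 0, ∀ v ∈ (affineSpan ℝ X).direction, ‖v‖ < ε → x₀ + v ∈ X := by
  obtain ⟨p, hp, rfl⟩ := hx₀
  obtain ⟨ε, hε, hball⟩ := Metric.mem_nhds_iff.1 (mem_interior_iff_mem_nhds.1 hp)
  refine ⟨ε, hε, fun v hv hvε => ?_⟩
  have hvp : v +ᵥ (p : V) ∈ affineSpan ℝ X := AffineSubspace.vadd_mem_of_mem_direction hv p.2
  have : (⟨v +ᵥ (p : V), hvp⟩ : affineSpan ℝ X) ∈ Metric.ball p ε := by
    simpa [Metric.mem_ball, Subtype.dist_eq, dist_eq_norm] using hvε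
  simpa [add_comm] using hball this

theorem exists_pos_forall_add_smul_mem_of_mem_intrinsicInterior
    (hx₀ : x₀ ∈ intrinsicInterior ℝ X) {s : Set V} (hs : Bornology.IsBounded s)
    (hsX : s ⊆ (affineSpan ℝ X).direction) : ∃ t > (0 : ℝ), ∀ v ∈ s, x₀ + t • v ∈ X := by
  obtain ⟨ε, hε, hball⟩ := exists_pos_forall_add_mem_of_mem_intrinsicInterior hx₀
  obtain ⟨R, hR, hsR⟩ := hs.exists_pos_norm_le
  refine ⟨ε / (2 * R), by positivity, fun v hv => hball _ (Submodule.smul_mem _ _ (hsX hv)) ?_⟩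
  calc ‖(ε / (2 * R)) • v‖ = ε / (2 * R) * ‖v‖ := by
        rw [norm_smul, Real.norm_of_nonneg (by positivity)]
    _ ≤ ε / (2 * R) * R := by gcongr; exact hsR v hv
    _ < ε := by field_simp; linarith

end IntrinsicInterior

namespace ContinuousAffineMap

variable {U V : Type*} [NormedAddCommGroup U] [NormedSpace ℝ U] [FiniteDimensional ℝ U]
  [NormedAddCommGroup V] [NormedSpace ℝ V]

noncomputable def decompSubmodule (D P : Submodule ℝ V) : Submodule ℝ (U →ᴬ[ℝ] V) :=
  LinearMap.range ((decompLinearEquiv ℝ ℝ U V).symm.toLinearMap ∘ₗ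
    D.subtype.prodMap
      (LinearMap.toContinuousLinearMap.toLinearMap ∘ₗ P.subtype.compRight (M := U) (S := ℝ)))

theorem mem_decompSubmodule {D P : Submodule ℝ V} {h : U →ᴬ[ℝ] V} :
    h ∈ decompSubmodule D P ↔ h 0 ∈ D ∧ ∀ u, h.contLinear u ∈ P := by
  constructor
  · rintro ⟨⟨d, φ⟩, rfl⟩
    simp
  · rintro ⟨h0, hP⟩
    refine ⟨(⟨h 0, h0⟩, (h.contLinear : U →ₗ[ℝ] V).codRestrict P hP),
      (decompLinearEquiv ℝ ℝ U V).symm_apply_eq.2 ?_⟩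
    ext <;> simp

theorem finrank_decompSubmodule [FiniteDimensional ℝ V] (D P : Submodule ℝ V) :
    finrank ℝ (decompSubmodule (U := U) D P) = finrank ℝ D + finrank ℝ U * finrank ℝ P := by
  rw [decompSubmodule, LinearMap.finrank_range_of_inj, finrank_prod, finrank_linearMap]
  refine (decompLinearEquiv ℝ ℝ U V).symm.injective.comp
    (D.injective_subtype.prodMap (LinearMap.toContinuousLinearMap.injective.comp ?_))
  exact fun φ ψ h => (LinearMap.cancel_left P.injective_subtype).1 h

theorem apply_mem_of_mem_decompSubmodule {D P : Submodule ℝ V} (hPD : P ≤ D) {h : U →ᴬ[ℝ] V}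
    (hh : h ∈ decompSubmodule D P) (u : U) : h u ∈ D := by
  obtain ⟨h0, hP⟩ := mem_decompSubmodule.1 hh
  rw [congrFun h.decomp u]
  exact D.add_mem (hPD (hP u)) h0

end ContinuousAffineMap

section AffineKernel

variable {U V W : Type*} [NormedAddCommGroup U] [NormedSpace ℝ U]
  [NormedAddCommGroup V] [NormedSpace ℝ V] [AddCommGroup W] [Module ℝ W]
  {Z : Set U} {X : Set V} {Y : Set W} {f : V →ᵃ[ℝ] W} {x₀ : V}

def affineKernel (Z : Set U) (X : Set V) (Y : Set W) (f : V →ᵃ[ℝ] W) : Set (U →ᴬ[ℝ] V) :=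
  {g | ⇑g '' Z ⊆ X ∧ ∃ y ∈ Y, ∀ z ∈ Z, f (g z) = y}

open ContinuousAffineMap

variable (U) in
noncomputable def affineKernelDirection [FiniteDimensional ℝ U] (X : Set V) (f : V →ᵃ[ℝ] W) :
    Submodule ℝ (U →ᴬ[ℝ] V) :=
  decompSubmodule (affineSpan ℝ X).direction ((affineSpan ℝ X).direction ⊓ LinearMap.ker f.linear)

theorem mem_affineKernel_of_contLinear_mem_ker {z₀ : U} (hz₀ : z₀ ∈ Z) (hf : f '' X ⊆ Y)
    {g : U →ᴬ[ℝ] V} (hgZ : g '' Z ⊆ X) (hg : ∀ u, g.contLinear u ∈ LinearMap.ker f.linear) :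
    g ∈ affineKernel Z X Y f := by
  refine ⟨hgZ, f (g z₀), hf ⟨g z₀, hgZ ⟨z₀, hz₀, rfl⟩, rfl⟩, fun z _ => ?_⟩
  rw [← vsub_eq_zero_iff_eq, ← f.linearMap_vsub, ← g.contLinear_map_vsub]
  exact hg _

theorem affineKernel_subset_mk' [FiniteDimensional ℝ U] (hZ : affineSpan ℝ Z = ⊤)
    (hx₀ : x₀ ∈ affineSpan ℝ X) :
    affineKernel Z X Y f ⊆ AffineSubspace.mk' (const ℝ U x₀) (affineKernelDirection U X f) := by
  rintro g ⟨hgZ, y, -, hy⟩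
  have hfg : (f.comp (g : U →ᵃ[ℝ] V)) '' Z ⊆ {y} := by
    rintro _ ⟨z, hz, rfl⟩
    exact hy z hz
  have hker : ∀ u, f.linear (g.contLinear u) = 0 := fun u => by
    simpa [direction_affineSpan] using
      (f.comp (g : U →ᵃ[ℝ] V)).linear_mem_direction_of_image_subset hZ hfg u
  rw [SetLike.mem_coe, AffineSubspace.mem_mk', vsub_eq_sub, affineKernelDirection,
    mem_decompSubmodule]
  refine ⟨AffineSubspace.vsub_mem_direction
    ((g : U →ᵃ[ℝ] V).apply_mem_affineSpan_of_image_subset hZ hgZ 0) hx₀, fun u => ?_⟩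
  rw [sub_contLinear, const_contLinear, sub_zero]
  exact ⟨(g : U →ᵃ[ℝ] V).linear_mem_direction_of_image_subset hZ hgZ u, hker u⟩

theorem mk'_le_affineSpan_affineKernel [FiniteDimensional ℝ U] (hZne : Z.Nonempty)
    (hZ : IsCompact Z) (hx₀ : x₀ ∈ intrinsicInterior ℝ X) (hf : f '' X ⊆ Y) :
    AffineSubspace.mk' (const ℝ U x₀) (affineKernelDirection U X f) ≤
      affineSpan ℝ (affineKernel Z X Y f) := by
  obtain ⟨z₀, hz₀⟩ := hZne
  refine AffineSubspace.le_affineSpan_of_forall_lineMap_mem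
    (mem_affineKernel_of_contLinear_mem_ker (g := const ℝ U x₀) hz₀ hf ?_ fun u => by simp)
    fun g hg => ?_
  · rintro _ ⟨z, -, rfl⟩
    exact intrinsicInterior_subset hx₀
  rw [AffineSubspace.mem_mk', vsub_eq_sub, affineKernelDirection] at hg
  have hsD : (fun z => g z - x₀) '' Z ⊆ (affineSpan ℝ X).direction := by
    rintro _ ⟨z, -, rfl⟩
    exact apply_mem_of_mem_decompSubmodule inf_le_left hg z
  obtain ⟨t, ht, hts⟩ := exists_pos_forall_add_smul_mem_of_mem_intrinsicInterior hx₀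
    (hZ.image (by fun_prop)).isBounded hsD
  refine ⟨t, ht.ne', mem_affineKernel_of_contLinear_mem_ker hz₀ hf ?_ fun u => ?_⟩
  · rintro _ ⟨z, hz, rfl⟩
    simpa [AffineMap.lineMap_apply_module', add_comm] using hts _ ⟨z, hz, rfl⟩
  · rw [AffineMap.lineMap_apply_module', add_contLinear, smul_contLinear, const_contLinear,
      add_zero]
    exact Submodule.smul_mem _ t ((mem_decompSubmodule.1 hg).2 u).2

theorem affineSpan_affineKernel [FiniteDimensional ℝ U] (hZne : Z.Nonempty) (hZ : IsCompact Z)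
    (hZspan : affineSpan ℝ Z = ⊤) (hx₀ : x₀ ∈ intrinsicInterior ℝ X) (hf : f '' X ⊆ Y) :
    affineSpan ℝ (affineKernel Z X Y f) =
      AffineSubspace.mk' (const ℝ U x₀) (affineKernelDirection U X f) :=
  le_antisymm
    (affineSpan_le.2 (affineKernel_subset_mk' hZspan
      (subset_affineSpan ℝ X (intrinsicInterior_subset hx₀))))
    (mk'_le_affineSpan_affineKernel hZne hZ hx₀ hf)

end AffineKernel

theorem convDim_kernelFunctor_general {U V W : Type*}
    [NormedAddCommGroup U] [NormedSpace ℝ U] [FiniteDimensional ℝ U]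
    [NormedAddCommGroup V] [NormedSpace ℝ V] [FiniteDimensional ℝ V]
    [NormedAddCommGroup W] [NormedSpace ℝ W]
    (Z : Set U) (X : Set V) (Y : Set W)
    (hZne : Z.Nonempty) (hZcomp : IsCompact Z)
    (hZspan : affineSpan ℝ Z = ⊤)
    (hXne : X.Nonempty) (hXconv : Convex ℝ X)
    (f : V →ᵃ[ℝ] W) (hf : ⇑f '' X ⊆ Y) :
    convDim {g : U →ᴬ[ℝ] V | ⇑g '' Z ⊆ X ∧ ∃ y ∈ Y, ∀ z ∈ Z, f (g z) = y} =
      (convDim Z + 1) * (convDim X - convDim (⇑f '' X)) + convDim (⇑f '' X) := by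
  obtain ⟨x₀, hx₀⟩ := hXne.intrinsicInterior hXconv
  have hrank := Submodule.finrank_map_add_finrank_inf_ker f.linear (affineSpan ℝ X).direction
  change convDim (affineKernel Z X Y f) = _
  rw [convDim, affineSpan_affineKernel hZne hZcomp hZspan hx₀ hf, AffineSubspace.direction_mk',
    affineKernelDirection, ContinuousAffineMap.finrank_decompSubmodule,
    convDim_of_affineSpan_eq_top hZspan, convDim_image, convDim, ← hrank, Nat.add_sub_cancel_left]
  ring

/-- Let `Z ⊆ U`, `X ⊆ V`, `Y ⊆ W` be nonempty convex compact sets in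
finite-dimensional real vector spaces, with `Z` affinely spanning `U`, and let
`f : X → Y` be affine. For
`K = {g : affine U → V | g(Z) ⊆ X and f ∘ g constant on Z}` one has
`dim K = (dim Z + 1)·(dim X − dim f(X)) + dim f(X)`. -/
theorem convDim_kernelFunctor {U V W : Type*}
    [NormedAddCommGroup U] [NormedSpace ℝ U] [FiniteDimensional ℝ U]
    [NormedAddCommGroup V] [NormedSpace ℝ V] [FiniteDimensional ℝ V]
    [NormedAddCommGroup W] [NormedSpace ℝ W] [FiniteDimensional ℝ W]
    (Z : Set U) (X : Set V) (Y : Set W)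
    (hZne : Z.Nonempty) (hZconv : Convex ℝ Z) (hZcomp : IsCompact Z)
    (hZspan : affineSpan ℝ Z = ⊤)
    (hXne : X.Nonempty) (hXconv : Convex ℝ X) (hXcomp : IsCompact X)
    (hYne : Y.Nonempty) (hYconv : Convex ℝ Y) (hYcomp : IsCompact Y)
    (f : V →ᵃ[ℝ] W) (hf : ⇑f '' X ⊆ Y) :
    convDim {g : U →ᴬ[ℝ] V | ⇑g '' Z ⊆ X ∧ ∃ y ∈ Y, ∀ z ∈ Z, f (g z) = y} =
      (convDim Z + 1) * (convDim X - convDim (⇑f '' X)) + convDim (⇑f '' X) :=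
  convDim_kernelFunctor_general Z X Y hZne hZcomp hZspan hXne hXconv f hf
end

section
/- Let X ⊂ ℝ^d, Y ⊂ ℝ^e, Z ⊂ ℝ^m be nonempty polytopes with dim X = d, and let f : Y → X be an affine map with dim f(Y) = dim X. Identify the space of affine maps ℝ^m → ℝ^d with ℝ^{d(m+1)}. Then the set ⓢ(Z, f) = {g : g an affine map ℝ^m → ℝ^d with g(Z) ⊆ X and f(Y) ⊆ g(Z)} is a semialgebraic subset of ℝ^{d(m+1)}. -/
open Set Pointwise

/-- A subset of `ℝ^N` is semialgebraic if it is a finite union of sets described by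
finitely many polynomial equations and strict polynomial inequalities. -/
def IsSemialgebraic {N : ℕ} (S : Set (Fin N → ℝ)) : Prop :=
  ∃ (k : ℕ) (E F : Fin k → Finset (MvPolynomial (Fin N) ℝ)),
    S = ⋃ i : Fin k,
      {x | (∀ p ∈ E i, MvPolynomial.eval x p = 0) ∧ ∀ q ∈ F i, 0 < MvPolynomial.eval x q}

/-!
Both inclusions can be tested on vertices: `g(Z) ⊆ X` iff `g` maps every vertex of `Z` into `X`,
and `f(Y) ⊆ g(Z)` iff `f` maps every vertex of `Y` into the convex hull of the `g`-images of the
vertices of `Z`. Since `g` depends linearly on its coordinates, it suffices to show that the set of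
parameters `x` for which a point `w x` lies in the convex hull of finitely many points `v i x`, all
depending polynomially on `x`, is semialgebraic.

By Carathéodory, `w ∈ convexHull (range v)` iff for some index set `t` the points `v i`, `i ∈ t`,
are affinely independent and `w` is a convex combination of them, that is, iff `(1, w)` is a
nonnegative combination of the linearly independent vectors `(1, v i)`. For a fixed `t` this is a
finite list of polynomial sign conditions on the coordinates, via the Gram matrix and Cramer's rule.
-/

open Matrix MvPolynomial

section Semialgebraic

variable {N : ℕ}

def basicSet (E F : Finset (MvPolynomial (Fin N) ℝ)) : Set (Fin N → ℝ) :=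
  {x | (∀ p ∈ E, eval x p = 0) ∧ ∀ q ∈ F, 0 < eval x q}

lemma iInter_basicSet {γ : Type*} [Fintype γ] [DecidableEq (MvPolynomial (Fin N) ℝ)]
    (E F : γ → Finset (MvPolynomial (Fin N) ℝ)) :
    ⋂ i, basicSet (E i) (F i) = basicSet (Finset.univ.biUnion E) (Finset.univ.biUnion F) := by
  ext x
  simp only [basicSet, mem_iInter, mem_ofPred_eq, Finset.mem_biUnion, Finset.mem_univ, true_and]
  grind

lemma isSemialgebraic_iff_exists_finite {S : Set (Fin N → ℝ)} :
    IsSemialgebraic S ↔ ∃ (γ : Type) (_ : Finite γ) (E F : γ → Finset (MvPolynomial (Fin N) ℝ)),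
      S = ⋃ i, basicSet (E i) (F i) := by
  refine ⟨fun ⟨k, E, F, h⟩ => ⟨Fin k, inferInstance, E, F, h⟩, fun ⟨γ, _, E, F, h⟩ => ?_⟩
  obtain ⟨k, ⟨e⟩⟩ := Finite.exists_equiv_fin γ
  refine ⟨k, E ∘ e.symm, F ∘ e.symm, h.trans ?_⟩
  exact (e.symm.surjective.iUnion_comp fun i => basicSet (E i) (F i)).symm

lemma isSemialgebraic_basicSet (E F : Finset (MvPolynomial (Fin N) ℝ)) :
    IsSemialgebraic (basicSet E F) :=
  isSemialgebraic_iff_exists_finite.2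
    ⟨Unit, inferInstance, fun _ => E, fun _ => F, (iUnion_const _).symm⟩

lemma isSemialgebraic_iUnion {γ : Type*} [Finite γ] {S : γ → Set (Fin N → ℝ)}
    (h : ∀ i, IsSemialgebraic (S i)) : IsSemialgebraic (⋃ i, S i) := by
  obtain ⟨n, ⟨e⟩⟩ := Finite.exists_equiv_fin γ
  rw [← e.symm.surjective.iUnion_comp]
  choose k E F hS using fun j => h (e.symm j)
  refine isSemialgebraic_iff_exists_finite.2
    ⟨Σ j, Fin (k j), inferInstance, fun p => E p.1 p.2, fun p => F p.1 p.2, ?_⟩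
  rw [iUnion_sigma]
  exact iUnion_congr hS

lemma isSemialgebraic_iInter {γ : Type*} [Finite γ] {S : γ → Set (Fin N → ℝ)}
    (h : ∀ i, IsSemialgebraic (S i)) : IsSemialgebraic (⋂ i, S i) := by
  classical
  obtain ⟨n, ⟨e⟩⟩ := Finite.exists_equiv_fin γ
  rw [← e.symm.surjective.iInter_comp]
  choose k E F hS using fun j => h (e.symm j)
  have : (⋂ j, S (e.symm j)) = ⋃ c : ∀ j, Fin (k j), ⋂ j, basicSet (E j (c j)) (F j (c j)) :=
    (iInter_congr hS).trans iInf_iSup_eq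
  rw [this]
  simp_rw [iInter_basicSet]
  exact isSemialgebraic_iUnion fun c => isSemialgebraic_basicSet _ _

lemma IsSemialgebraic.union {S T : Set (Fin N → ℝ)} (hS : IsSemialgebraic S)
    (hT : IsSemialgebraic T) : IsSemialgebraic (S ∪ T) := by
  rw [union_eq_iUnion]
  exact isSemialgebraic_iUnion (Bool.forall_bool.2 ⟨hT, hS⟩)

lemma IsSemialgebraic.inter {S T : Set (Fin N → ℝ)} (hS : IsSemialgebraic S)
    (hT : IsSemialgebraic T) : IsSemialgebraic (S ∩ T) := by
  rw [inter_eq_iInter]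
  exact isSemialgebraic_iInter (Bool.forall_bool.2 ⟨hT, hS⟩)

lemma isSemialgebraic_setOf_pos (p : MvPolynomial (Fin N) ℝ) :
    IsSemialgebraic {x | 0 < eval x p} := by
  convert isSemialgebraic_basicSet ∅ {p}
  simp [basicSet]

lemma isSemialgebraic_setOf_eval_eq (p q : MvPolynomial (Fin N) ℝ) :
    IsSemialgebraic {x | eval x p = eval x q} := by
  convert isSemialgebraic_basicSet {p - q} ∅
  simp [basicSet, sub_eq_zero]

lemma isSemialgebraic_setOf_nonneg (p : MvPolynomial (Fin N) ℝ) :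
    IsSemialgebraic {x | 0 ≤ eval x p} := by
  convert (isSemialgebraic_setOf_pos p).union (isSemialgebraic_setOf_eval_eq 0 p)
  ext x
  simp [le_iff_lt_or_eq]

end Semialgebraic

section ConeSignConditions

variable {ι n : Type*} [Fintype ι] [Fintype n]

lemma Matrix.mul_transpose_self_mulVec {R : Type*} [CommRing R] (A : Matrix ι n R) (μ : ι → R) :
    (A * Aᵀ) *ᵥ μ = A *ᵥ (μ ᵥ* A) := by
  rw [← mulVec_mulVec, mulVec_transpose]

variable [DecidableEq ι]

lemma Matrix.cramer_mulVec_self {R : Type*} [CommRing R] (B : Matrix ι ι R) (μ : ι → R) :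
    cramer B (B *ᵥ μ) = B.det • μ := by
  rw [cramer_eq_adjugate_mulVec, mulVec_mulVec, adjugate_mul, smul_mulVec, one_mulVec]

lemma RingHom.comp_cramer {R S : Type*} [CommRing R] [CommRing S] (φ : R →+* S)
    (B : Matrix ι ι R) (b : ι → R) :
    φ ∘ cramer B b = cramer (B.map φ) (φ ∘ b) := by
  ext i
  rw [Function.comp_apply, cramer_eq_adjugate_mulVec, cramer_eq_adjugate_mulVec, φ.map_mulVec,
    ← RingHom.mapMatrix_apply, RingHom.map_adjugate]
  rfl

/-- For `A` with linearly independent rows, `μ := cramer (A * Aᵀ) (A *ᵥ w) / det (A * Aᵀ)` solves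
the normal equations `(A * Aᵀ) *ᵥ μ = A *ᵥ w`, so `μ ᵥ* A` is the orthogonal projection of `w` onto
the row space; the last condition says that `w` is as long as its projection. -/
def ConeSignConditions (A : Matrix ι n ℝ) (w : n → ℝ) : Prop :=
  0 < (A * Aᵀ).det ∧ (∀ i, 0 ≤ cramer (A * Aᵀ) (A *ᵥ w) i) ∧
    (w ⬝ᵥ w) * (A * Aᵀ).det = (A *ᵥ w) ⬝ᵥ cramer (A * Aᵀ) (A *ᵥ w)

theorem coneSignConditions_iff {A : Matrix ι n ℝ} {w : n → ℝ} :
    ConeSignConditions A w ↔ LinearIndependent ℝ A.row ∧ ∃ μ, 0 ≤ μ ∧ μ ᵥ* A = w := by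
  constructor
  · rintro ⟨hpos, hcr, heq⟩
    have hunit : IsUnit (A * Aᵀ) := (isUnit_iff_isUnit_det _).2 hpos.ne'.isUnit
    refine ⟨vecMul_injective_iff.1 fun μ ν h => mulVec_injective_iff_isUnit.2 hunit ?_, ?_⟩
    · simp only [mul_transpose_self_mulVec, h]
    set μ := (A * Aᵀ).det⁻¹ • cramer (A * Aᵀ) (A *ᵥ w)
    have hcr_eq : cramer (A * Aᵀ) (A *ᵥ w) = (A * Aᵀ).det • μ := by
      rw [smul_smul, mul_inv_cancel₀ hpos.ne', one_smul]
    have hproj : A *ᵥ (μ ᵥ* A) = A *ᵥ w := by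
      rw [← mul_transpose_self_mulVec, mulVec_smul, mulVec_cramer, smul_smul,
        inv_mul_cancel₀ hpos.ne', one_smul]
    have hww : w ⬝ᵥ w = μ ⬝ᵥ (A *ᵥ w) := by
      rw [hcr_eq, dotProduct_smul, smul_eq_mul, dotProduct_comm (A *ᵥ w)] at heq
      exact mul_right_cancel₀ hpos.ne' (by linear_combination heq)
    have hdist : (w - μ ᵥ* A) ⬝ᵥ (w - μ ᵥ* A) = 0 := by
      rw [sub_dotProduct, dotProduct_sub, dotProduct_sub, dotProduct_comm w (μ ᵥ* A),
        ← dotProduct_mulVec, ← dotProduct_mulVec, hproj, hww]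
      ring
    refine ⟨μ, fun i => mul_nonneg (inv_nonneg.2 hpos.le) (hcr i), ?_⟩
    exact (sub_eq_zero.1 (dotProduct_self_eq_zero.1 hdist)).symm
  · rintro ⟨hA, μ, hμ, rfl⟩
    have hpos : 0 < (A * Aᵀ).det := by
      simpa using (PosDef.mul_conjTranspose_self A (vecMul_injective_iff.2 hA)).det_pos
    have hcr : cramer (A * Aᵀ) (A *ᵥ (μ ᵥ* A)) = (A * Aᵀ).det • μ := by
      rw [← mul_transpose_self_mulVec, cramer_mulVec_self]
    refine ⟨hpos, fun i => ?_, ?_⟩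
    · rw [hcr]
      exact mul_nonneg hpos.le (hμ i)
    · rw [hcr, dotProduct_smul, ← dotProduct_mulVec, smul_eq_mul, mul_comm, dotProduct_comm]

end ConeSignConditions

section PolynomialSignConditions

variable {ι n : Type*} [Fintype ι] [DecidableEq ι] [Fintype n]

lemma coneSignConditions_map {R : Type*} [CommRing R] (φ : R →+* ℝ) (A : Matrix ι n R)
    (w : n → R) :
    ConeSignConditions (A.map φ) (φ ∘ w) ↔
      0 < φ (A * Aᵀ).det ∧ (∀ i, 0 ≤ φ (cramer (A * Aᵀ) (A *ᵥ w) i)) ∧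
        φ ((w ⬝ᵥ w) * (A * Aᵀ).det) = φ ((A *ᵥ w) ⬝ᵥ cramer (A * Aᵀ) (A *ᵥ w)) := by
  have hgram : (A * Aᵀ).map φ = A.map φ * (A.map φ)ᵀ := by
    rw [Matrix.map_mul, transpose_map]
  have hb : φ ∘ (A *ᵥ w) = A.map φ *ᵥ (φ ∘ w) := funext (φ.map_mulVec A w)
  have hcr : φ ∘ cramer (A * Aᵀ) (A *ᵥ w) = cramer (A.map φ * (A.map φ)ᵀ) (A.map φ *ᵥ (φ ∘ w)) := by
    rw [φ.comp_cramer, hgram, hb]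
  have hcr_apply : ∀ i, φ (cramer (A * Aᵀ) (A *ᵥ w) i) =
      cramer (A.map φ * (A.map φ)ᵀ) (A.map φ *ᵥ (φ ∘ w)) i := congrFun hcr
  simp only [ConeSignConditions, RingHom.map_det, map_mul, RingHom.map_dotProduct,
    RingHom.mapMatrix_apply, hgram, hb, hcr, hcr_apply]

variable {N : ℕ}

lemma isSemialgebraic_setOf_coneSignConditions (A : Matrix ι n (MvPolynomial (Fin N) ℝ))
    (w : n → MvPolynomial (Fin N) ℝ) :
    IsSemialgebraic {x | ConeSignConditions (A.map (eval x)) (eval x ∘ w)} := by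
  simp_rw [coneSignConditions_map, ofPred_and, ofPred_forall]
  exact (isSemialgebraic_setOf_pos _).inter
    ((isSemialgebraic_iInter fun i => isSemialgebraic_setOf_nonneg _).inter
      (isSemialgebraic_setOf_eval_eq _ _))

end PolynomialSignConditions

section ConvexHull

lemma sum_smul_vecCons_one {ι R : Type*} [Fintype ι] [Semiring R] {d : ℕ} (μ : ι → R)
    (p : ι → Fin d → R) :
    ∑ i, μ i • vecCons 1 (p i) = vecCons (∑ i, μ i) (∑ i, μ i • p i) := by
  ext j
  refine Fin.cases ?_ (fun j => ?_) j <;> simp [Finset.sum_apply]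

lemma vecMul_of_vecCons_one {ι R : Type*} [Fintype ι] [Semiring R] {d : ℕ} (μ : ι → R)
    (p : ι → Fin d → R) :
    μ ᵥ* of (fun i => vecCons 1 (p i)) = vecCons (∑ i, μ i) (∑ i, μ i • p i) := by
  rw [vecMul_eq_sum]
  exact sum_smul_vecCons_one μ p

lemma AffineIndependent.linearIndependent_vecCons_one {ι k : Type*} [Fintype ι] [Ring k] {d : ℕ}
    {p : ι → Fin d → k} (h : AffineIndependent k p) :
    LinearIndependent k fun i => vecCons (1 : k) (p i) := by
  refine Fintype.linearIndependent_iff.2 fun g hg i => ?_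
  rw [sum_smul_vecCons_one, ← cons_zero_zero, vecCons_inj] at hg
  exact affineIndependent_iff.1 h Finset.univ g hg.1 hg.2 i (Finset.mem_univ i)

lemma exists_affineIndependent_of_mem_convexHull_range {𝕜 κ E : Type*} [Field 𝕜] [LinearOrder 𝕜]
    [IsStrictOrderedRing 𝕜] [AddCommGroup E] [Module 𝕜 E] [DecidableEq κ] {v : κ → E} {w : E}
    (hw : w ∈ convexHull 𝕜 (range v)) :
    ∃ t : Finset κ, AffineIndependent 𝕜 (fun i : t => v i) ∧
      ∃ μ : t → 𝕜, (∀ i, 0 ≤ μ i) ∧ ∑ i, μ i = 1 ∧ ∑ i, μ i • v i = w := by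
  obtain ⟨γ, _, z, μ, hz, hzind, hμ0, hμ1, hμw⟩ := eq_pos_convex_span_of_mem_convexHull hw
  choose j hj using fun g => hz (mem_range_self g)
  have hjinj : Function.Injective j := fun a b hab => hzind.injective (by rw [← hj, ← hj, hab])
  let e : γ ≃ Finset.univ.image j := Equiv.ofBijective
    (fun g => ⟨j g, Finset.mem_image_of_mem j (Finset.mem_univ g)⟩)
    ⟨fun a b h => hjinj (congrArg Subtype.val h), by
      rintro ⟨_, hi⟩
      obtain ⟨g, -, rfl⟩ := Finset.mem_image.1 hi
      exact ⟨g, rfl⟩⟩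
  have hve : (fun i : Finset.univ.image j => v i) = z ∘ e.symm := funext fun i => by
    conv_lhs => rw [← e.apply_symm_apply i]
    exact hj _
  refine ⟨_, hve ▸ hzind.comp_embedding e.symm.toEmbedding, μ ∘ e.symm, fun i => (hμ0 _).le,
    (e.symm.sum_comp μ).trans hμ1, ?_⟩
  simp only [congrFun hve, Function.comp_apply]
  rw [e.symm.sum_comp fun g => μ g • z g, hμw]

theorem mem_convexHull_range_iff_exists_coneSignConditions {κ : Type*} [DecidableEq κ] {d : ℕ}
    (v : κ → Fin d → ℝ) (w : Fin d → ℝ) :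
    w ∈ convexHull ℝ (range v) ↔
      ∃ t : Finset κ, ConeSignConditions (of fun i : t => vecCons 1 (v i)) (vecCons 1 w) := by
  simp_rw [coneSignConditions_iff, vecMul_of_vecCons_one, vecCons_inj]
  constructor
  · intro hw
    obtain ⟨t, ht, μ, hμ0, hμ1, hμw⟩ := exists_affineIndependent_of_mem_convexHull_range hw
    exact ⟨t, ht.linearIndependent_vecCons_one, μ, hμ0, hμ1, hμw⟩
  · rintro ⟨t, -, μ, hμ0, hμ1, hμw⟩
    exact convexHull_mono (range_comp_subset_range _ v)
      (mem_convexHull_of_exists_fintype μ _ hμ0 hμ1 mem_range_self hμw)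

end ConvexHull

section PolynomialFunctions

variable {N : ℕ}

def IsPolynomialFun (g : (Fin N → ℝ) → ℝ) : Prop :=
  ∃ p : MvPolynomial (Fin N) ℝ, ∀ x, eval x p = g x

lemma isPolynomialFun_const (r : ℝ) : IsPolynomialFun fun _ : Fin N → ℝ => r :=
  ⟨C r, fun _ => eval_C r⟩

lemma IsLinearMap.isPolynomialFun {g : (Fin N → ℝ) → ℝ} (hg : IsLinearMap ℝ g) :
    IsPolynomialFun g := by
  refine ⟨∑ i, C (g fun j => if i = j then 1 else 0) * X i, fun x => ?_⟩
  rw [← IsLinearMap.mk'_apply hg x, (hg.mk' g).pi_apply_eq_sum_univ x]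
  simp [mul_comm]

theorem isSemialgebraic_setOf_mem_convexHull {κ : Type*} [Fintype κ] [DecidableEq κ] {d : ℕ}
    (v : κ → (Fin N → ℝ) → Fin d → ℝ) (w : (Fin N → ℝ) → Fin d → ℝ)
    (hv : ∀ i a, IsPolynomialFun fun x => v i x a) (hw : ∀ a, IsPolynomialFun fun x => w x a) :
    IsSemialgebraic {x | w x ∈ convexHull ℝ (range fun i => v i x)} := by
  choose P hP using hv
  choose Q hQ using hw
  have hA : ∀ x (t : Finset κ), (of fun i : t => vecCons 1 (v i x)) =
      (of fun i : t => vecCons 1 (P i)).map (eval x) := by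
    intro x t
    ext i a
    refine Fin.cases ?_ (fun a => ?_) a <;> simp [hP]
  have hb : ∀ x, vecCons 1 (w x) = eval x ∘ vecCons 1 Q := by
    intro x
    ext a
    refine Fin.cases ?_ (fun a => ?_) a <;> simp [hQ]
  simp_rw [mem_convexHull_range_iff_exists_coneSignConditions, hA, hb, ofPred_exists]
  exact isSemialgebraic_iUnion fun t => isSemialgebraic_setOf_coneSignConditions _ _

end PolynomialFunctions

lemma image_convexHull_sandwich_iff {E F G : Type*} [AddCommGroup E] [Module ℝ E]
    [AddCommGroup F] [Module ℝ F] [AddCommGroup G] [Module ℝ G] (f : G →ᵃ[ℝ] F) (g : E →ᵃ[ℝ] F)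
    (sX : Finset F) (sY : Finset G) (sZ : Finset E) :
    g '' convexHull ℝ ↑sZ ⊆ convexHull ℝ ↑sX ∧ f '' convexHull ℝ ↑sY ⊆ g '' convexHull ℝ ↑sZ ↔
      (∀ z : sZ, g z ∈ convexHull ℝ (range fun x : sX => (x : F))) ∧
        ∀ y : sY, f y ∈ convexHull ℝ (range fun z : sZ => g z) := by
  have hg : (range fun z : sZ => g z) = g '' ↑sZ := by
    ext
    simp
  simp only [hg, Subtype.range_coe_subtype, Finset.setOfPred_mem, AffineMap.image_convexHull,
    (convex_convexHull ℝ _).convexHull_subset_iff, subset_def, forall_mem_image, Subtype.forall,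
    Finset.mem_coe]

theorem sandwiching_isSemialgebraic_general (d e m : ℕ)
    (X : Set (Fin d → ℝ)) (Y : Set (Fin e → ℝ)) (Z : Set (Fin m → ℝ))
    (hX : ∃ s : Finset (Fin d → ℝ), X = convexHull ℝ (s : Set (Fin d → ℝ)))
    (hY : ∃ s : Finset (Fin e → ℝ), Y = convexHull ℝ (s : Set (Fin e → ℝ)))
    (hZ : ∃ s : Finset (Fin m → ℝ), Z = convexHull ℝ (s : Set (Fin m → ℝ)))
    (f : (Fin e → ℝ) →ᵃ[ℝ] (Fin d → ℝ))
    (ι : (Fin (d * (m + 1)) → ℝ) ≃ₗ[ℝ] ((Fin m → ℝ) →ᵃ[ℝ] (Fin d → ℝ))) :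
    IsSemialgebraic
      {c : Fin (d * (m + 1)) → ℝ | ⇑(ι c) '' Z ⊆ X ∧ ⇑f '' Y ⊆ ⇑(ι c) '' Z} := by
  classical
  obtain ⟨sX, rfl⟩ := hX
  obtain ⟨sY, rfl⟩ := hY
  obtain ⟨sZ, rfl⟩ := hZ
  have hι : ∀ z a, IsPolynomialFun fun c => ι c z a := fun z a =>
    IsLinearMap.isPolynomialFun ⟨fun c c' => by simp, fun r c => by simp⟩
  have hset : {c | ι c '' convexHull ℝ ↑sZ ⊆ convexHull ℝ ↑sX ∧
      f '' convexHull ℝ ↑sY ⊆ ι c '' convexHull ℝ ↑sZ} =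
      (⋂ z : sZ, {c | ι c z ∈ convexHull ℝ (range fun x : sX => (x : Fin d → ℝ))}) ∩
        ⋂ y : sY, {c | f y ∈ convexHull ℝ (range fun z : sZ => ι c z)} := by
    ext c
    simpa only [mem_ofPred_eq, mem_inter_iff, mem_iInter] using
      image_convexHull_sandwich_iff f (ι c) sX sY sZ
  rw [hset]
  exact (isSemialgebraic_iInter fun z : sZ =>
      isSemialgebraic_setOf_mem_convexHull (fun (x : sX) _ => (x : Fin d → ℝ)) (fun c => ι c z)
        (fun _ _ => isPolynomialFun_const _) (hι z)).inter
    (isSemialgebraic_iInter fun y : sY =>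
      isSemialgebraic_setOf_mem_convexHull (fun (z : sZ) c => ι c z) (fun _ => f y)
        (fun z => hι z) (fun _ => isPolynomialFun_const _))

/-- For nonempty polytopes `X ⊂ ℝ^d` (with `dim X = d`), `Y ⊂ ℝ^e`,
`Z ⊂ ℝ^m` and an affine map `f : Y → X` with `dim f(Y) = dim X`, identifying the space
of affine maps `ℝ^m → ℝ^d` with `ℝ^{d(m+1)}` (via any linear identification `ι`), the
sandwiching set `ⓢ(Z, f) = {g : g(Z) ⊆ X and f(Y) ⊆ g(Z)}` is semialgebraic. -/
theorem sandwiching_isSemialgebraic (d e m : ℕ)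
    (X : Set (Fin d → ℝ)) (Y : Set (Fin e → ℝ)) (Z : Set (Fin m → ℝ))
    (hXne : X.Nonempty) (hX : ∃ s : Finset (Fin d → ℝ), X = convexHull ℝ (s : Set (Fin d → ℝ)))
    (hYne : Y.Nonempty) (hY : ∃ s : Finset (Fin e → ℝ), Y = convexHull ℝ (s : Set (Fin e → ℝ)))
    (hZne : Z.Nonempty) (hZ : ∃ s : Finset (Fin m → ℝ), Z = convexHull ℝ (s : Set (Fin m → ℝ)))
    (hXdim : convDim X = d)
    (f : (Fin e → ℝ) →ᵃ[ℝ] (Fin d → ℝ)) (hf : ⇑f '' Y ⊆ X)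
    (hfdim : convDim (⇑f '' Y) = convDim X)
    (ι : (Fin (d * (m + 1)) → ℝ) ≃ₗ[ℝ] ((Fin m → ℝ) →ᵃ[ℝ] (Fin d → ℝ))) :
    IsSemialgebraic
      {c : Fin (d * (m + 1)) → ℝ | ⇑(ι c) '' Z ⊆ X ∧ ⇑f '' Y ⊆ ⇑(ι c) '' Z} :=
  sandwiching_isSemialgebraic_general d e m X Y Z hX hY hZ f ι
end

section
/- Let U, V, W be finite-dimensional real normed spaces, let Z ⊆ U, X ⊆ V, Y ⊆ W be nonempty convex compact sets, and let f : Y → X be an affine map. If dim f(Y) + dim Z < dim X, then the closure, in the finite-dimensional normed space of affine maps U → V, of the set {g : g an affine map U → V with g(Z) ⊆ X and g(Z) ∩ f(Y) = ∅} equals the whole set Hom(Z, X) = {g : g an affine map U → V with g(Z) ⊆ X}. -/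
open Set Pointwise

/-!
Maps with `g '' Z ⊆ X` form a closed set, so only density needs proof. Contracting `g` by a
factor `t` towards a relative interior point of `X` gives a map whose image stays in `X` under
every translation along the direction of `X` shorter than a fixed multiple of `t`. The directions
of its image and of `f '' Y` span less than the direction of `X`, so arbitrarily short such
translations make the image miss `f '' Y`. Letting `t → 0` recovers `g`.
-/

open Filter Topology

lemma convDim_image_le {V W : Type*} [AddCommGroup V] [Module ℝ V] [FiniteDimensional ℝ V]
    [AddCommGroup W] [Module ℝ W] (f : V →ᵃ[ℝ] W) (s : Set V) :
    convDim (f '' s) ≤ convDim s := by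
  unfold convDim
  rw [← AffineSubspace.map_span, AffineSubspace.map_direction]
  exact Submodule.finrank_map_le _ _

lemma exists_pos_ball_inter_affineSpan_subset {V P : Type*} [NormedAddCommGroup V]
    [NormedSpace ℝ V] [MetricSpace P] [NormedAddTorsor V P] {X : Set P} {x₀ : P}
    (h : x₀ ∈ intrinsicInterior ℝ X) :
    ∃ r > 0, Metric.ball x₀ r ∩ affineSpan ℝ X ⊆ X := by
  obtain ⟨y, hy, rfl⟩ := h
  obtain ⟨r, hr, hball⟩ := Metric.mem_nhds_iff.mp (mem_interior_iff_mem_nhds.mp hy)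
  exact ⟨r, hr, fun p ⟨hpr, hp⟩ => hball (show (⟨p, hp⟩ : affineSpan ℝ X) ∈ _ from hpr)⟩

namespace ContinuousAffineMap

variable {𝕜 U V : Type*} [NontriviallyNormedField 𝕜]
  [NormedAddCommGroup U] [NormedSpace 𝕜 U] [NormedAddCommGroup V] [NormedSpace 𝕜 V]

@[simp]
lemma norm_const (v : V) : ‖const 𝕜 U v‖ = ‖v‖ := by
  simp [norm_def, const_contLinear, coe_const]

instance : ContinuousEvalConst (U →ᴬ[𝕜] V) U V where
  continuous_eval_const z := by
    have hcont : Continuous fun p : V × (U →L[𝕜] V) => p.2 z + p.1 := by fun_prop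
    convert hcont.comp (decompLinearIsometryEquiv 𝕜 𝕜 U V).continuous with g
    exact congrFun g.decomp z

lemma mem_closure_of_forall_const_add_mem {S : Set (U →ᴬ[𝕜] V)} {g : U →ᴬ[𝕜] V}
    (h : ∀ δ > 0, ∃ v : V, ‖v‖ < δ ∧ const 𝕜 U v + g ∈ S) : g ∈ closure S := by
  refine Metric.mem_closure_iff.mpr fun δ hδ => ?_
  obtain ⟨v, hv, hvS⟩ := h δ hδ
  exact ⟨_, hvS, by simpa [dist_eq_norm] using hv⟩

end ContinuousAffineMap

section Perturbation

variable {V : Type*} [NormedAddCommGroup V] [NormedSpace ℝ V]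

lemma Submodule.exists_norm_lt_sub_notMem_of_finrank_lt [FiniteDimensional ℝ V]
    {E F : Submodule ℝ V} (h : Module.finrank ℝ F < Module.finrank ℝ E) (c : V) {δ : ℝ}
    (hδ : 0 < δ) : ∃ v ∈ E, ‖v‖ < δ ∧ v - c ∉ F := by
  obtain ⟨e, heE, heF⟩ : ∃ e ∈ E, e ∉ F :=
    SetLike.not_le_iff_exists.mp fun hle => (Submodule.finrank_mono hle).not_gt h
  by_cases hc : -c ∈ F
  · -- `v = 0` fails, but then `v = s • e` works for every small `s ≠ 0`
    have hsmall : ∀ᶠ s : ℝ in 𝓝[≠] 0, ‖s • e‖ < δ := by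
      have : Tendsto (fun s : ℝ => s • e) (𝓝 0) (𝓝 0) := by
        simpa using (tendsto_id (x := 𝓝 (0 : ℝ))).smul_const e
      exact (this.eventually (Metric.ball_mem_nhds 0 hδ)).filter_mono nhdsWithin_le_nhds
        |>.mono fun s hs => by simpa using hs
    obtain ⟨s, hs, hs0⟩ := (hsmall.and self_mem_nhdsWithin).exists
    refine ⟨s • e, E.smul_mem s heE, hs, fun hF => heF ?_⟩
    have : s • e ∈ F := by simpa using F.add_mem hF (F.neg_mem hc)
    exact (F.smul_mem_iff hs0).mp this
  · exact ⟨0, E.zero_mem, by simpa using hδ, by simpa using hc⟩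

lemma exists_norm_lt_forall_add_notMem [FiniteDimensional ℝ V] {A B : Set V}
    {E : Submodule ℝ V} (h : Module.finrank ℝ ↥((affineSpan ℝ A).direction ⊔
      (affineSpan ℝ B).direction) < Module.finrank ℝ E) {δ : ℝ} (hδ : 0 < δ) :
    ∃ v ∈ E, ‖v‖ < δ ∧ ∀ b ∈ B, v + b ∉ A := by
  rcases A.eq_empty_or_nonempty with rfl | ⟨a₀, ha₀⟩
  · exact ⟨0, E.zero_mem, by simpa using hδ, fun _ _ => notMem_empty _⟩
  rcases B.eq_empty_or_nonempty with rfl | ⟨b₀, hb₀⟩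
  · exact ⟨0, E.zero_mem, by simpa using hδ, fun _ hb => absurd hb (notMem_empty _)⟩
  obtain ⟨v, hvE, hv, hvF⟩ := Submodule.exists_norm_lt_sub_notMem_of_finrank_lt h (a₀ - b₀) hδ
  refine ⟨v, hvE, hv, fun b hb ha => hvF ?_⟩
  have hA : (v + b) - a₀ ∈ (affineSpan ℝ A).direction :=
    AffineSubspace.vsub_mem_direction (subset_affineSpan ℝ A ha) (subset_affineSpan ℝ A ha₀)
  have hB : b - b₀ ∈ (affineSpan ℝ B).direction :=
    AffineSubspace.vsub_mem_direction (subset_affineSpan ℝ B hb) (subset_affineSpan ℝ B hb₀)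
  convert Submodule.sub_mem _ (Submodule.mem_sup_left hA) (Submodule.mem_sup_right hB) using 1
  abel

lemma Convex.exists_forall_add_lineMap_mem {X : Set V} (hX : Convex ℝ X) {x₀ : V}
    (hx₀ : x₀ ∈ intrinsicInterior ℝ X) :
    ∃ r > 0, ∀ x ∈ X, ∀ t : ℝ, 0 < t → t ≤ 1 → ∀ v ∈ (affineSpan ℝ X).direction,
      ‖v‖ < t * r → v + AffineMap.lineMap x x₀ t ∈ X := by
  obtain ⟨r, hr, hball⟩ := exists_pos_ball_inter_affineSpan_subset hx₀
  refine ⟨r, hr, fun x hx t ht0 ht1 v hv hvr => ?_⟩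
  -- `x₀ + t⁻¹ • v` is still in `X`, and the point is on the segment from `x` to it
  have hx' : t⁻¹ • v + x₀ ∈ X := by
    refine hball ⟨?_, AffineSubspace.vadd_mem_of_mem_direction (Submodule.smul_mem _ _ hv)
      (subset_affineSpan ℝ X (intrinsicInterior_subset hx₀))⟩
    rw [Metric.mem_ball, dist_eq_norm, add_sub_cancel_right, norm_smul, Real.norm_eq_abs,
      abs_inv, abs_of_pos ht0, inv_mul_lt_iff₀ ht0]
    exact hvr
  convert hX.lineMap_mem hx hx' ⟨ht0.le, ht1⟩ using 1
  simp only [AffineMap.lineMap_apply_module, smul_add, smul_smul, mul_inv_cancel₀ ht0.ne']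
  module

end Perturbation

open ContinuousAffineMap in
lemma lineMap_const_mem_closure_setOf_image_subset_disjoint {U V : Type*}
    [NormedAddCommGroup U] [NormedSpace ℝ U] [FiniteDimensional ℝ U]
    [NormedAddCommGroup V] [NormedSpace ℝ V] [FiniteDimensional ℝ V]
    {Z : Set U} {X A : Set V} (hX : Convex ℝ X) {x₀ : V} (hx₀ : x₀ ∈ intrinsicInterior ℝ X)
    (hdim : convDim A + convDim Z < convDim X) {g : U →ᴬ[ℝ] V} (hg : g '' Z ⊆ X) {t : ℝ}
    (ht0 : 0 < t) (ht1 : t ≤ 1) :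
    AffineMap.lineMap g (const ℝ U x₀) t ∈
      closure {g : U →ᴬ[ℝ] V | g '' Z ⊆ X ∧ g '' Z ∩ A = ∅} := by
  set h := AffineMap.lineMap g (const ℝ U x₀) t
  obtain ⟨r, hr, hshrink⟩ := hX.exists_forall_add_lineMap_mem hx₀
  have hdim' : Module.finrank ℝ ↥((affineSpan ℝ A).direction ⊔
      (affineSpan ℝ (h '' Z)).direction) < Module.finrank ℝ (affineSpan ℝ X).direction :=
    calc _ ≤ convDim A + convDim (h '' Z) := Submodule.finrank_add_le_finrank_add_finrank _ _
      _ ≤ convDim A + convDim Z := by gcongr; exact convDim_image_le h.toAffineMap Z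
      _ < _ := hdim
  refine mem_closure_of_forall_const_add_mem fun δ hδ => ?_
  obtain ⟨v, hvE, hv, hvA⟩ :=
    exists_norm_lt_forall_add_notMem hdim' (lt_min hδ (mul_pos ht0 hr))
  refine ⟨v, hv.trans_le (min_le_left _ _), ?_, ?_⟩
  · rintro _ ⟨z, hz, rfl⟩
    simpa [h, lineMap_apply'] using
      hshrink _ (hg ⟨z, hz, rfl⟩) t ht0 ht1 v hvE (hv.trans_le (min_le_right _ _))
  · refine eq_empty_of_forall_notMem fun _ ⟨⟨z, hz, hzx⟩, hxA⟩ => ?_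
    exact hvA (h z) ⟨z, hz, rfl⟩ (by simpa [← hzx] using hxA)

theorem closure_complementing_eq_hom_general {U V W : Type*}
    [NormedAddCommGroup U] [NormedSpace ℝ U] [FiniteDimensional ℝ U]
    [NormedAddCommGroup V] [NormedSpace ℝ V] [FiniteDimensional ℝ V]
    [NormedAddCommGroup W] [NormedSpace ℝ W]
    (Z : Set U) (X : Set V) (Y : Set W)
    (hXne : X.Nonempty) (hXconv : Convex ℝ X) (hXcomp : IsCompact X)
    (f : W →ᵃ[ℝ] V)
    (hdim : convDim (⇑f '' Y) + convDim Z < convDim X) :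
    closure {g : U →ᴬ[ℝ] V | ⇑g '' Z ⊆ X ∧ ⇑g '' Z ∩ ⇑f '' Y = ∅} =
      {g : U →ᴬ[ℝ] V | ⇑g '' Z ⊆ X} := by
  have hclosed : IsClosed {g : U →ᴬ[ℝ] V | ⇑g '' Z ⊆ X} := by
    simpa only [mapsTo_iff_image_subset] using
      hXcomp.isClosed.setOfPred_mapsTo fun z _ => continuous_eval_const z
  refine (closure_minimal (fun g hg => hg.1) hclosed).antisymm fun g hg => ?_
  obtain ⟨x₀, hx₀⟩ := hXne.intrinsicInterior hXconv
  have hlim : Tendsto (AffineMap.lineMap (k := ℝ) g (ContinuousAffineMap.const ℝ U x₀))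
      (𝓝[>] 0) (𝓝 g) := by
    simpa using (AffineMap.lineMap_continuous.tendsto (0 : ℝ)).mono_left nhdsWithin_le_nhds
  have hmem : ∀ᶠ t in 𝓝[>] (0 : ℝ), AffineMap.lineMap g (ContinuousAffineMap.const ℝ U x₀) t ∈
      closure {g : U →ᴬ[ℝ] V | ⇑g '' Z ⊆ X ∧ ⇑g '' Z ∩ ⇑f '' Y = ∅} := by
    filter_upwards [Ioc_mem_nhdsGT one_pos] with t ht
    exact lineMap_const_mem_closure_setOf_image_subset_disjoint hXconv hx₀ hdim hg ht.1 ht.2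
  simpa using mem_closure_of_tendsto hlim hmem

/-- Let `Z ⊆ U`, `X ⊆ V`, `Y ⊆ W` be nonempty convex compact sets in
finite-dimensional real normed spaces and `f : Y → X` affine. If
`dim f(Y) + dim Z < dim X`, then the closure (in the normed space of affine maps
`U → V`) of `{g : g(Z) ⊆ X, g(Z) ∩ f(Y) = ∅}` equals all of `Hom(Z, X)`. -/
theorem closure_complementing_eq_hom {U V W : Type*}
    [NormedAddCommGroup U] [NormedSpace ℝ U] [FiniteDimensional ℝ U]
    [NormedAddCommGroup V] [NormedSpace ℝ V] [FiniteDimensional ℝ V]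
    [NormedAddCommGroup W] [NormedSpace ℝ W] [FiniteDimensional ℝ W]
    (Z : Set U) (X : Set V) (Y : Set W)
    (hZne : Z.Nonempty) (hZconv : Convex ℝ Z) (hZcomp : IsCompact Z)
    (hXne : X.Nonempty) (hXconv : Convex ℝ X) (hXcomp : IsCompact X)
    (hYne : Y.Nonempty) (hYconv : Convex ℝ Y) (hYcomp : IsCompact Y)
    (f : W →ᵃ[ℝ] V) (hf : ⇑f '' Y ⊆ X)
    (hdim : convDim (⇑f '' Y) + convDim Z < convDim X) :
    closure {g : U →ᴬ[ℝ] V | ⇑g '' Z ⊆ X ∧ ⇑g '' Z ∩ ⇑f '' Y = ∅} =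
      {g : U →ᴬ[ℝ] V | ⇑g '' Z ⊆ X} :=
  closure_complementing_eq_hom_general Z X Y hXne hXconv hXcomp f hdim
end

section
/- Let U, V, W be finite-dimensional real normed spaces, let Z ⊆ U, X ⊆ V, Y ⊆ W be nonempty convex compact sets, and let f : Y → X be an affine map with dim f(Y) = dim X. Then no affine map g : U → V with g(Z) ⊆ X and f(Y) ⊆ g(Z) lies in the closure (in the normed space of affine maps U → V) of the set {g' : g' an affine map U → V with g'(Z) ⊆ X and g'(Z) ∩ f(Y) = ∅}; i.e., ⓢ(Z,f) ∩ ©(Z,f) = ∅. -/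
open Set Pointwise

lemma exists_ball_inter_affineSpan_subset {V : Type*} [NormedAddCommGroup V] [NormedSpace ℝ V]
    {s : Set V} {p : V} (hp : p ∈ intrinsicInterior ℝ s) :
    ∃ ε > 0, ∀ q ∈ (affineSpan ℝ s : Set V), dist q p < ε → q ∈ s := by
  obtain ⟨p', hp', rfl⟩ := hp
  rw [mem_interior_iff_mem_nhds, Metric.mem_nhds_iff] at hp'
  obtain ⟨ε, hε, hball⟩ := hp'
  refine ⟨ε, hε, fun q hq hd => ?_⟩
  have : (⟨q, hq⟩ : affineSpan ℝ s) ∈ Metric.ball p' ε := by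
    simpa [Metric.mem_ball, Subtype.dist_eq] using hd
  exact hball this

/-- Let `Z ⊆ U`, `X ⊆ V`, `Y ⊆ W` be nonempty convex compact sets in
finite-dimensional real normed spaces and `f : Y → X` affine with `dim f(Y) = dim X`.
Then the sandwiching set `ⓢ(Z,f) = {g : g(Z) ⊆ X, f(Y) ⊆ g(Z)}` is disjoint from the
complementing set `©(Z,f)`, the closure of `{g' : g'(Z) ⊆ X, g'(Z) ∩ f(Y) = ∅}`. -/
theorem sandwiching_disjoint_complementing {U V W : Type*}
    [NormedAddCommGroup U] [NormedSpace ℝ U] [FiniteDimensional ℝ U]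
    [NormedAddCommGroup V] [NormedSpace ℝ V] [FiniteDimensional ℝ V]
    [NormedAddCommGroup W] [NormedSpace ℝ W] [FiniteDimensional ℝ W]
    (Z : Set U) (X : Set V) (Y : Set W)
    (hZne : Z.Nonempty) (hZconv : Convex ℝ Z) (hZcomp : IsCompact Z)
    (hXne : X.Nonempty) (hXconv : Convex ℝ X) (hXcomp : IsCompact X)
    (hYne : Y.Nonempty) (hYconv : Convex ℝ Y) (hYcomp : IsCompact Y)
    (f : W →ᵃ[ℝ] V) (hf : ⇑f '' Y ⊆ X)
    (hdim : convDim (⇑f '' Y) = convDim X) :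
    {g : U →ᴬ[ℝ] V | ⇑g '' Z ⊆ X ∧ ⇑f '' Y ⊆ ⇑g '' Z} ∩
      closure {g : U →ᴬ[ℝ] V | ⇑g '' Z ⊆ X ∧ ⇑g '' Z ∩ ⇑f '' Y = ∅} = ∅ := by
  rw [Set.eq_empty_iff_forall_notMem]
  rintro g ⟨⟨hgX, hfg⟩, hcl⟩
  -- the affine spans of f '' Y and X coincide
  have hle : affineSpan ℝ (⇑f '' Y) ≤ affineSpan ℝ X := affineSpan_mono ℝ hf
  have hdir : (affineSpan ℝ (⇑f '' Y)).direction = (affineSpan ℝ X).direction :=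
    Submodule.eq_of_le_of_finrank_eq (AffineSubspace.direction_le hle) hdim
  obtain ⟨y0, hy0⟩ := hYne
  have hfy0 : f y0 ∈ affineSpan ℝ (⇑f '' Y) := subset_affineSpan ℝ _ ⟨y0, hy0, rfl⟩
  have hspan : affineSpan ℝ (⇑f '' Y) = affineSpan ℝ X :=
    AffineSubspace.ext_of_direction_eq hdir ⟨f y0, hfy0, hle hfy0⟩
  -- pick a relative interior point p of f '' Y
  have hconv : Convex ℝ (⇑f '' Y) := hYconv.affine_image f
  obtain ⟨p, hp⟩ := Set.Nonempty.intrinsicInterior hconv ⟨f y0, y0, hy0, rfl⟩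
  obtain ⟨ε, hε, hball⟩ := exists_ball_inter_affineSpan_subset hp
  have hpfY : p ∈ ⇑f '' Y := intrinsicInterior_subset hp
  obtain ⟨z, hz, hgz⟩ := hfg hpfY
  -- bound on Z
  obtain ⟨M, hM⟩ := hZcomp.isBounded.exists_norm_le
  have hM0 : (0 : ℝ) ≤ M := le_trans (norm_nonneg z) (hM z hz)
  have hδ : 0 < ε / (M + 1) := div_pos hε (by linarith)
  obtain ⟨g', hg'S, hdist⟩ := Metric.mem_closure_iff.mp hcl _ hδ
  obtain ⟨hg'X, hdisj⟩ := hg'S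
  -- g' z is ε-close to g z = p
  have hclose : dist (g' z) p < ε := by
    rw [← hgz, dist_eq_norm]
    have h1 : g' z - g z = (g' - g).contLinear z + (g' - g) 0 := by
      have := congrFun ((g' - g).decomp) z
      simp only [Pi.add_apply, Function.const_apply, ContinuousAffineMap.coe_sub,
        Pi.sub_apply] at this ⊢
      rw [this]
    rw [h1]
    calc ‖(g' - g).contLinear z + (g' - g) 0‖
        ≤ ‖(g' - g).contLinear z‖ + ‖(g' - g) 0‖ := norm_add_le _ _
      _ ≤ ‖(g' - g)‖ * ‖z‖ + ‖g' - g‖ := by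
          gcongr
          · calc ‖(g' - g).contLinear z‖ ≤ ‖(g' - g).contLinear‖ * ‖z‖ :=
                (g' - g).contLinear.le_opNorm z
            _ ≤ ‖g' - g‖ * ‖z‖ := by gcongr; exact (g' - g).norm_contLinear_le
          · exact (g' - g).norm_image_zero_le
      _ ≤ ‖g' - g‖ * (M + 1) := by
          rw [mul_add, mul_one]; gcongr
          · exact hM z hz
      _ < ε / (M + 1) * (M + 1) := by
          have hlt : ‖g' - g‖ < ε / (M + 1) := by
            rw [← dist_eq_norm, dist_comm]; exact hdist
          exact mul_lt_mul_of_pos_right hlt (by linarith)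
      _ = ε := div_mul_cancel₀ ε (by linarith)
  -- g' z lies in the affine span of f '' Y, hence in f '' Y
  have hmem : g' z ∈ (affineSpan ℝ (⇑f '' Y) : Set V) := by
    rw [hspan]
    exact subset_affineSpan ℝ X (hg'X ⟨z, hz, rfl⟩)
  have : g' z ∈ ⇑f '' Y := hball _ hmem hclose
  exact Set.eq_empty_iff_forall_notMem.mp hdisj (g' z) ⟨⟨z, hz, rfl⟩, this⟩
end

section
/- Let U, V, W be finite-dimensional real normed spaces, let Z ⊆ U, X ⊆ V, Y ⊆ W be nonempty convex compact sets, and let f : Y → X be an affine map with dim f(Y) = dim X. Consider C = {g : g an affine map U → V with g(Z) ⊆ X and g(Z) ∩ relint(f(Y)) = ∅}, with the topology induced from the normed space of affine maps U → V, and let D ⊆ C be the set of constant maps with value in ∂X = X ∖ relint(X). Then D is a strong deformation retract of C: there exists a continuous map H : C × [0,1] → C with H(g,1) = g for all g ∈ C, H(g,0) ∈ D for all g ∈ C, and H(g,t) = g for all g ∈ D and t ∈ [0,1]. -/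
/-
Pick `x₀` in the relative interior of `f(Y)`. Since `f(Y) ⊆ X` and both have the same dimension,
they have the same affine span, so `x₀ ∈ relint X`, and `relint f(Y)` is convex. Hence the ray from `x₀`
through a point `p ∈ X ∖ relint f(Y)` never meets `relint f(Y)` beyond `p`, and following it up to
the exit point from `X` (read off continuously from the Minkowski gauge of `X - x₀` inside the
direction of its span) retracts `X ∖ relint f(Y)` onto `∂X`, fixing `∂X`. On `C`, first contract
`g` to the constant map at `g(z₀)`, all intermediate images lying in the convex set `g(Z)`, then
slide this constant along its ray to `∂X`; on `D` both stages are stationary.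
-/

open Set Pointwise

/-- `C(Z, X, f)`: affine maps `g : U → V` with `g(Z) ⊆ X` and `g(Z)` disjoint from the
relative interior of `f(Y)`. -/
def compSet {U V W : Type*}
    [NormedAddCommGroup U] [NormedSpace ℝ U]
    [NormedAddCommGroup V] [NormedSpace ℝ V]
    [NormedAddCommGroup W] [NormedSpace ℝ W]
    (Z : Set U) (X : Set V) (Y : Set W) (f : W →ᵃ[ℝ] V) : Set (U →ᴬ[ℝ] V) :=
  {g | ⇑g '' Z ⊆ X ∧ ⇑g '' Z ∩ intrinsicInterior ℝ (⇑f '' Y) = ∅}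

/-- The constant maps `U → V` with value in `∂X = X ∖ relint X`. -/
def bdryConstSet {U V : Type*}
    [NormedAddCommGroup U] [NormedSpace ℝ U]
    [NormedAddCommGroup V] [NormedSpace ℝ V]
    (X : Set V) : Set (U →ᴬ[ℝ] V) :=
  {g | ∃ x ∈ X \ intrinsicInterior ℝ X, ∀ u : U, g u = x}

section

open Topology AffineMap

namespace ContinuousAffineMap

variable {U V : Type*} [NormedAddCommGroup U] [NormedSpace ℝ U]
  [NormedAddCommGroup V] [NormedSpace ℝ V]

instance : ContinuousEvalConst (U →ᴬ[ℝ] V) U V where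
  continuous_eval_const u := by
    have h := (decompLinearIsometryEquiv ℝ ℝ U V).continuous
    convert ((continuous_snd.comp h).clm_apply continuous_const).add (continuous_fst.comp h)
      using 1
    ext g
    simpa using congrFun g.decomp u

@[fun_prop]
theorem continuous_const_map : Continuous fun x : V => const ℝ U x := by
  convert (decompLinearIsometryEquiv ℝ ℝ U V).symm.continuous.comp
    (continuous_id.prodMk (continuous_const (y := (0 : U →L[ℝ] V)))) using 1
  ext x u
  simp

end ContinuousAffineMap

theorem Convex.lineMap_notMem_of_one_le {E : Type*} [AddCommGroup E] [Module ℝ E] {A : Set E}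
    (hA : Convex ℝ A) {x p : E} (hx : x ∈ A) (hp : p ∉ A) {σ : ℝ} (hσ : 1 ≤ σ) :
    lineMap x p σ ∉ A := by
  intro h
  apply hp
  have hσ0 : σ ≠ 0 := by positivity
  have : p = lineMap x (lineMap x p σ) σ⁻¹ := by
    rw [lineMap_lineMap_right, inv_mul_cancel₀ hσ0, lineMap_apply_one]
  rw [this]
  exact hA.lineMap_mem hx h ⟨by positivity, inv_le_one_of_one_le₀ hσ⟩

section Gauge

variable {E : Type*} [NormedAddCommGroup E] [NormedSpace ℝ E] {K : Set E}

theorem gauge_pos_of_ne_zero (hK0 : K ∈ 𝓝 0) (hKb : Bornology.IsBounded K) {w : E}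
    (hw : w ≠ 0) : 0 < gauge K w :=
  (gauge_pos (absorbent_nhds_zero hK0) (NormedSpace.isVonNBounded_iff ℝ |>.2 hKb)).2 hw

theorem inv_gauge_smul_mem_frontier (hKc : Convex ℝ K) (hK0 : K ∈ 𝓝 0)
    (hKb : Bornology.IsBounded K) {w : E} (hw : w ≠ 0) :
    (gauge K w)⁻¹ • w ∈ frontier K := by
  have hpos := gauge_pos_of_ne_zero hK0 hKb hw
  rw [← gauge_eq_one_iff_mem_frontier hKc hK0, gauge_smul_of_nonneg (inv_nonneg.2 hpos.le),
    smul_eq_mul, inv_mul_cancel₀ hpos.ne']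

theorem one_le_inv_gauge (hK0 : K ∈ 𝓝 0) (hKb : Bornology.IsBounded K) {w : E} (hwK : w ∈ K)
    (hw : w ≠ 0) : 1 ≤ (gauge K w)⁻¹ :=
  (one_le_inv₀ (gauge_pos_of_ne_zero hK0 hKb hw)).2 (gauge_le_one_of_mem hwK)

end Gauge

section Intrinsic

variable {V : Type*} [NormedAddCommGroup V] [NormedSpace ℝ V]

def Submodule.vaddConst (E : Submodule ℝ V) (x₀ : V) : E →ᵃ[ℝ] V :=
  (AffineEquiv.vaddConst ℝ x₀).toAffineMap.comp E.subtype.toAffineMap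

@[simp]
theorem Submodule.vaddConst_apply (E : Submodule ℝ V) (x₀ : V) (w : E) :
    E.vaddConst x₀ w = (w : V) + x₀ :=
  rfl

theorem Submodule.isometry_vaddConst (E : Submodule ℝ V) (x₀ : V) : Isometry (E.vaddConst x₀) :=
  (isometry_add_right x₀).comp isometry_subtype_coe

theorem intrinsicInterior_eq_image_interior_preimage {s : Set V} {S : AffineSubspace ℝ V}
    (hS : affineSpan ℝ s = S) {x₀ : V} (hx₀ : x₀ ∈ S) :
    intrinsicInterior ℝ s =
      S.direction.vaddConst x₀ '' interior (S.direction.vaddConst x₀ ⁻¹' s) := by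
  subst hS
  have : Nonempty (affineSpan ℝ s) := ⟨⟨x₀, hx₀⟩⟩
  exact (image_interior_preimage_comp _
    (ContinuousAffineEquiv.vaddConst ℝ (⟨x₀, hx₀⟩ : affineSpan ℝ s)).toHomeomorph.isHomeomorph
    _ s).symm

theorem intrinsicInterior_mono_of_affineSpan_eq {s t : Set V} (hst : s ⊆ t)
    (hspan : affineSpan ℝ s = affineSpan ℝ t) :
    intrinsicInterior ℝ s ⊆ intrinsicInterior ℝ t := by
  rcases s.eq_empty_or_nonempty with rfl | ⟨x₀, hx₀⟩
  · simp
  have hx₀t : x₀ ∈ affineSpan ℝ t := subset_affineSpan ℝ t (hst hx₀)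
  rw [intrinsicInterior_eq_image_interior_preimage hspan hx₀t,
    intrinsicInterior_eq_image_interior_preimage rfl hx₀t]
  exact image_mono (interior_mono (preimage_mono hst))

protected theorem Convex.intrinsicInterior {s : Set V} (hs : Convex ℝ s) :
    Convex ℝ (intrinsicInterior ℝ s) := by
  rcases s.eq_empty_or_nonempty with rfl | ⟨x₀, hx₀⟩
  · rw [intrinsicInterior_empty]
    exact convex_empty
  rw [intrinsicInterior_eq_image_interior_preimage rfl (subset_affineSpan ℝ s hx₀)]
  exact (hs.affine_preimage _).interior.affine_image _

theorem affineSpan_eq_of_subset_of_convDim_eq [FiniteDimensional ℝ V] {s t : Set V}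
    (hst : s ⊆ t) (hs : s.Nonempty) (hdim : convDim s = convDim t) :
    affineSpan ℝ s = affineSpan ℝ t :=
  AffineSubspace.eq_of_direction_eq_of_nonempty_of_le
    (Submodule.eq_of_le_of_finrank_eq (AffineSubspace.direction_le (affineSpan_mono ℝ hst)) hdim)
    ((affineSpan_nonempty ℝ).2 hs) (affineSpan_mono ℝ hst)

end Intrinsic

section RadialRetraction

variable {V : Type*} [NormedAddCommGroup V] [NormedSpace ℝ V] [FiniteDimensional ℝ V]

theorem exists_radial_scale {X : Set V} (hXc : Convex ℝ X) (hXk : IsCompact X) {x₀ : V}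
    (hx₀ : x₀ ∈ intrinsicInterior ℝ X) :
    ∃ s : V → ℝ, ContinuousOn s (X \ {x₀}) ∧ ∀ p ∈ X \ {x₀}, 1 ≤ s p ∧
      lineMap x₀ p (s p) ∈ X \ intrinsicInterior ℝ X ∧
      (p ∉ intrinsicInterior ℝ X → s p = 1) := by
  set E := (affineSpan ℝ X).direction
  have hx₀span : x₀ ∈ affineSpan ℝ X := subset_affineSpan ℝ X (intrinsicInterior_subset hx₀)
  set c := E.vaddConst x₀
  set K := c ⁻¹' X
  have hchart : ∀ w : E, c w ∈ intrinsicInterior ℝ X ↔ w ∈ interior K := fun w => by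
    rw [intrinsicInterior_eq_image_interior_preimage rfl hx₀span]
    exact (E.isometry_vaddConst x₀).injective.mem_set_image
  have hK0 : K ∈ 𝓝 0 := mem_interior_iff_mem_nhds.1 ((hchart 0).1 (by simpa [c] using hx₀))
  have hKc : Convex ℝ K := hXc.affine_preimage c
  have hKcl : IsClosed K := hXk.isClosed.preimage (E.isometry_vaddConst x₀).continuous
  have hKb : Bornology.IsBounded K :=
    (E.isometry_vaddConst x₀).antilipschitz.isBounded_preimage hXk.isBounded
  -- `π` extends the inverse of `c` continuously from `affineSpan ℝ X` to `V`
  obtain ⟨π, hπ⟩ := Submodule.ClosedComplemented.of_finiteDimensional E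
  have hπ_coe : ∀ p ∈ X, ((π (p - x₀) : E) : V) = p - x₀ := fun p hp => by
    rw [hπ ⟨p - x₀, AffineSubspace.vsub_mem_direction (subset_affineSpan ℝ X hp) hx₀span⟩]
  have hlineMap : ∀ p ∈ X, ∀ σ : ℝ, lineMap x₀ p σ = c (σ • π (p - x₀)) := fun p hp σ => by
    rw [Submodule.vaddConst_apply, Submodule.coe_smul, hπ_coe p hp, lineMap_apply_module']
  have hπ_ne : ∀ p ∈ X \ {x₀}, π (p - x₀) ≠ 0 := fun p hp h0 => by
    have h := hπ_coe p hp.1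
    rw [h0, ZeroMemClass.coe_zero, eq_comm, sub_eq_zero] at h
    exact hp.2 h
  refine ⟨fun p => (gauge K (π (p - x₀)))⁻¹, ?_, fun p hp => ?_⟩
  · refine ((continuous_gauge hKc hK0).comp
      (π.continuous.comp (continuous_sub_right x₀))).continuousOn.inv₀ fun p hp => ?_
    exact (gauge_pos_of_ne_zero hK0 hKb (hπ_ne p hp)).ne'
  have hcp : c (π (p - x₀)) = p := by
    rw [Submodule.vaddConst_apply, hπ_coe p hp.1, sub_add_cancel]
  have hpK : π (p - x₀) ∈ K := by
    rw [Set.mem_preimage, hcp]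
    exact hp.1
  have hfront := inv_gauge_smul_mem_frontier hKc hK0 hKb (hπ_ne p hp)
  rw [hKcl.frontier_eq] at hfront
  refine ⟨one_le_inv_gauge hK0 hKb hpK (hπ_ne p hp), ?_, fun hp_int => ?_⟩
  · rw [hlineMap p hp.1]
    exact ⟨hfront.1, (hchart _).not.2 hfront.2⟩
  · have hp_front : π (p - x₀) ∈ frontier K := by
      rw [hKcl.frontier_eq]
      exact ⟨hpK, fun h => hp_int (hcp ▸ (hchart _).2 h)⟩
    simp only [(gauge_eq_one_iff_mem_frontier hKc hK0).2 hp_front, inv_one]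

theorem exists_retraction_sdiff_intrinsicInterior {X S : Set V} (hXc : Convex ℝ X)
    (hXk : IsCompact X) (hSc : Convex ℝ S) (hSne : S.Nonempty) (hSX : S ⊆ X)
    (hspan : affineSpan ℝ S = affineSpan ℝ X) :
    ∃ R : V → V, ContinuousOn R (X \ intrinsicInterior ℝ S) ∧
      (∀ p ∈ X \ intrinsicInterior ℝ S, R p ∈ X \ intrinsicInterior ℝ X ∧
        ∀ t ∈ Icc (0 : ℝ) 1, lineMap (R p) p t ∈ X \ intrinsicInterior ℝ S) ∧
      ∀ p ∈ X \ intrinsicInterior ℝ X, R p = p := by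
  obtain ⟨x₀, hx₀⟩ := hSne.intrinsicInterior hSc
  have hx₀X : x₀ ∈ intrinsicInterior ℝ X := intrinsicInterior_mono_of_affineSpan_eq hSX hspan hx₀
  obtain ⟨s, hs_cont, hs⟩ := exists_radial_scale hXc hXk hx₀X
  have hsub : X \ intrinsicInterior ℝ S ⊆ X \ {x₀} := fun p hp => ⟨hp.1, fun h => hp.2 (h ▸ hx₀)⟩
  refine ⟨fun p => lineMap x₀ p (s p),
    (continuousOn_const.lineMap continuousOn_id hs_cont).mono hsub, fun p hp => ?_, fun p hp => ?_⟩
  · obtain ⟨hs_one, hR, -⟩ := hs p (hsub hp)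
    refine ⟨hR, fun t ht => ⟨hXc.lineMap_mem hR.1 hp.1 ht, ?_⟩⟩
    rw [lineMap_lineMap_left]
    exact hSc.intrinsicInterior.lineMap_notMem_of_one_le hx₀ hp.2 (by nlinarith [ht.1, ht.2])
  · show lineMap x₀ p (s p) = p
    rw [(hs p ⟨hp.1, fun h => hp.2 (h ▸ hx₀X)⟩).2.2 hp.2, lineMap_apply_one]

end RadialRetraction

section Deformation

variable {U V W : Type*} [NormedAddCommGroup U] [NormedSpace ℝ U]
  [NormedAddCommGroup V] [NormedSpace ℝ V] [NormedAddCommGroup W] [NormedSpace ℝ W]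
  {Z : Set U} {X : Set V} {Y : Set W} {f : W →ᵃ[ℝ] V}

theorem mem_compSet_iff {g : U →ᴬ[ℝ] V} :
    g ∈ compSet Z X Y f ↔ ∀ z ∈ Z, g z ∈ X \ intrinsicInterior ℝ (f '' Y) := by
  simp only [compSet, Set.mem_ofPred_eq, Set.image_subset_iff, Set.eq_empty_iff_forall_notMem,
    Set.mem_inter_iff, Set.forall_mem_image, not_and, Set.mem_sdiff, forall_and]
  rfl

theorem apply_mem_of_mem_bdryConstSet {g : U →ᴬ[ℝ] V} (hg : g ∈ bdryConstSet X) (u : U) :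
    g u ∈ X \ intrinsicInterior ℝ X := by
  obtain ⟨x, hx, hgx⟩ := hg
  rw [hgx u]
  exact hx

theorem eq_const_of_mem_bdryConstSet {g : U →ᴬ[ℝ] V} (hg : g ∈ bdryConstSet X) (u : U) :
    g = ContinuousAffineMap.const ℝ U (g u) := by
  obtain ⟨x, -, hgx⟩ := hg
  ext v
  simp [hgx]

noncomputable def deformToConst (R : V → V) (z₀ : U) (g : U →ᴬ[ℝ] V) (t : ℝ) : U →ᴬ[ℝ] V :=
  if t ≤ 1 / 2 then ContinuousAffineMap.const ℝ U (lineMap (R (g z₀)) (g z₀) (2 * t))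
  else lineMap (ContinuousAffineMap.const ℝ U (g z₀)) g (2 * t - 1)

variable {R : V → V} {z₀ : U}

theorem deformToConst_one (g : U →ᴬ[ℝ] V) : deformToConst R z₀ g 1 = g := by
  norm_num [deformToConst]

theorem deformToConst_zero (g : U →ᴬ[ℝ] V) :
    deformToConst R z₀ g 0 = ContinuousAffineMap.const ℝ U (R (g z₀)) := by
  simp [deformToConst]

theorem deformToConst_of_mem_bdryConstSet {g : U →ᴬ[ℝ] V} (hg : g ∈ bdryConstSet X)
    (hR : ∀ p ∈ X \ intrinsicInterior ℝ X, R p = p) (t : ℝ) : deformToConst R z₀ g t = g := by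
  have hg_const := eq_const_of_mem_bdryConstSet hg z₀
  rw [deformToConst, hR _ (apply_mem_of_mem_bdryConstSet hg z₀), lineMap_same_apply,
    ← hg_const, lineMap_same_apply, ite_self]

theorem continuous_deformToConst {A : Set V} (hR : ContinuousOn R A) {C : Set (U →ᴬ[ℝ] V)}
    (hC : ∀ g ∈ C, g z₀ ∈ A) : Continuous fun p : C × ℝ => deformToConst R z₀ p.1 p.2 := by
  have hq : Continuous fun p : C × ℝ => (p.1 : U →ᴬ[ℝ] V) z₀ := by fun_prop
  have hRq : Continuous fun p : C × ℝ => R ((p.1 : U →ᴬ[ℝ] V) z₀) :=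
    hR.comp_continuous hq fun p => hC _ p.1.2
  refine Continuous.if_le ?_ (by fun_prop) continuous_snd continuous_const ?_
  · exact ContinuousAffineMap.continuous_const_map.comp (hRq.lineMap hq (by fun_prop))
  · rintro p (hp : p.2 = 1 / 2)
    simp [hp]

theorem deformToConst_mem_compSet (hZ : Convex ℝ Z) (hz₀ : z₀ ∈ Z)
    (hR : ∀ p ∈ X \ intrinsicInterior ℝ (f '' Y),
      ∀ t ∈ Icc (0 : ℝ) 1, lineMap (R p) p t ∈ X \ intrinsicInterior ℝ (f '' Y))
    {g : U →ᴬ[ℝ] V} (hg : g ∈ compSet Z X Y f) {t : ℝ} (ht : t ∈ Icc (0 : ℝ) 1) :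
    deformToConst R z₀ g t ∈ compSet Z X Y f := by
  have hgZ := mem_compSet_iff.1 hg
  refine mem_compSet_iff.2 fun z hz => ?_
  rw [deformToConst]
  split_ifs with h
  · exact hR _ (hgZ z₀ hz₀) _ ⟨by linarith [ht.1], by linarith⟩
  · have hlin : g (lineMap z₀ z (2 * t - 1)) = lineMap (g z₀) (g z) (2 * t - 1) :=
      g.toAffineMap.apply_lineMap z₀ z _
    have hval : (lineMap (ContinuousAffineMap.const ℝ U (g z₀)) g (2 * t - 1)) z =
        g (lineMap z₀ z (2 * t - 1)) := by
      rw [hlin]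
      simp [lineMap_apply_module']
    rw [hval]
    exact hgZ _ (hZ.lineMap_mem hz₀ hz ⟨by linarith, by linarith [ht.2]⟩)

end Deformation

end

/-- Let `Z ⊆ U`, `X ⊆ V`, `Y ⊆ W` be nonempty convex compact sets in
finite-dimensional real normed spaces and `f : Y → X` affine with `dim f(Y) = dim X`.
Then the set `D` of constant maps with value in `∂X` is a strong deformation retract of
`C = {g : g(Z) ⊆ X, g(Z) ∩ relint(f(Y)) = ∅}`. -/
theorem bdryConst_strong_deformation_retract_compSet {U V W : Type*}
    [NormedAddCommGroup U] [NormedSpace ℝ U]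
    [NormedAddCommGroup V] [NormedSpace ℝ V] [FiniteDimensional ℝ V]
    [NormedAddCommGroup W] [NormedSpace ℝ W]
    (Z : Set U) (X : Set V) (Y : Set W)
    (hZne : Z.Nonempty) (hZconv : Convex ℝ Z)
    (hXconv : Convex ℝ X) (hXcomp : IsCompact X)
    (hYne : Y.Nonempty) (hYconv : Convex ℝ Y)
    (f : W →ᵃ[ℝ] V) (hf : ⇑f '' Y ⊆ X)
    (hdim : convDim (⇑f '' Y) = convDim X) :
    ∃ H : ↥(compSet Z X Y f) × ↥(Set.Icc (0 : ℝ) 1) → ↥(compSet Z X Y f),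
      Continuous H ∧
      (∀ g : ↥(compSet Z X Y f), H (g, ⟨1, by norm_num⟩) = g) ∧
      (∀ g : ↥(compSet Z X Y f),
        (↑(H (g, ⟨0, by norm_num⟩)) : U →ᴬ[ℝ] V) ∈ bdryConstSet X) ∧
      (∀ (g : ↥(compSet Z X Y f)) (t : ↥(Set.Icc (0 : ℝ) 1)),
        (↑g : U →ᴬ[ℝ] V) ∈ bdryConstSet X → H (g, t) = g) := by
  obtain ⟨z₀, hz₀⟩ := hZne
  obtain ⟨R, hR_cont, hR, hR_fix⟩ := exists_retraction_sdiff_intrinsicInterior hXconv hXcomp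
    (hYconv.affine_image f) (hYne.image f) hf
    (affineSpan_eq_of_subset_of_convDim_eq hf (hYne.image f) hdim)
  have hC : ∀ g ∈ compSet Z X Y f, g z₀ ∈ X \ intrinsicInterior ℝ (f '' Y) :=
    fun g hg => mem_compSet_iff.1 hg z₀ hz₀
  refine ⟨fun p => ⟨deformToConst R z₀ p.1 p.2,
      deformToConst_mem_compSet hZconv hz₀ (fun p hp => (hR p hp).2) p.1.2 p.2.2⟩,
    ?_, fun g => ?_, fun g => ?_, fun g t hg => ?_⟩
  · exact ((continuous_deformToConst hR_cont hC).comp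
      (continuous_fst.prodMk (continuous_subtype_val.comp continuous_snd))).subtype_mk _
  · exact Subtype.ext (deformToConst_one _)
  · show deformToConst R z₀ g 0 ∈ bdryConstSet X
    rw [deformToConst_zero]
    exact ⟨_, (hR _ (hC g g.2)).1, fun _ => rfl⟩
  · exact Subtype.ext (deformToConst_of_mem_bdryConstSet hg hR_fix _)
end

section
/- Let U, V, W be finite-dimensional real normed spaces, let Z ⊆ U, X ⊆ V, Y ⊆ W be nonempty convex compact sets, and let f : Y → X be an affine map with dim f(Y) < dim X. Then ©(Z, f), defined as the closure in the normed space of affine maps U → V of the set {g : g an affine map U → V with g(Z) ⊆ X and g(Z) ∩ f(Y) = ∅}, endowed with the subspace topology, is a nonempty contractible topological space. -/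
/-!
Pick `z₀ ∈ Z` and, by the dimension hypothesis, a point `x₀ ∈ X` off the affine span `A` of
`f(Y)`. An open segment from a point of `A` to `x₀` misses `A`, so `X \ A` is dense in `X`;
hence every constant map with value in `X` lies in `©(Z, f)`. Moving `g` along the straight
segment towards the constant map `g(z₀)` amounts to precomposing with homotheties centred at
`z₀`, which only shrinks `g(Z)` and so stays in `©(Z, f)`. This deforms `©(Z, f)` onto the
constant maps, a copy of the convex set `X`.
-/

open Set Pointwise

namespace ContinuousAffineMap

variable {𝕜 V W : Type*} [NontriviallyNormedField 𝕜]
  [SeminormedAddCommGroup V] [NormedSpace 𝕜 V] [SeminormedAddCommGroup W] [NormedSpace 𝕜 W]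

@[fun_prop]
theorem continuous_const' : Continuous (const 𝕜 V : W → V →ᴬ[𝕜] W) := by
  have h : const 𝕜 V = fun w : W => (decompLinearIsometryEquiv 𝕜 𝕜 V W).symm (w, 0) := by
    ext w v
    simp
  rw [h]
  fun_prop

instance : ContinuousEvalConst (V →ᴬ[𝕜] W) V W where
  continuous_eval_const v := by
    have h : (fun f : V →ᴬ[𝕜] W => f v) = fun f =>
        (decompLinearIsometryEquiv 𝕜 𝕜 V W f).2 v + (decompLinearIsometryEquiv 𝕜 𝕜 V W f).1 := by
      ext f
      exact congrFun f.decomp v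
    rw [h]
    fun_prop

end ContinuousAffineMap

theorem Convex.subset_closure_diff_affineSubspace {E : Type*} [AddCommGroup E] [Module ℝ E]
    [TopologicalSpace E] [ContinuousAdd E] [ContinuousSMul ℝ E] {X : Set E} (hX : Convex ℝ X)
    {A : AffineSubspace ℝ E} {x₀ : E} (hx₀ : x₀ ∈ X) (hx₀A : x₀ ∉ A) : X ⊆ closure (X \ A) := by
  intro x hx
  by_cases hxA : x ∈ A
  · have hsub : openSegment ℝ x x₀ ⊆ X \ A := by
      rw [openSegment_eq_image_lineMap]
      rintro _ ⟨t, ht, rfl⟩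
      refine ⟨hX.openSegment_subset hx hx₀ (lineMap_mem_openSegment ℝ x x₀ ht), fun hyA => ?_⟩
      have h := AffineMap.lineMap_mem t⁻¹ hxA hyA
      rw [AffineMap.lineMap_lineMap_right, inv_mul_cancel₀ ht.1.ne',
        AffineMap.lineMap_apply_one] at h
      exact hx₀A h
    exact closure_mono hsub (segment_subset_closure_openSegment (left_mem_segment ℝ x x₀))
  · exact subset_closure ⟨hx, hxA⟩

theorem exists_mem_notMem_affineSpan_of_convDim_lt {V : Type*} [AddCommGroup V] [Module ℝ V]
    [FiniteDimensional ℝ V] {B X : Set V} (h : convDim B < convDim X) :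
    ∃ x ∈ X, x ∉ affineSpan ℝ B := by
  by_contra! hX
  have hle : affineSpan ℝ X ≤ affineSpan ℝ B := affineSpan_le.mpr hX
  exact h.not_ge (Submodule.finrank_mono (AffineSubspace.direction_le hle))

theorem ContractibleSpace.of_homotopic_id_comp {T P : Type*} [TopologicalSpace T]
    [TopologicalSpace P] [ContractibleSpace P] (e : C(T, P)) (c : C(P, T))
    (h : (ContinuousMap.id T).Homotopic (c.comp e)) : ContractibleSpace T := by
  have : Nonempty T := ⟨c (Classical.arbitrary P)⟩
  obtain ⟨t, ht⟩ := ((id_nullhomotopic P).comp_right c).comp_left e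
  exact (contractible_iff_id_nullhomotopic T).2 ⟨t, h.trans (by simpa using ht)⟩

theorem ContractibleSpace.of_segment_subset {E P : Type*} [AddCommGroup E] [Module ℝ E]
    [TopologicalSpace E] [ContinuousAdd E] [ContinuousSMul ℝ E] [TopologicalSpace P]
    [ContractibleSpace P] {T : Set E} (e : C(T, P)) (c : C(P, T))
    (hT : ∀ g : T, segment ℝ (g : E) (c (e g)) ⊆ T) : ContractibleSpace T :=
  .of_homotopic_id_comp e c ⟨{
    toFun := fun p => ⟨(1 - p.1 : ℝ) • (p.2 : E) + (p.1 : ℝ) • (c (e p.2) : E),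
      hT p.2 ⟨_, _, sub_nonneg.2 p.1.2.2, p.1.2.1, sub_add_cancel _ _, rfl⟩⟩
    continuous_toFun := by fun_prop
    map_zero_left := by simp
    map_one_left := by simp }⟩

section ComplementingMaps

open ContinuousAffineMap

variable {U V : Type*} [NormedAddCommGroup U] [NormedSpace ℝ U]
  [NormedAddCommGroup V] [NormedSpace ℝ V] {Z : Set U} {X B : Set V}

/-- `©(Z, f)` is the closure of `complementingMaps Z X (f '' Y)`. -/
def complementingMaps (Z : Set U) (X B : Set V) : Set (U →ᴬ[ℝ] V) :=
  {g | g '' Z ⊆ X ∧ g '' Z ∩ B = ∅}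

theorem mem_complementingMaps_of_image_subset {g h : U →ᴬ[ℝ] V}
    (hg : g ∈ complementingMaps Z X B) (hgh : h '' Z ⊆ g '' Z) :
    h ∈ complementingMaps Z X B :=
  ⟨hgh.trans hg.1, subset_empty_iff.mp (hg.2 ▸ inter_subset_inter_left B hgh)⟩

theorem const_mem_complementingMaps {x : V} (hxX : x ∈ X) (hxB : x ∉ B) :
    const ℝ U x ∈ complementingMaps Z X B := by
  refine ⟨?_, ?_⟩
  · rintro _ ⟨z, -, rfl⟩
    exact hxX
  · rw [eq_empty_iff_forall_notMem]
    rintro _ ⟨⟨z, -, rfl⟩, hzB⟩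
    exact hxB hzB

theorem const_mem_closure_complementingMaps (hX : Convex ℝ X) {A : AffineSubspace ℝ V}
    (hBA : B ⊆ A) {x₀ : V} (hx₀ : x₀ ∈ X) (hx₀A : x₀ ∉ A) {x : V} (hx : x ∈ X) :
    const ℝ U x ∈ closure (complementingMaps Z X B) :=
  map_mem_closure (continuous_const' (𝕜 := ℝ)) (hX.subset_closure_diff_affineSubspace hx₀ hx₀A hx)
    fun _ hy => const_mem_complementingMaps hy.1 fun hyB => hy.2 (hBA hyB)

theorem apply_mem_of_mem_closure_complementingMaps (hX : IsClosed X) {g : U →ᴬ[ℝ] V}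
    (hg : g ∈ closure (complementingMaps Z X B)) {z : U} (hz : z ∈ Z) : g z ∈ X :=
  closure_minimal (fun _ h => h.1 (mem_image_of_mem _ hz))
    (hX.preimage (continuous_eval_const z)) hg

theorem segment_const_subset_closure_complementingMaps (hZ : Convex ℝ Z) {z₀ : U} (hz₀ : z₀ ∈ Z)
    {g : U →ᴬ[ℝ] V} (hg : g ∈ closure (complementingMaps Z X B)) :
    segment ℝ g (const ℝ U (g z₀)) ⊆ closure (complementingMaps Z X B) := by
  rintro _ ⟨a, b, ha, hb, hab, rfl⟩
  have himage (h : U →ᴬ[ℝ] V) : ⇑(a • h + b • const ℝ U (h z₀)) '' Z ⊆ h '' Z := by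
    rintro _ ⟨z, hz, rfl⟩
    exact ⟨a • z + b • z₀, hZ hz hz₀ ha hb hab, Convex.combo_affine_apply (f := h.toAffineMap) hab⟩
  exact map_mem_closure (f := fun h => a • h + b • const ℝ U (h z₀)) (by fun_prop) hg
    fun h hh => mem_complementingMaps_of_image_subset hh (himage h)

end ComplementingMaps

theorem complementing_contractible_general {U V W : Type*}
    [NormedAddCommGroup U] [NormedSpace ℝ U]
    [NormedAddCommGroup V] [NormedSpace ℝ V] [FiniteDimensional ℝ V]
    [NormedAddCommGroup W] [NormedSpace ℝ W]
    (Z : Set U) (X : Set V) (Y : Set W)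
    (hZne : Z.Nonempty) (hZconv : Convex ℝ Z)
    (hXconv : Convex ℝ X) (hXcomp : IsCompact X)
    (f : W →ᵃ[ℝ] V)
    (hdim : convDim (⇑f '' Y) < convDim X) :
    (closure {g : U →ᴬ[ℝ] V | ⇑g '' Z ⊆ X ∧ ⇑g '' Z ∩ ⇑f '' Y = ∅}).Nonempty ∧
    ContractibleSpace
      ↥(closure {g : U →ᴬ[ℝ] V | ⇑g '' Z ⊆ X ∧ ⇑g '' Z ∩ ⇑f '' Y = ∅}) := by
  change (closure (complementingMaps Z X (f '' Y))).Nonempty ∧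
    ContractibleSpace (closure (complementingMaps Z X (f '' Y)))
  obtain ⟨z₀, hz₀⟩ := hZne
  obtain ⟨x₀, hx₀, hx₀A⟩ := exists_mem_notMem_affineSpan_of_convDim_lt hdim
  have hconst {x : V} (hx : x ∈ X) := const_mem_closure_complementingMaps (U := U) (Z := Z)
    hXconv (subset_affineSpan ℝ _) hx₀ hx₀A hx
  have := hXconv.contractibleSpace ⟨x₀, hx₀⟩
  let e : C(closure (complementingMaps Z X (f '' Y)), X) :=
    ⟨fun g => ⟨g.1 z₀, apply_mem_of_mem_closure_complementingMaps hXcomp.isClosed g.2 hz₀⟩,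
      by fun_prop⟩
  let c : C(X, closure (complementingMaps Z X (f '' Y))) :=
    ⟨fun x => ⟨ContinuousAffineMap.const ℝ U x, hconst x.2⟩, by fun_prop⟩
  exact ⟨⟨_, hconst hx₀⟩, .of_segment_subset e c
    fun g => segment_const_subset_closure_complementingMaps hZconv hz₀ g.2⟩

/-- Let `Z ⊆ U`, `X ⊆ V`, `Y ⊆ W` be nonempty convex compact sets in
finite-dimensional real normed spaces and `f : Y → X` affine with `dim f(Y) < dim X`.
Then `©(Z, f)`, the closure in the normed space of affine maps `U → V` of
`{g : g(Z) ⊆ X and g(Z) ∩ f(Y) = ∅}`, is nonempty and contractible (with the subspace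
topology). -/
theorem complementing_contractible {U V W : Type*}
    [NormedAddCommGroup U] [NormedSpace ℝ U] [FiniteDimensional ℝ U]
    [NormedAddCommGroup V] [NormedSpace ℝ V] [FiniteDimensional ℝ V]
    [NormedAddCommGroup W] [NormedSpace ℝ W] [FiniteDimensional ℝ W]
    (Z : Set U) (X : Set V) (Y : Set W)
    (hZne : Z.Nonempty) (hZconv : Convex ℝ Z) (hZcomp : IsCompact Z)
    (hXne : X.Nonempty) (hXconv : Convex ℝ X) (hXcomp : IsCompact X)
    (hYne : Y.Nonempty) (hYconv : Convex ℝ Y) (hYcomp : IsCompact Y)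
    (f : W →ᵃ[ℝ] V) (hf : ⇑f '' Y ⊆ X)
    (hdim : convDim (⇑f '' Y) < convDim X) :
    (closure {g : U →ᴬ[ℝ] V | ⇑g '' Z ⊆ X ∧ ⇑g '' Z ∩ ⇑f '' Y = ∅}).Nonempty ∧
    ContractibleSpace
      ↥(closure {g : U →ᴬ[ℝ] V | ⇑g '' Z ⊆ X ∧ ⇑g '' Z ∩ ⇑f '' Y = ∅}) :=
  complementing_contractible_general Z X Y hZne hZconv hXconv hXcomp f hdim
end
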